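/- arXiv:2104.03372 — 4 statements merged into one kernel-verified Lean document; each statement's English description precedes it below -/
import Mathlib

section
/- Consider the (1+1) EA with mutation rate p ∈ (0,1) maximizing LeadingOnes : {0,1}^n → ℝ, started with a uniformly random search point. The expected number T of iterations until the current search point is the all-ones string satisfies E[T] = (1/2) · Σ_{i=0}^{n−1} 1/((1−p)^i p). -/
open MeasureTheory Finset
open scoped ENNReal

/-- Probability that standard bit mutation with mutation rate `p` applied to
`x ∈ {0,1}^n` produces exactly `y` (each bit flips independently with probability `p`). -/
noncomputable def mutProb (n : ℕ) (p : ℝ) (x y : Fin n → Bool) : ℝ :=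
  p ^ hammingDist x y * (1 - p) ^ (n - hammingDist x y)

/-- Transition probability of one iteration of the (1+1) EA with mutation rate `p`
maximizing `f`: from current search point `x`, an offspring `y` is sampled by standard
bit mutation, and it replaces `x` if and only if `f y ≥ f x`. -/
noncomputable def stepProb (n : ℕ) (p : ℝ) (f : (Fin n → Bool) → ℝ)
    (x z : Fin n → Bool) : ℝ :=
  ∑ y : Fin n → Bool, if (if f x ≤ f y then y else x) = z then mutProb n p x y else 0

/-- `Y` is (the current-search-point process of) a run of the (1+1) EA with mutation
rate `p` maximizing `f`, realized on the probability space `(Ω, μ)`: each `Y t` is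
measurable, and conditional on the current search point being `x`, the next search
point is `z` with probability `stepProb n p f x z`. -/
def IsEARun {Ω : Type*} [MeasurableSpace Ω] (μ : Measure Ω)
    (n : ℕ) (p : ℝ) (f : (Fin n → Bool) → ℝ) (Y : ℕ → Ω → Fin n → Bool) : Prop :=
  (∀ t, Measurable (Y t)) ∧
  ∀ (t : ℕ) (x z : Fin n → Bool),
    μ {ω | Y (t + 1) ω = z ∧ Y t ω = x}
      = ENNReal.ofReal (stepProb n p f x z) * μ {ω | Y t ω = x}

/-- The number of leading ones of a bit string. -/
def leadingOnes (n : ℕ) (x : Fin n → Bool) : ℕ :=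
  (Finset.univ.filter fun i : Fin n => ∀ j ≤ i, x j = true).card

/-- The number of ones of a bit string. -/
def onesCount (n : ℕ) (x : Fin n → Bool) : ℕ :=
  (Finset.univ.filter fun i : Fin n => x i = true).card

namespace LOAux

variable {n : ℕ}

lemma lo_le (x : Fin n → Bool) : leadingOnes n x ≤ n := by
  classical
  calc (Finset.univ.filter fun i : Fin n => ∀ j ≤ i, x j = true).card
      ≤ (Finset.univ : Finset (Fin n)).card := Finset.card_filter_le _ _
    _ = n := by simp

lemma card_filter_val_lt {i : ℕ} (h : i ≤ n) :
    (Finset.univ.filter fun k : Fin n => (k : ℕ) < i).card = i := by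
  classical
  have heq : (Finset.univ.filter fun k : Fin n => (k : ℕ) < i)
      = Finset.map (Fin.castLEEmb h) Finset.univ := by
    ext k
    simp only [Finset.mem_filter, Finset.mem_univ, true_and, Finset.mem_map]
    constructor
    · intro hk
      refine ⟨⟨k, hk⟩, ?_⟩
      ext; simp
    · rintro ⟨a, rfl⟩; exact a.isLt
  rw [heq, Finset.card_map, Finset.card_univ, Fintype.card_fin]

lemma lo_eq_iff {x : Fin n → Bool} {i : ℕ} (hi : i ≤ n) :
    leadingOnes n x = i ↔
      (∀ k : Fin n, (k : ℕ) < i → x k = true) ∧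
        (∀ k : Fin n, (k : ℕ) = i → x k = false) := by
  classical
  by_cases hz : ∀ k : Fin n, x k = true
  · have hF : (Finset.univ.filter fun k : Fin n => ∀ j ≤ k, x j = true)
        = Finset.univ := by
      ext k; simp [hz]
    have hlo : leadingOnes n x = n := by
      rw [leadingOnes, hF, Finset.card_univ, Fintype.card_fin]
    rw [hlo]
    constructor
    · rintro rfl
      exact ⟨fun k _ => hz k, fun k hk => absurd k.isLt (by omega)⟩
    · rintro ⟨h1, h2⟩
      by_contra hne
      have hi' : i < n := lt_of_le_of_ne hi (fun h => hne h.symm)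
      have := h2 ⟨i, hi'⟩ rfl
      rw [hz ⟨i, hi'⟩] at this
      exact Bool.true_eq_false.mp this
  · push_neg at hz
    obtain ⟨k0, hk0⟩ := hz
    have hk0' : x k0 = false := by
      cases h : x k0
      · rfl
      · exact absurd h hk0
    set Z := Finset.univ.filter (fun k : Fin n => x k = false) with hZdef
    have hZ : Z.Nonempty := ⟨k0, by simp [hZdef, hk0']⟩
    set m := Z.min' hZ with hm
    have hxm : x m = false := by
      have := Z.min'_mem hZ
      simpa [hZdef] using this
    have hlt : ∀ k : Fin n, (k : ℕ) < (m : ℕ) → x k = true := by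
      intro k hk
      by_contra hkf
      have hkZ : k ∈ Z := by
        simp only [hZdef, Finset.mem_filter, Finset.mem_univ, true_and]
        cases h : x k
        · rfl
        · exact absurd h hkf
      have := Z.min'_le k hkZ
      rw [← hm] at this
      exact absurd (Fin.le_def.mp this) (by omega)
    have hF : (Finset.univ.filter fun k : Fin n => ∀ j ≤ k, x j = true)
        = Finset.univ.filter fun k : Fin n => (k : ℕ) < (m : ℕ) := by
      ext k
      simp only [Finset.mem_filter, Finset.mem_univ, true_and]
      constructor
      · intro h
        by_contra hk
        push_neg at hk
        have hmk : m ≤ k := Fin.le_def.mpr hk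
        have := h m hmk
        rw [hxm] at this
        exact Bool.false_eq_true.mp this
      · intro hk j hj
        exact hlt j (lt_of_le_of_lt (Fin.le_def.mp hj) hk)
    have hlo : leadingOnes n x = (m : ℕ) := by
      rw [leadingOnes, hF, card_filter_val_lt (le_of_lt m.isLt)]
    rw [hlo]
    constructor
    · rintro rfl
      refine ⟨hlt, fun k hk => ?_⟩
      have : k = m := Fin.ext hk
      rw [this, hxm]
    · rintro ⟨h1, h2⟩
      rcases lt_trichotomy ((m : ℕ)) i with h | h | h
      · have := h1 m h
        rw [hxm] at this
        exact absurd this (by simp)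
      · exact h
      · have hi' : i < n := lt_trans h m.isLt
        have hxi := h2 ⟨i, hi'⟩ rfl
        have hmem : (⟨i, hi'⟩ : Fin n) ∈ Z := by
          simp [hZdef, hxi]
        have := Z.min'_le _ hmem
        rw [← hm] at this
        have h2' := Fin.le_def.mp this
        simp only [Fin.val_mk] at h2'
        omega

lemma lo_spec (x : Fin n → Bool) :
    (∀ k : Fin n, (k : ℕ) < leadingOnes n x → x k = true) ∧
      (∀ k : Fin n, (k : ℕ) = leadingOnes n x → x k = false) :=
  (lo_eq_iff (lo_le x)).mp rfl

lemma lo_eq_n_iff {x : Fin n → Bool} :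
    leadingOnes n x = n ↔ x = fun _ => true := by
  rw [lo_eq_iff le_rfl]
  constructor
  · rintro ⟨h1, -⟩
    funext k
    exact h1 k k.isLt
  · rintro rfl
    exact ⟨fun _ _ => rfl, fun k hk => absurd k.isLt (by omega)⟩

end LOAux

namespace LOAux

variable {n : ℕ} {p : ℝ}

lemma mutProb_eq_prod (p : ℝ) (x y : Fin n → Bool) :
    mutProb n p x y = ∏ k : Fin n, (if y k = x k then 1 - p else p) := by
  classical
  rw [Finset.prod_ite, Finset.prod_const, Finset.prod_const, mutProb]
  have hd : hammingDist x y
      = (Finset.univ.filter fun k : Fin n => ¬ y k = x k).card := by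
    have : (Finset.univ.filter fun k : Fin n => x k ≠ y k)
        = (Finset.univ.filter fun k : Fin n => ¬ y k = x k) := by
      apply Finset.filter_congr
      intro k _
      constructor
      · intro h h'; exact h h'.symm
      · intro h h'; exact h h'.symm
    rw [hammingDist, this]
  have hcards : (Finset.univ.filter fun k : Fin n => y k = x k).card
      = n - hammingDist x y := by
    have := Finset.card_filter_add_card_filter_not
      (s := (Finset.univ : Finset (Fin n))) (p := fun k : Fin n => y k = x k)
    rw [Finset.card_univ, Fintype.card_fin] at this
    omega
  rw [hcards, ← hd, mul_comm]

lemma mutProb_comm (x y : Fin n → Bool) : mutProb n p x y = mutProb n p y x := by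
  rw [mutProb, mutProb, hammingDist_comm]

lemma mutProb_nonneg (hp0 : 0 < p) (hp1 : p < 1) (x y : Fin n → Bool) :
    0 ≤ mutProb n p x y := by
  apply mul_nonneg <;> apply pow_nonneg <;> linarith

/-- The sum over a level set of a product of per-bit weights. -/
lemma sum_level_prod (w : Fin n → Bool → ℝ) {i : ℕ} (hi : i ≤ n) :
    ∑ x ∈ Finset.univ.filter (fun x : Fin n → Bool => leadingOnes n x = i),
        ∏ k, w k (x k)
      = (∏ k ∈ Finset.univ.filter (fun k : Fin n => (k : ℕ) < i), w k true) *
        ((∏ k ∈ Finset.univ.filter (fun k : Fin n => (k : ℕ) = i), w k false) *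
         ∏ k ∈ Finset.univ.filter (fun k : Fin n => i < (k : ℕ)),
            (w k false + w k true)) := by
  classical
  set g : Fin n → Bool → ℝ := fun k b =>
    if (k : ℕ) < i then (if b = true then w k b else 0)
    else if (k : ℕ) = i then (if b = false then w k b else 0) else w k b with hg
  have key : ∀ x : Fin n → Bool,
      (if leadingOnes n x = i then ∏ k, w k (x k) else 0) = ∏ k, g k (x k) := by
    intro x
    by_cases hx : leadingOnes n x = i
    · rw [if_pos hx]
      apply Finset.prod_congr rfl
      intro k _
      obtain ⟨h1, h2⟩ := (lo_eq_iff hi).mp hx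
      rcases lt_trichotomy ((k : ℕ)) i with h | h | h
      · simp [hg, h, h1 k h]
      · simp [hg, h, h2 k h]
      · have hne : ¬ (k : ℕ) = i := by omega
        have hnlt : ¬ (k : ℕ) < i := by omega
        simp only [hg, if_neg hne, if_neg hnlt]
    · rw [if_neg hx]
      rw [lo_eq_iff hi, not_and_or] at hx
      rcases hx with hx | hx
      · push_neg at hx
        obtain ⟨k, hk1, hk2⟩ := hx
        refine (Finset.prod_eq_zero (Finset.mem_univ k) ?_).symm
        have : x k = false := by
          cases h : x k
          · rfl
          · exact absurd h hk2
        simp [hg, hk1, this]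
      · push_neg at hx
        obtain ⟨k, hk1, hk2⟩ := hx
        refine (Finset.prod_eq_zero (Finset.mem_univ k) ?_).symm
        have : x k = true := by
          cases h : x k
          · exact absurd h hk2
          · rfl
        simp [hg, hk1, this, (by omega : ¬ (i : ℕ) < i)]
  calc ∑ x ∈ Finset.univ.filter (fun x : Fin n → Bool => leadingOnes n x = i),
          ∏ k, w k (x k)
      = ∑ x : Fin n → Bool, if leadingOnes n x = i then ∏ k, w k (x k) else 0 :=
        Finset.sum_filter _ _
    _ = ∑ x : Fin n → Bool, ∏ k, g k (x k) := by
        exact Finset.sum_congr rfl fun x _ => key x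
    _ = ∑ x ∈ Fintype.piFinset (fun _ : Fin n => (Finset.univ : Finset Bool)),
          ∏ k, g k (x k) := by rw [Fintype.piFinset_univ]
    _ = ∏ k : Fin n, ∑ b : Bool, g k b := (Finset.prod_univ_sum _ _).symm
    _ = ∏ k : Fin n, (if (k : ℕ) < i then w k true
          else if (k : ℕ) = i then w k false else (w k false + w k true)) := by
        apply Finset.prod_congr rfl
        intro k _
        rcases lt_trichotomy ((k : ℕ)) i with h | h | h
        · simp [hg, h]
        · simp [hg, h, (by omega : ¬ (i : ℕ) < i)]
        · simp [hg, Nat.lt_asymm h, (by omega : ¬ (k : ℕ) = i), add_comm]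
    _ = _ := by
        rw [Finset.prod_ite, Finset.prod_ite, Finset.filter_filter,
          Finset.filter_filter]
        have hf1 : (Finset.univ.filter fun a : Fin n => ¬(a : ℕ) < i ∧ (a : ℕ) = i)
            = Finset.univ.filter fun k : Fin n => (k : ℕ) = i := by
          apply Finset.filter_congr
          intro k _
          constructor
          · rintro ⟨-, h⟩; exact h
          · intro h; exact ⟨by omega, h⟩
        have hf2 : (Finset.univ.filter fun a : Fin n => ¬(a : ℕ) < i ∧ ¬(a : ℕ) = i)
            = Finset.univ.filter fun k : Fin n => i < (k : ℕ) := by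
          apply Finset.filter_congr
          intro k _
          constructor
          · rintro ⟨h1, h2⟩; omega
          · intro h; exact ⟨by omega, by omega⟩
        rw [hf1, hf2]

lemma filter_val_eq_singleton {i : ℕ} (hi : i < n) :
    (Finset.univ.filter fun k : Fin n => (k : ℕ) = i) = {⟨i, hi⟩} := by
  ext k
  simp [Fin.ext_iff]

lemma filter_val_eq_empty :
    (Finset.univ.filter fun k : Fin n => (k : ℕ) = n) = ∅ := by
  ext k
  simp only [Finset.mem_filter, Finset.mem_univ, true_and, Finset.notMem_empty,
    iff_false]
  exact fun h => absurd k.isLt (by omega)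

lemma wsum_one (hz : Bool) : ((if false = hz then 1 - p else p) + if true = hz then 1 - p else p) = 1 := by
  cases hz <;> simp

/-- e1 : sum of mutation probabilities from `z` onto a level strictly below `lo z`. -/
lemma sum_level_mut_lt {z : Fin n → Bool} {i : ℕ} (hzi : i < leadingOnes n z) :
    ∑ x ∈ Finset.univ.filter (fun x : Fin n → Bool => leadingOnes n x = i),
        mutProb n p z x = (1 - p) ^ i * p := by
  classical
  have hi : i ≤ n := le_trans (le_of_lt hzi) (lo_le z)
  have hin : i < n := lt_of_lt_of_le hzi (lo_le z)
  have hlev := sum_level_prod (n := n)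
    (w := fun k b => if b = z k then 1 - p else p) hi
  have hmut : ∑ x ∈ Finset.univ.filter
        (fun x : Fin n → Bool => leadingOnes n x = i), mutProb n p z x
      = ∑ x ∈ Finset.univ.filter
        (fun x : Fin n → Bool => leadingOnes n x = i),
          ∏ k, (if x k = z k then 1 - p else p) :=
    Finset.sum_congr rfl fun x _ => mutProb_eq_prod p z x
  rw [hmut, hlev]
  have h1 : ∀ k : Fin n, (k : ℕ) < i → z k = true :=
    fun k hk => (lo_spec z).1 k (by omega)
  have hzi' : z ⟨i, hin⟩ = true := (lo_spec z).1 _ (by simpa using hzi)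
  rw [filter_val_eq_singleton hin]
  rw [Finset.prod_singleton]
  have e1 : (∏ k ∈ Finset.univ.filter (fun k : Fin n => (k : ℕ) < i),
      if true = z k then 1 - p else p) = (1 - p) ^ i := by
    rw [Finset.prod_congr rfl (fun k hk => ?_), Finset.prod_const,
      card_filter_val_lt hi]
    rw [if_pos]
    rw [(h1 k (Finset.mem_filter.mp hk).2)]
  have e2 : (if false = z ⟨i, hin⟩ then 1 - p else p) = p := by
    rw [hzi']; simp
  have e3 : (∏ k ∈ Finset.univ.filter (fun k : Fin n => i < (k : ℕ)),
      ((if false = z k then 1 - p else p) + if true = z k then 1 - p else p)) = 1 := by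
    apply Finset.prod_eq_one
    intro k _
    exact wsum_one (z k)
  rw [e1, e2, e3, mul_one]

/-- e2 : sum of mutation probabilities from `z` onto its own level. -/
lemma sum_level_mut_eq {z : Fin n → Bool} {i : ℕ} (hzi : leadingOnes n z = i)
    (hin : i < n) :
    ∑ x ∈ Finset.univ.filter (fun x : Fin n → Bool => leadingOnes n x = i),
        mutProb n p z x = (1 - p) ^ (i + 1) := by
  classical
  have hi : i ≤ n := le_of_lt hin
  have hlev := sum_level_prod (n := n)
    (w := fun k b => if b = z k then 1 - p else p) hi
  have hmut : ∑ x ∈ Finset.univ.filter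
        (fun x : Fin n → Bool => leadingOnes n x = i), mutProb n p z x
      = ∑ x ∈ Finset.univ.filter
        (fun x : Fin n → Bool => leadingOnes n x = i),
          ∏ k, (if x k = z k then 1 - p else p) :=
    Finset.sum_congr rfl fun x _ => mutProb_eq_prod p z x
  rw [hmut, hlev]
  have h1 : ∀ k : Fin n, (k : ℕ) < i → z k = true :=
    fun k hk => (lo_spec z).1 k (by omega)
  have hzi' : z ⟨i, hin⟩ = false := (lo_spec z).2 _ (by simp [hzi])
  rw [filter_val_eq_singleton hin, Finset.prod_singleton]
  have e1 : (∏ k ∈ Finset.univ.filter (fun k : Fin n => (k : ℕ) < i),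
      if true = z k then 1 - p else p) = (1 - p) ^ i := by
    rw [Finset.prod_congr rfl (fun k hk => ?_), Finset.prod_const,
      card_filter_val_lt hi]
    rw [if_pos]
    rw [(h1 k (Finset.mem_filter.mp hk).2)]
  have e2 : (if false = z ⟨i, hin⟩ then 1 - p else p) = 1 - p := by
    rw [hzi']; simp
  have e3 : (∏ k ∈ Finset.univ.filter (fun k : Fin n => i < (k : ℕ)),
      ((if false = z k then 1 - p else p) + if true = z k then 1 - p else p)) = 1 := by
    apply Finset.prod_eq_one
    intro k _
    exact wsum_one (z k)
  rw [e1, e2, e3, mul_one, pow_succ]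

/-- e3 : total mutation mass is one. -/
lemma sum_mut_total (z : Fin n → Bool) :
    ∑ y : Fin n → Bool, mutProb n p z y = 1 := by
  classical
  have hpu := Finset.prod_univ_sum (fun _ : Fin n => (Finset.univ : Finset Bool))
    (fun k b => if b = z k then 1 - p else p)
  rw [Fintype.piFinset_univ] at hpu
  have hmut : ∑ y : Fin n → Bool, mutProb n p z y
      = ∑ y : Fin n → Bool, ∏ k, (if y k = z k then 1 - p else p) :=
    Finset.sum_congr rfl fun y _ => mutProb_eq_prod p z y
  rw [hmut, ← hpu]
  apply Finset.prod_eq_one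
  intro k _
  cases h : z k <;> simp [h]

lemma geom_sum_q (i : ℕ) : ∑ j ∈ Finset.range i, (1 - p) ^ j * p = 1 - (1 - p) ^ i := by
  induction i with
  | zero => simp
  | succ i ih => rw [Finset.sum_range_succ, ih, pow_succ]; ring

section Step

/-- Fitness comparison for leading ones. -/
lemma f_le_iff (x y : Fin n → Bool) :
    ((leadingOnes n x : ℝ) ≤ (leadingOnes n y : ℝ)) ↔ leadingOnes n x ≤ leadingOnes n y :=
  Nat.cast_le

lemma stepProb_eq_mut {x z : Fin n → Bool} (hxz : x ≠ z)
    (hle : leadingOnes n x ≤ leadingOnes n z) :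
    stepProb n p (fun x => (leadingOnes n x : ℝ)) x z = mutProb n p x z := by
  classical
  rw [stepProb]
  have key : ∀ y : Fin n → Bool,
      (if (if ((leadingOnes n x : ℝ)) ≤ (leadingOnes n y : ℝ) then y else x) = z
        then mutProb n p x y else 0)
      = if y = z then mutProb n p x y else 0 := by
    intro y
    by_cases hf : ((leadingOnes n x : ℝ)) ≤ (leadingOnes n y : ℝ)
    · rw [if_pos hf]
    · have hyz : y ≠ z := by
        rintro rfl
        exact hf (Nat.cast_le.mpr hle)
      rw [if_neg hf, if_neg hxz, if_neg hyz]
  calc ∑ y : Fin n → Bool,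
        (if (if ((fun x => (leadingOnes n x : ℝ)) x) ≤ ((fun x => (leadingOnes n x : ℝ)) y) then y else x) = z
          then mutProb n p x y else 0)
      = ∑ y : Fin n → Bool, if y = z then mutProb n p x y else 0 :=
        Finset.sum_congr rfl fun y _ => key y
    _ = mutProb n p x z := by rw [Finset.sum_ite_eq' Finset.univ z]; simp

lemma stepProb_eq_zero {x z : Fin n → Bool} (h : leadingOnes n z < leadingOnes n x) :
    stepProb n p (fun x => (leadingOnes n x : ℝ)) x z = 0 := by
  rw [stepProb]
  apply Finset.sum_eq_zero
  intro y _
  rw [if_neg]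
  intro heq
  by_cases hf : ((fun x => (leadingOnes n x : ℝ)) x) ≤ ((fun x => (leadingOnes n x : ℝ)) y)
  · rw [if_pos hf] at heq
    subst heq
    have := Nat.cast_le.mp hf
    omega
  · rw [if_neg hf] at heq
    subst heq
    omega

lemma stepProb_self (z : Fin n → Bool) :
    stepProb n p (fun x => (leadingOnes n x : ℝ)) z z
      = mutProb n p z z +
        ∑ y ∈ Finset.univ.filter
          (fun y : Fin n → Bool => leadingOnes n y < leadingOnes n z),
            mutProb n p z y := by
  classical
  rw [stepProb]
  have key : ∀ y : Fin n → Bool,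
      (if (if ((leadingOnes n z : ℝ)) ≤ (leadingOnes n y : ℝ) then y else z) = z
        then mutProb n p z y else 0)
      = (if y = z then mutProb n p z y else 0)
        + (if leadingOnes n y < leadingOnes n z then mutProb n p z y else 0) := by
    intro y
    by_cases hf : ((leadingOnes n z : ℝ)) ≤ (leadingOnes n y : ℝ)
    · have hnlt : ¬ leadingOnes n y < leadingOnes n z := by
        have := Nat.cast_le.mp hf; omega
      rw [if_pos hf, if_neg hnlt, add_zero]
    · have hlt : leadingOnes n y < leadingOnes n z := by
        have : ¬ leadingOnes n z ≤ leadingOnes n y := fun h => hf (Nat.cast_le.mpr h)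
        omega
      have hyz : y ≠ z := by
        rintro rfl; omega
      rw [if_neg hf, if_pos rfl, if_neg hyz, if_pos hlt, zero_add]
  calc ∑ y : Fin n → Bool,
        (if (if ((fun x => (leadingOnes n x : ℝ)) z) ≤ ((fun x => (leadingOnes n x : ℝ)) y) then y else z) = z
          then mutProb n p z y else 0)
      = ∑ y : Fin n → Bool,
          ((if y = z then mutProb n p z y else 0)
            + (if leadingOnes n y < leadingOnes n z then mutProb n p z y else 0)) :=
        Finset.sum_congr rfl fun y _ => key y
    _ = _ := by
        rw [Finset.sum_add_distrib, Finset.sum_ite_eq' Finset.univ z,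
          ← Finset.sum_filter]
        simp

/-- The "rejected" mass: sum of mutation probabilities onto strictly lower levels. -/
lemma rej_sum {z : Fin n → Bool} {i : ℕ} (hzi : leadingOnes n z = i) :
    ∑ y ∈ Finset.univ.filter
        (fun y : Fin n → Bool => leadingOnes n y < leadingOnes n z),
          mutProb n p z y = 1 - (1 - p) ^ i := by
  classical
  rw [← Finset.sum_fiberwise_of_maps_to
    (t := Finset.range i) (g := fun y : Fin n → Bool => leadingOnes n y)
    (fun y hy => Finset.mem_range.mpr (by
      have := (Finset.mem_filter.mp hy).2
      show leadingOnes n y < i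
      omega))]
  rw [← geom_sum_q]
  apply Finset.sum_congr rfl
  intro j hj
  have hji : j < i := Finset.mem_range.mp hj
  have hfil : (Finset.filter (fun y : Fin n → Bool => leadingOnes n y = j)
        (Finset.univ.filter fun y : Fin n → Bool => leadingOnes n y < leadingOnes n z))
      = Finset.univ.filter (fun y : Fin n → Bool => leadingOnes n y = j) := by
    rw [Finset.filter_filter]
    apply Finset.filter_congr
    intro y _
    constructor
    · rintro ⟨-, h⟩; exact h
    · intro h
      refine ⟨?_, h⟩
      show leadingOnes n y < leadingOnes n z
      omega
  rw [hfil]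
  exact sum_level_mut_lt (by omega)

lemma S_lt (hp0 : 0 < p) (hp1 : p < 1) {z : Fin n → Bool} {i : ℕ}
    (h : i < leadingOnes n z) :
    ∑ x ∈ Finset.univ.filter (fun x : Fin n → Bool => leadingOnes n x = i),
        stepProb n p (fun x => (leadingOnes n x : ℝ)) x z = (1 - p) ^ i * p := by
  classical
  rw [← sum_level_mut_lt (p := p) h]
  apply Finset.sum_congr rfl
  intro x hx
  have hxl : leadingOnes n x = i := (Finset.mem_filter.mp hx).2
  have hxz : x ≠ z := by
    intro heq; rw [heq] at hxl; omega
  rw [stepProb_eq_mut hxz (by omega), mutProb_comm]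

lemma S_eq (hp0 : 0 < p) (hp1 : p < 1) {z : Fin n → Bool} {i : ℕ}
    (hzi : leadingOnes n z = i) (hin : i < n) :
    ∑ x ∈ Finset.univ.filter (fun x : Fin n → Bool => leadingOnes n x = i),
        stepProb n p (fun x => (leadingOnes n x : ℝ)) x z = 1 - (1 - p) ^ i * p := by
  classical
  have hzmem : z ∈ Finset.univ.filter
      (fun x : Fin n → Bool => leadingOnes n x = i) := by
    simp [hzi]
  rw [Finset.sum_eq_sum_sdiff_singleton_add hzmem]
  have hdiff : ∑ x ∈ (Finset.univ.filter
        (fun x : Fin n → Bool => leadingOnes n x = i)) \ {z},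
          stepProb n p (fun x => (leadingOnes n x : ℝ)) x z
      = ∑ x ∈ (Finset.univ.filter
        (fun x : Fin n → Bool => leadingOnes n x = i)) \ {z}, mutProb n p z x := by
    apply Finset.sum_congr rfl
    intro x hx
    obtain ⟨hx1, hx2⟩ := Finset.mem_sdiff.mp hx
    have hxl : leadingOnes n x = i := (Finset.mem_filter.mp hx1).2
    have hxz : x ≠ z := by simpa using hx2
    rw [stepProb_eq_mut hxz (by omega), mutProb_comm]
  rw [hdiff, stepProb_self, rej_sum hzi]
  have hsum : ∑ x ∈ (Finset.univ.filter
        (fun x : Fin n → Bool => leadingOnes n x = i)) \ {z}, mutProb n p z x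
        + mutProb n p z z
      = ∑ x ∈ Finset.univ.filter
        (fun x : Fin n → Bool => leadingOnes n x = i), mutProb n p z x :=
    (Finset.sum_eq_sum_sdiff_singleton_add hzmem _).symm
  have htot := sum_level_mut_eq (p := p) hzi hin
  have : ∑ x ∈ (Finset.univ.filter
        (fun x : Fin n → Bool => leadingOnes n x = i)) \ {z}, mutProb n p z x
      = (1 - p) ^ (i + 1) - mutProb n p z z := by
    rw [← htot, ← hsum]; ring
  rw [this, pow_succ]
  ring

lemma S_top (hp0 : 0 < p) (hp1 : p < 1) {z : Fin n → Bool}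
    (hz : leadingOnes n z = n) :
    ∑ x ∈ Finset.univ.filter (fun x : Fin n → Bool => leadingOnes n x = n),
        stepProb n p (fun x => (leadingOnes n x : ℝ)) x z = 1 := by
  classical
  have hzt : z = fun _ => true := lo_eq_n_iff.mp hz
  have hfil : (Finset.univ.filter (fun x : Fin n → Bool => leadingOnes n x = n))
      = {z} := by
    ext x
    simp only [Finset.mem_filter, Finset.mem_univ, true_and, Finset.mem_singleton]
    rw [lo_eq_n_iff, hzt]
  rw [hfil, Finset.sum_singleton, stepProb_self, rej_sum hz]
  have : mutProb n p z z = (1 - p) ^ n := by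
    rw [mutProb, hammingDist_self]
    simp
  rw [this]
  ring

lemma stepProb_one_one (hp0 : 0 < p) (hp1 : p < 1) :
    stepProb n p (fun x => (leadingOnes n x : ℝ))
      (fun _ => true) (fun _ => true) = 1 := by
  have h := S_top (n := n) (p := p) hp0 hp1 (z := fun _ => true) (lo_eq_n_iff.mpr rfl)
  have hfil : (Finset.univ.filter (fun x : Fin n → Bool => leadingOnes n x = n))
      = {fun _ : Fin n => true} := by
    ext x
    simp only [Finset.mem_filter, Finset.mem_univ, true_and, Finset.mem_singleton]
    rw [lo_eq_n_iff]
  rw [hfil, Finset.sum_singleton] at h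
  exact h

lemma stepProb_nonneg (hp0 : 0 < p) (hp1 : p < 1)
    (f : (Fin n → Bool) → ℝ) (x z : Fin n → Bool) :
    0 ≤ stepProb n p f x z := by
  apply Finset.sum_nonneg
  intro y _
  by_cases h : (if f x ≤ f y then y else x) = z
  · rw [if_pos h]; exact mutProb_nonneg hp0 hp1 x y
  · rw [if_neg h]

end Step

section Cards

lemma card_level_lt {i : ℕ} (hin : i < n) :
    (((Finset.univ.filter
      (fun x : Fin n → Bool => leadingOnes n x = i)).card : ℝ))
      = 2 ^ (n - 1 - i) := by
  classical
  have hlev := sum_level_prod (n := n) (w := fun _ _ => (1 : ℝ)) (le_of_lt hin)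
  simp only [Finset.prod_const_one, Finset.sum_const, nsmul_eq_mul, mul_one,
    one_mul] at hlev
  rw [hlev]
  have h2 : (1 : ℝ) + 1 = 2 := by norm_num
  rw [Finset.prod_const, h2]
  congr 1
  have hc : (Finset.univ.filter fun k : Fin n => (k : ℕ) < i + 1).card = i + 1 :=
    card_filter_val_lt (by omega)
  have := Finset.card_filter_add_card_filter_not
    (s := (Finset.univ : Finset (Fin n))) (p := fun k : Fin n => (k : ℕ) < i + 1)
  rw [Finset.card_univ, Fintype.card_fin, hc] at this
  have hfil : (Finset.univ.filter fun k : Fin n => i < (k : ℕ))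
      = Finset.univ.filter fun k : Fin n => ¬ (k : ℕ) < i + 1 := by
    apply Finset.filter_congr
    intro k _
    constructor
    · intro h; omega
    · intro h; omega
  rw [hfil]
  omega

lemma level_top_eq :
    (Finset.univ.filter (fun x : Fin n → Bool => leadingOnes n x = n))
      = {fun _ : Fin n => true} := by
  ext x
  simp only [Finset.mem_filter, Finset.mem_univ, true_and, Finset.mem_singleton]
  rw [lo_eq_n_iff]

end Cards

end LOAux

namespace LOAux

section Chain

variable {n : ℕ} {p : ℝ}

/-- Single-step improvement probability at level `i`. -/
noncomputable def qq (p : ℝ) (i : ℕ) : ℝ := (1 - p) ^ i * p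

/-- Per-state mass normalizer at level `i`. -/
noncomputable def uu (n i : ℕ) : ℝ := if i < n then (2 : ℝ)⁻¹ ^ (n - 1 - i) else 1

/-- Level-jump weight. -/
noncomputable def pw (n i j : ℕ) : ℝ :=
  (2 : ℝ)⁻¹ ^ (if j < n then j - i else n - 1 - i)

/-- The level-chain distribution of the EA. -/
noncomputable def AA (n : ℕ) (p : ℝ) : ℕ → ℕ → ℝ
  | 0, i => if i < n then (2 : ℝ)⁻¹ ^ (i + 1) else (2 : ℝ)⁻¹ ^ n
  | (t + 1), j =>
      (if j < n then 1 - qq p j else 1) * AA n p t j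
        + ∑ i ∈ Finset.range (min j n), qq p i * pw n i j * AA n p t i

/-- Expected waiting time at level `i`. -/
noncomputable def cc (p : ℝ) (i : ℕ) : ℝ := ((1 - p) ^ i * p)⁻¹

/-- Expected remaining time from level `i`. -/
noncomputable def hh (n : ℕ) (p : ℝ) (i : ℕ) : ℝ :=
  if i < n then cc p i + (1 / 2) * ∑ k ∈ Finset.Ico (i + 1) n, cc p k else 0

/-- The expected-remaining-time functional. -/
noncomputable def Phi (n : ℕ) (p : ℝ) (t : ℕ) : ℝ :=
  ∑ j ∈ Finset.range (n + 1), AA n p t j * hh n p j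

lemma qq_pos (hp0 : 0 < p) (hp1 : p < 1) (i : ℕ) : 0 < qq p i :=
  mul_pos (pow_pos (by linarith) i) hp0

lemma qq_le_one (hp0 : 0 < p) (hp1 : p < 1) (i : ℕ) : qq p i ≤ 1 := by
  have h1 : (1 - p) ^ i ≤ 1 := pow_le_one₀ (by linarith) (by linarith)
  have h2 : (0:ℝ) ≤ (1 - p) ^ i := pow_nonneg (by linarith) i
  calc (1 - p) ^ i * p ≤ 1 * 1 := by
        apply mul_le_mul h1 (le_of_lt hp1) (le_of_lt hp0) zero_le_one
    _ = 1 := by ring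

lemma uu_nonneg (n i : ℕ) : 0 ≤ uu n i := by
  rw [uu]
  split <;> positivity

lemma pw_nonneg (n i j : ℕ) : 0 ≤ pw n i j := by
  rw [pw]; positivity

lemma cc_pos (hp0 : 0 < p) (hp1 : p < 1) (i : ℕ) : 0 < cc p i := by
  rw [cc]
  exact inv_pos.mpr (mul_pos (pow_pos (by linarith) i) hp0)

lemma qq_mul_cc (hp0 : 0 < p) (hp1 : p < 1) (i : ℕ) : qq p i * cc p i = 1 := by
  rw [qq, cc]
  exact mul_inv_cancel₀ (ne_of_gt (mul_pos (pow_pos (by linarith) i) hp0))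

lemma AA_nonneg (hp0 : 0 < p) (hp1 : p < 1) (t i : ℕ) : 0 ≤ AA n p t i := by
  induction t generalizing i with
  | zero =>
    rw [AA]
    split <;> positivity
  | succ t ih =>
    rw [AA]
    apply add_nonneg
    · apply mul_nonneg _ (ih i)
      split
      · have := qq_le_one hp0 hp1 i; linarith
      · norm_num
    · apply Finset.sum_nonneg
      intro k _
      exact mul_nonneg (mul_nonneg (le_of_lt (qq_pos hp0 hp1 k)) (pw_nonneg n k i))
        (ih k)

lemma AA_zero_mul_uu {i : ℕ} (hi : i ≤ n) :
    AA n p 0 i * uu n i = (2 : ℝ)⁻¹ ^ n := by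
  rw [AA, uu]
  by_cases h : i < n
  · rw [if_pos h, if_pos h, ← pow_add]
    congr 1
    omega
  · have : i = n := by omega
    rw [if_neg h, if_neg h, mul_one]

lemma pw_mul_uu {i j : ℕ} (hij : i < j) (hj : j ≤ n) :
    pw n i j * uu n j = uu n i := by
  rw [pw, uu, uu]
  by_cases hjn : j < n
  · rw [if_pos hjn, if_pos hjn, if_pos (lt_trans hij hjn), ← pow_add]
    congr 1
    omega
  · rw [if_neg hjn, if_neg hjn, if_pos (by omega : i < n), mul_one]

/-- Triangular double-sum exchange. -/
lemma tri_swap (N : ℕ) (f : ℕ → ℕ → ℝ) :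
    ∑ j ∈ Finset.range N, ∑ i ∈ Finset.range j, f i j
      = ∑ i ∈ Finset.range N, ∑ j ∈ Finset.Ico (i + 1) N, f i j := by
  induction N with
  | zero => simp
  | succ N ih =>
    rw [Finset.sum_range_succ, ih, Finset.sum_range_succ]
    have h1 : ∀ i ∈ Finset.range N,
        ∑ j ∈ Finset.Ico (i + 1) (N + 1), f i j
          = ∑ j ∈ Finset.Ico (i + 1) N, f i j + f i N := by
      intro i hi
      have hi' : i < N := Finset.mem_range.mp hi
      exact Finset.sum_Ico_succ_top (by omega) _
    rw [Finset.sum_congr rfl h1, Finset.sum_add_distrib]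
    have h2 : Finset.Ico (N + 1) (N + 1) = ∅ := Finset.Ico_self _
    rw [h2]
    simp

/-- Main identity: the harmonic function decreases by one per non-absorbed level. -/
lemma E_identity (hp0 : 0 < p) (hp1 : p < 1) :
    ∀ d i, i + d + 1 = n →
      hh n p i - ∑ j ∈ Finset.Ico (i + 1) n, (2 : ℝ)⁻¹ ^ (j - i) * hh n p j
        = cc p i := by
  intro d
  induction d with
  | zero =>
    intro i hi
    rw [hh, if_pos (by omega), Finset.Ico_eq_empty (by omega : ¬ i + 1 < n)]
    simp
  | succ d ih =>
    intro i hi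
    have hi1 : i + 1 < n := by omega
    have hIH := ih (i + 1) (by omega)
    rw [Finset.sum_eq_sum_Ico_succ_bot hi1]
    have hshift : ∑ j ∈ Finset.Ico (i + 1 + 1) n, (2 : ℝ)⁻¹ ^ (j - i) * hh n p j
        = (2 : ℝ)⁻¹ * ∑ j ∈ Finset.Ico (i + 1 + 1) n,
            (2 : ℝ)⁻¹ ^ (j - (i + 1)) * hh n p j := by
      rw [Finset.mul_sum]
      apply Finset.sum_congr rfl
      intro j hj
      have hj' : i + 1 + 1 ≤ j := (Finset.mem_Ico.mp hj).1
      have hje : j - i = (j - (i + 1)) + 1 := by omega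
      rw [hje, pow_succ]
      ring
    rw [hshift]
    have hhi : hh n p i = cc p i
        + (1 / 2) * (cc p (i + 1) + ∑ j ∈ Finset.Ico (i + 1 + 1) n, cc p j) := by
      rw [hh, if_pos (by omega), Finset.sum_eq_sum_Ico_succ_bot hi1]
    have hhi1 : hh n p (i + 1) = cc p (i + 1)
        + (1 / 2) * ∑ j ∈ Finset.Ico (i + 1 + 1) n, cc p j := by
      rw [hh, if_pos hi1]
    have hT : ∑ j ∈ Finset.Ico (i + 1 + 1) n, (2 : ℝ)⁻¹ ^ (j - (i + 1)) * hh n p j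
        = hh n p (i + 1) - cc p (i + 1) := by linarith [hIH]
    rw [hT, hhi, hhi1]
    have h1 : i + 1 - i = 1 := by omega
    rw [h1, pow_one]
    ring

lemma per_level (hp0 : 0 < p) (hp1 : p < 1) {i : ℕ} (hin : i < n) :
    (1 - qq p i) * hh n p i
      + qq p i * ∑ j ∈ Finset.Ico (i + 1) (n + 1), pw n i j * hh n p j
        = hh n p i - 1 := by
  have htop : ∑ j ∈ Finset.Ico (i + 1) (n + 1), pw n i j * hh n p j
      = ∑ j ∈ Finset.Ico (i + 1) n, pw n i j * hh n p j := by
    rw [Finset.sum_Ico_succ_top (by omega)]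
    have : hh n p n = 0 := by rw [hh, if_neg (by omega)]
    rw [this, mul_zero, add_zero]
  have hpw : ∀ j ∈ Finset.Ico (i + 1) n, pw n i j * hh n p j
      = (2 : ℝ)⁻¹ ^ (j - i) * hh n p j := by
    intro j hj
    have := Finset.mem_Ico.mp hj
    rw [pw, if_pos (by omega)]
  rw [htop, Finset.sum_congr rfl hpw]
  have hE := E_identity (n := n) hp0 hp1 (n - i - 1) i (by omega)
  have hqc := qq_mul_cc hp0 hp1 i
  linear_combination (-(qq p i)) * hE - hqc

lemma Psi_identity (hp0 : 0 < p) (hp1 : p < 1) :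
    ∀ d i, i + d = n →
      ∑ j ∈ Finset.Ico i n, (2 : ℝ)⁻¹ ^ (j + 1 - i) * hh n p j
        = (1 / 2) * ∑ j ∈ Finset.Ico i n, cc p j := by
  intro d
  induction d with
  | zero =>
    intro i hi
    rw [Finset.Ico_eq_empty (by omega : ¬ i < n), Finset.sum_empty, Finset.sum_empty]
    ring
  | succ d ih =>
    intro i hi
    have hin : i < n := by omega
    have hIH := ih (i + 1) (by omega)
    rw [Finset.sum_eq_sum_Ico_succ_bot hin, Finset.sum_eq_sum_Ico_succ_bot hin]
    have hshift : ∑ j ∈ Finset.Ico (i + 1) n, (2 : ℝ)⁻¹ ^ (j + 1 - i) * hh n p j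
        = (2 : ℝ)⁻¹ * ∑ j ∈ Finset.Ico (i + 1) n,
            (2 : ℝ)⁻¹ ^ (j + 1 - (i + 1)) * hh n p j := by
      rw [Finset.mul_sum]
      apply Finset.sum_congr rfl
      intro j hj
      have hj' : i + 1 ≤ j := (Finset.mem_Ico.mp hj).1
      have hje : j + 1 - i = (j + 1 - (i + 1)) + 1 := by omega
      rw [hje, pow_succ]
      ring
    rw [hshift, hIH]
    have h1 : i + 1 - i = 1 := by omega
    rw [h1, pow_one]
    have hhi : hh n p i = cc p i
        + (1 / 2) * ∑ j ∈ Finset.Ico (i + 1) n, cc p j := by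
      rw [hh, if_pos hin]
    rw [hhi]
    ring

lemma Phi_zero (hp0 : 0 < p) (hp1 : p < 1) :
    Phi n p 0 = (1 / 2) * ∑ j ∈ Finset.range n, cc p j := by
  rw [Phi, Finset.sum_range_succ]
  have hn0 : hh n p n = 0 := by rw [hh, if_neg (by omega)]
  rw [hn0, mul_zero, add_zero]
  have hPsi := Psi_identity (n := n) hp0 hp1 n 0 (by omega)
  rw [← Finset.range_eq_Ico] at hPsi
  rw [← hPsi]
  apply Finset.sum_congr rfl
  intro j hj
  have hjn : j < n := Finset.mem_range.mp hj
  rw [AA, if_pos hjn]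
  norm_num

end Chain

end LOAux

namespace LOAux

section Chain2

variable {n : ℕ} {p : ℝ}

lemma Phi_step (hp0 : 0 < p) (hp1 : p < 1) (t : ℕ)
    (hmass : ∑ i ∈ Finset.range (n + 1), AA n p t i = 1) :
    Phi n p (t + 1) = Phi n p t - (1 - AA n p t n) := by
  rw [Phi]
  have hexp : ∀ j ∈ Finset.range (n + 1), AA n p (t + 1) j * hh n p j
      = (if j < n then 1 - qq p j else 1) * AA n p t j * hh n p j
        + ∑ i ∈ Finset.range j, (qq p i * pw n i j * AA n p t i) * hh n p j := by
    intro j hj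
    have hjn : j ≤ n := by have := Finset.mem_range.mp hj; omega
    rw [AA, min_eq_left hjn, add_mul, Finset.sum_mul]
  rw [Finset.sum_congr rfl hexp, Finset.sum_add_distrib, tri_swap (n + 1)]
  have hcomb : ∀ i ∈ Finset.range (n + 1),
      (if i < n then 1 - qq p i else 1) * AA n p t i * hh n p i
        + ∑ j ∈ Finset.Ico (i + 1) (n + 1), (qq p i * pw n i j * AA n p t i) * hh n p j
      = AA n p t i * (hh n p i - if i < n then 1 else 0) := by
    intro i _
    by_cases hin : i < n
    · rw [if_pos hin, if_pos hin]
      have hfac : ∑ j ∈ Finset.Ico (i + 1) (n + 1),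
            (qq p i * pw n i j * AA n p t i) * hh n p j
          = AA n p t i * (qq p i *
              ∑ j ∈ Finset.Ico (i + 1) (n + 1), pw n i j * hh n p j) := by
        rw [Finset.mul_sum, Finset.mul_sum]
        apply Finset.sum_congr rfl
        intro j _
        ring
      rw [hfac]
      have hpl := per_level (n := n) hp0 hp1 hin
      linear_combination (AA n p t i) * hpl
    · rw [if_neg hin, if_neg hin, one_mul,
        Finset.Ico_eq_empty (by omega : ¬ i + 1 < n + 1), Finset.sum_empty, add_zero]
      ring
  have hsum2 : ∑ i ∈ Finset.range (n + 1),
        ((if i < n then 1 - qq p i else 1) * AA n p t i * hh n p i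
          + ∑ j ∈ Finset.Ico (i + 1) (n + 1),
              (qq p i * pw n i j * AA n p t i) * hh n p j)
      = ∑ i ∈ Finset.range (n + 1),
          AA n p t i * (hh n p i - if i < n then 1 else 0) :=
    Finset.sum_congr rfl hcomb
  rw [← Finset.sum_add_distrib, hsum2]
  have hsplit : ∑ i ∈ Finset.range (n + 1),
        AA n p t i * (hh n p i - if i < n then 1 else 0)
      = Phi n p t - ∑ i ∈ Finset.range (n + 1),
          AA n p t i * (if i < n then 1 else 0) := by
    rw [Phi, ← Finset.sum_sub_distrib]
    apply Finset.sum_congr rfl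
    intro i _
    ring
  rw [hsplit]
  have hind : ∑ i ∈ Finset.range (n + 1), AA n p t i * (if i < n then 1 else 0)
      = ∑ i ∈ Finset.range n, AA n p t i := by
    rw [Finset.sum_range_succ, if_neg (lt_irrefl n), mul_zero, add_zero]
    apply Finset.sum_congr rfl
    intro i hi
    rw [if_pos (Finset.mem_range.mp hi), mul_one]
  rw [hind]
  have hlast : ∑ i ∈ Finset.range n, AA n p t i = 1 - AA n p t n := by
    rw [Finset.sum_range_succ] at hmass
    linarith
  rw [hlast]

lemma step_key (hp0 : 0 < p) (hp1 : p < 1) (t : ℕ) (z : Fin n → Bool) :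
    ∑ x : Fin n → Bool,
        AA n p t (leadingOnes n x) * uu n (leadingOnes n x)
          * stepProb n p (fun x => (leadingOnes n x : ℝ)) x z
      = AA n p (t + 1) (leadingOnes n z) * uu n (leadingOnes n z) := by
  classical
  have hjn : leadingOnes n z ≤ n := lo_le z
  set j := leadingOnes n z with hj
  have hgroup : ∑ x : Fin n → Bool,
        AA n p t (leadingOnes n x) * uu n (leadingOnes n x)
          * stepProb n p (fun x => (leadingOnes n x : ℝ)) x z
      = ∑ i ∈ Finset.range (n + 1), AA n p t i * uu n i *
          ∑ x ∈ Finset.univ.filter (fun x : Fin n → Bool => leadingOnes n x = i),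
            stepProb n p (fun x => (leadingOnes n x : ℝ)) x z := by
    rw [← Finset.sum_fiberwise_of_maps_to
      (t := Finset.range (n + 1)) (g := fun x : Fin n → Bool => leadingOnes n x)
      (fun x _ => Finset.mem_range.mpr (by
        have := lo_le (n := n) x
        show leadingOnes n x < n + 1
        omega))]
    apply Finset.sum_congr rfl
    intro i _
    rw [Finset.mul_sum]
    apply Finset.sum_congr rfl
    intro x hx
    have hxi : leadingOnes n x = i := (Finset.mem_filter.mp hx).2
    rw [hxi]
  rw [hgroup]
  have hzero : ∀ i ∈ Finset.Ico (j + 1) (n + 1),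
      AA n p t i * uu n i *
        ∑ x ∈ Finset.univ.filter (fun x : Fin n → Bool => leadingOnes n x = i),
          stepProb n p (fun x => (leadingOnes n x : ℝ)) x z = 0 := by
    intro i hi
    have hji : j < i := (Finset.mem_Ico.mp hi).1
    have hzs : ∑ x ∈ Finset.univ.filter
          (fun x : Fin n → Bool => leadingOnes n x = i),
        stepProb n p (fun x => (leadingOnes n x : ℝ)) x z = 0 := by
      apply Finset.sum_eq_zero
      intro x hx
      have hxi : leadingOnes n x = i := (Finset.mem_filter.mp hx).2
      exact stepProb_eq_zero (by omega)
    rw [hzs, mul_zero]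
  have hsplit : ∑ i ∈ Finset.range (n + 1), AA n p t i * uu n i *
        ∑ x ∈ Finset.univ.filter (fun x : Fin n → Bool => leadingOnes n x = i),
          stepProb n p (fun x => (leadingOnes n x : ℝ)) x z
      = ∑ i ∈ Finset.range (j + 1), AA n p t i * uu n i *
          ∑ x ∈ Finset.univ.filter (fun x : Fin n → Bool => leadingOnes n x = i),
            stepProb n p (fun x => (leadingOnes n x : ℝ)) x z := by
    rw [Finset.range_eq_Ico, ← Finset.sum_Ico_consecutive _
      (by omega : 0 ≤ j + 1) (by omega : j + 1 ≤ n + 1)]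
    rw [Finset.sum_eq_zero hzero, add_zero, Finset.range_eq_Ico]
  rw [hsplit, Finset.sum_range_succ]
  rw [AA, min_eq_left hjn, add_mul, Finset.sum_mul, add_comm]
  congr 1
  · by_cases hjltn : j < n
    · have hS := S_eq (n := n) (p := p) hp0 hp1 (z := z) (i := j) hj.symm hjltn
      rw [hS, if_pos hjltn, qq]
      ring
    · have hje : j = n := by omega
      have hS := S_top (n := n) (p := p) hp0 hp1 (z := z) (by omega)
      rw [hje, hS, if_neg (by omega : ¬ n < n)]
      ring
  · apply Finset.sum_congr rfl
    intro i hi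
    have hij : i < j := Finset.mem_range.mp hi
    have hS := S_lt (n := n) (p := p) hp0 hp1 (z := z) (i := i) (by omega)
    rw [hS, ← pw_mul_uu hij hjn, qq]
    ring

lemma hh_nonneg (hp0 : 0 < p) (hp1 : p < 1) (i : ℕ) : 0 ≤ hh n p i := by
  rw [hh]
  split
  · apply add_nonneg (cc_pos hp0 hp1 i).le
    apply mul_nonneg (by norm_num)
    exact Finset.sum_nonneg fun k _ => (cc_pos hp0 hp1 k).le
  · exact le_rfl

lemma hh_le (hp0 : 0 < p) (hp1 : p < 1) {i : ℕ} (hin : i < n) :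
    hh n p i ≤ ∑ k ∈ Finset.range n, cc p k := by
  rw [hh, if_pos hin]
  have h1 : (0:ℝ) ≤ ∑ k ∈ Finset.Ico (i + 1) n, cc p k :=
    Finset.sum_nonneg fun k _ => (cc_pos hp0 hp1 k).le
  have h2 : cc p i + ∑ k ∈ Finset.Ico (i + 1) n, cc p k
      = ∑ k ∈ Finset.Ico i n, cc p k :=
    (Finset.sum_eq_sum_Ico_succ_bot hin _).symm
  have h3 : ∑ k ∈ Finset.Ico i n, cc p k ≤ ∑ k ∈ Finset.range n, cc p k := by
    rw [Finset.range_eq_Ico]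
    apply Finset.sum_le_sum_of_subset_of_nonneg
      (Finset.Ico_subset_Ico (by omega) le_rfl)
    intro k _ _
    exact (cc_pos hp0 hp1 k).le
  linarith

end Chain2

end LOAux

namespace LOAux

lemma AA_succ_top {n : ℕ} {p : ℝ} (t : ℕ) :
    AA n p (t + 1) n
      = AA n p t n + ∑ i ∈ Finset.range n, qq p i * pw n i n * AA n p t i := by
  rw [AA, if_neg (lt_irrefl n), one_mul, min_self]

end LOAux

/-- The (1+1) EA with mutation rate `p ∈ (0,1)` maximizing
`LeadingOnes`, started with a uniformly random search point, finds the all-ones string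
after an expected number of iterations of exactly `(1/2)·∑_{i=0}^{n-1} 1/((1-p)^i p)`.
The expectation is the tail sum `E[T] = ∑ₜ Pr[T > t]`. -/
theorem leadingOnes_expected_runtime
    {Ω : Type*} [MeasurableSpace Ω] (μ : Measure Ω) [IsProbabilityMeasure μ]
    (n : ℕ) (p : ℝ) (hp0 : 0 < p) (hp1 : p < 1)
    (Y : ℕ → Ω → Fin n → Bool)
    (hrun : IsEARun μ n p (fun x => (leadingOnes n x : ℝ)) Y)
    -- uniformly random initialization
    (hinit : ∀ x : Fin n → Bool, μ {ω | Y 0 ω = x} = ((2 : ℝ≥0∞) ^ n)⁻¹) :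
    ∑' t : ℕ, μ {ω | ∀ r ≤ t, Y r ω ≠ fun _ => true}
      = ENNReal.ofReal ((1 / 2) * ∑ i ∈ Finset.range n, 1 / ((1 - p) ^ i * p)) := by
  classical
  obtain ⟨hYm, hYstep⟩ := hrun
  rcases Nat.eq_zero_or_pos n with hn0 | hn
  · subst hn0
    have hone : ∀ (t : ℕ) (ω : Ω), Y t ω = fun _ => true := by
      intro t ω
      funext k
      exact absurd k.isLt (by omega)
    have hset : ∀ t : ℕ, {ω : Ω | ∀ r ≤ t, Y r ω ≠ fun _ => true} = (∅ : Set Ω) := by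
      intro t
      ext ω
      simp only [Set.mem_setOf_eq, Set.mem_empty_iff_false, iff_false, not_forall]
      exact ⟨0, Nat.zero_le t, not_not.mpr (hone 0 ω)⟩
    simp [hset]
  · set one : Fin n → Bool := (fun _ => true) with hone_def
    have hlo_one : leadingOnes n one = n := LOAux.lo_eq_n_iff.mpr rfl
    have hmY : ∀ (t : ℕ) (x : Fin n → Bool), MeasurableSet {ω | Y t ω = x} :=
      fun t x => hYm t (measurableSet_singleton x)
    -- decomposition along the value of `Y t`
    have hpart : ∀ (t : ℕ) (B : Set Ω), MeasurableSet B →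
        μ B = ∑ x : Fin n → Bool, μ (B ∩ {ω | Y t ω = x}) := by
      intro t B hB
      have hcover : B = ⋃ x : Fin n → Bool, B ∩ {ω | Y t ω = x} := by
        ext ω
        simp only [Set.mem_iUnion, Set.mem_inter_iff, Set.mem_setOf_eq]
        constructor
        · intro h; exact ⟨Y t ω, h, rfl⟩
        · rintro ⟨x, h, -⟩; exact h
      have hdis : Pairwise (Function.onFun Disjoint
          (fun x : Fin n → Bool => B ∩ {ω | Y t ω = x})) := by
        intro x y hxy
        apply Set.disjoint_left.mpr
        rintro ω ⟨-, h1⟩ ⟨-, h2⟩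
        exact hxy (h1.symm.trans h2)
      calc μ B = μ (⋃ x : Fin n → Bool, B ∩ {ω | Y t ω = x}) := by rw [← hcover]
        _ = ∑' x : Fin n → Bool, μ (B ∩ {ω | Y t ω = x}) :=
            measure_iUnion hdis (fun x => hB.inter (hmY t x))
        _ = ∑ x : Fin n → Bool, μ (B ∩ {ω | Y t ω = x}) := tsum_fintype _
    have hstep : ∀ (t : ℕ) (z : Fin n → Bool),
        μ {ω | Y (t + 1) ω = z}
          = ∑ x : Fin n → Bool,
              ENNReal.ofReal (stepProb n p (fun x => (leadingOnes n x : ℝ)) x z)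
                * μ {ω | Y t ω = x} := by
      intro t z
      rw [hpart t _ (hmY (t + 1) z)]
      apply Finset.sum_congr rfl
      intro x _
      rw [← hYstep t x z]
      congr 1
    have hd_nonneg : ∀ (t : ℕ) (x : Fin n → Bool),
        0 ≤ LOAux.AA n p t (leadingOnes n x) * LOAux.uu n (leadingOnes n x) :=
      fun t x => mul_nonneg (LOAux.AA_nonneg hp0 hp1 t _) (LOAux.uu_nonneg n _)
    -- the distribution of `Y t`
    have hm : ∀ (t : ℕ) (x : Fin n → Bool),
        μ {ω | Y t ω = x}
          = ENNReal.ofReal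
              (LOAux.AA n p t (leadingOnes n x) * LOAux.uu n (leadingOnes n x)) := by
      intro t
      induction t with
      | zero =>
        intro x
        rw [hinit x, LOAux.AA_zero_mul_uu (LOAux.lo_le x)]
        have h2 : ENNReal.ofReal ((2 : ℝ)⁻¹ ^ n) = ((2 : ℝ≥0∞) ^ n)⁻¹ := by
          rw [ENNReal.ofReal_pow (by norm_num), ENNReal.ofReal_inv_of_pos (by norm_num),
            ENNReal.inv_pow]
          norm_num
        rw [h2]
      | succ t ih =>
        intro z
        rw [hstep t z]
        have hje : ∀ x : Fin n → Bool,
            ENNReal.ofReal (stepProb n p (fun x => (leadingOnes n x : ℝ)) x z)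
              * μ {ω | Y t ω = x}
            = ENNReal.ofReal
                (LOAux.AA n p t (leadingOnes n x) * LOAux.uu n (leadingOnes n x)
                  * stepProb n p (fun x => (leadingOnes n x : ℝ)) x z) := by
          intro x
          rw [ih x, ← ENNReal.ofReal_mul (LOAux.stepProb_nonneg hp0 hp1 _ x z)]
          congr 1
          ring
        rw [Finset.sum_congr rfl fun x _ => hje x,
          ← ENNReal.ofReal_sum_of_nonneg (fun x _ =>
            mul_nonneg (hd_nonneg t x) (LOAux.stepProb_nonneg hp0 hp1 _ x z)),
          LOAux.step_key hp0 hp1 t z]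
    -- total mass of the level chain
    have hmass : ∀ t : ℕ, ∑ i ∈ Finset.range (n + 1), LOAux.AA n p t i = 1 := by
      intro t
      have h0 := hpart t Set.univ MeasurableSet.univ
      simp only [Set.univ_inter, measure_univ] at h0
      have h2 : ∑ x : Fin n → Bool,
          LOAux.AA n p t (leadingOnes n x) * LOAux.uu n (leadingOnes n x)
          = ∑ i ∈ Finset.range (n + 1), LOAux.AA n p t i := by
        rw [← Finset.sum_fiberwise_of_maps_to
          (t := Finset.range (n + 1)) (g := fun x : Fin n → Bool => leadingOnes n x)
          (fun x _ => Finset.mem_range.mpr (by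
            have := LOAux.lo_le (n := n) x
            show leadingOnes n x < n + 1
            omega))]
        apply Finset.sum_congr rfl
        intro i hi
        have hcongr : ∀ x ∈ Finset.univ.filter
            (fun x : Fin n → Bool => leadingOnes n x = i),
            LOAux.AA n p t (leadingOnes n x) * LOAux.uu n (leadingOnes n x)
              = LOAux.AA n p t i * LOAux.uu n i := by
          intro x hx
          rw [(Finset.mem_filter.mp hx).2]
        rw [Finset.sum_congr rfl hcongr]
        by_cases hin : i < n
        · rw [Finset.sum_const, nsmul_eq_mul, LOAux.card_level_lt hin,
            LOAux.uu, if_pos hin]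
          have hp2 : (2 : ℝ) ^ (n - 1 - i) * (2 : ℝ)⁻¹ ^ (n - 1 - i) = 1 := by
            rw [← mul_pow]
            norm_num
          linear_combination LOAux.AA n p t i * hp2
        · have hie : i = n := by
            have := Finset.mem_range.mp hi
            omega
          rw [hie, LOAux.level_top_eq, Finset.sum_singleton, LOAux.uu,
            if_neg (lt_irrefl n), mul_one]
      rw [Finset.sum_congr rfl (fun x _ => hm t x),
        ← ENNReal.ofReal_sum_of_nonneg (fun x _ => hd_nonneg t x), h2] at h0
      exact ENNReal.ofReal_eq_one.mp h0.symm
    have hlastmass : ∀ t : ℕ,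
        ∑ i ∈ Finset.range n, LOAux.AA n p t i = 1 - LOAux.AA n p t n := by
      intro t
      have := hmass t
      rw [Finset.sum_range_succ] at this
      linarith
    have hAle1 : ∀ t : ℕ, LOAux.AA n p t n ≤ 1 := by
      intro t
      have h1 := hlastmass t
      have h2 : (0:ℝ) ≤ ∑ i ∈ Finset.range n, LOAux.AA n p t i :=
        Finset.sum_nonneg fun i _ => LOAux.AA_nonneg hp0 hp1 t i
      linarith
    have hg0 : ∀ t : ℕ, 0 ≤ 1 - LOAux.AA n p t n := fun t => by
      have := hAle1 t; linarith
    -- geometric decay of the non-optimal mass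
    set ε : ℝ := p * (1 - p) ^ (n - 1) * (2 : ℝ)⁻¹ ^ (n - 1) with hεdef
    have hε0 : 0 < ε :=
      mul_pos (mul_pos hp0 (pow_pos (by linarith) _)) (pow_pos (by norm_num) _)
    have hε1 : ε ≤ 1 := by
      have a1 : (1 - p) ^ (n - 1) ≤ 1 := pow_le_one₀ (by linarith) (by linarith)
      have a2 : (2 : ℝ)⁻¹ ^ (n - 1) ≤ 1 := pow_le_one₀ (by norm_num) (by norm_num)
      have a3 : (0:ℝ) ≤ (1 - p) ^ (n - 1) := pow_nonneg (by linarith) _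
      have a4 : (0:ℝ) ≤ (2 : ℝ)⁻¹ ^ (n - 1) := by positivity
      have a5 : p * (1 - p) ^ (n - 1) ≤ 1 := mul_le_one₀ hp1.le a3 a1
      exact mul_le_one₀ a5 a4 a2
    have hdecay : ∀ t : ℕ, 1 - LOAux.AA n p t n ≤ (1 - ε) ^ t := by
      intro t
      induction t with
      | zero =>
        rw [pow_zero, LOAux.AA, if_neg (lt_irrefl n)]
        have : (0:ℝ) ≤ (2 : ℝ)⁻¹ ^ n := by positivity
        linarith
      | succ t ih =>
        have hstep2 := LOAux.AA_succ_top (n := n) (p := p) t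
        have hterm : ∀ i ∈ Finset.range n,
            ε * LOAux.AA n p t i ≤ LOAux.qq p i * LOAux.pw n i n * LOAux.AA n p t i := by
          intro i hi
          have hin : i < n := Finset.mem_range.mp hi
          have hA := LOAux.AA_nonneg (n := n) hp0 hp1 t i
          have hq : ε ≤ LOAux.qq p i * LOAux.pw n i n := by
            rw [LOAux.qq, LOAux.pw, if_neg (lt_irrefl n)]
            have e1 : (1 - p) ^ (n - 1) ≤ (1 - p) ^ i :=
              pow_le_pow_of_le_one (by linarith) (by linarith) (by omega)
            have e2 : (2 : ℝ)⁻¹ ^ (n - 1) ≤ (2 : ℝ)⁻¹ ^ (n - 1 - i) :=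
              pow_le_pow_of_le_one (by norm_num) (by norm_num) (by omega)
            have e3 : (0:ℝ) ≤ (1 - p) ^ i := pow_nonneg (by linarith) _
            have e4 : (0:ℝ) ≤ (2 : ℝ)⁻¹ ^ (n - 1) := by positivity
            have e5 : (0:ℝ) ≤ (1 - p) ^ (n - 1) := pow_nonneg (by linarith) _
            calc p * (1 - p) ^ (n - 1) * (2 : ℝ)⁻¹ ^ (n - 1)
                ≤ p * (1 - p) ^ i * (2 : ℝ)⁻¹ ^ (n - 1 - i) := by
                  apply mul_le_mul (by nlinarith) e2 e4
                    (mul_nonneg hp0.le e3)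
              _ = (1 - p) ^ i * p * (2 : ℝ)⁻¹ ^ (n - 1 - i) := by ring
          exact mul_le_mul_of_nonneg_right hq hA
        have hsum : ε * (1 - LOAux.AA n p t n)
            ≤ ∑ i ∈ Finset.range n, LOAux.qq p i * LOAux.pw n i n * LOAux.AA n p t i := by
          calc ε * (1 - LOAux.AA n p t n)
              = ∑ i ∈ Finset.range n, ε * LOAux.AA n p t i := by
                rw [← Finset.mul_sum, hlastmass t]
            _ ≤ _ := Finset.sum_le_sum hterm
        calc 1 - LOAux.AA n p (t + 1) n
            = 1 - LOAux.AA n p t n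
              - ∑ i ∈ Finset.range n, LOAux.qq p i * LOAux.pw n i n * LOAux.AA n p t i := by
              rw [hstep2]; ring
          _ ≤ (1 - ε) * (1 - LOAux.AA n p t n) := by nlinarith
          _ ≤ (1 - ε) * (1 - ε) ^ t :=
              mul_le_mul_of_nonneg_left ih (by linarith)
          _ = (1 - ε) ^ (t + 1) := by rw [pow_succ]; ring
    -- telescoping
    have htel : ∀ T : ℕ,
        ∑ t ∈ Finset.range T, (1 - LOAux.AA n p t n)
          = LOAux.Phi n p 0 - LOAux.Phi n p T := by
      intro T
      induction T with
      | zero => simp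
      | succ T ih =>
        rw [Finset.sum_range_succ, ih, LOAux.Phi_step hp0 hp1 T (hmass T)]
        ring
    have hPhi_nonneg : ∀ T : ℕ, 0 ≤ LOAux.Phi n p T := fun T =>
      Finset.sum_nonneg fun j _ =>
        mul_nonneg (LOAux.AA_nonneg hp0 hp1 T j) (LOAux.hh_nonneg hp0 hp1 j)
    have hPhi_le : ∀ T : ℕ,
        LOAux.Phi n p T ≤ (∑ k ∈ Finset.range n, LOAux.cc p k) * (1 - ε) ^ T := by
      intro T
      have h2 : LOAux.hh n p n = 0 := by rw [LOAux.hh, if_neg (lt_irrefl n)]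
      have h1 : LOAux.Phi n p T
          = ∑ j ∈ Finset.range n, LOAux.AA n p T j * LOAux.hh n p j := by
        rw [LOAux.Phi, Finset.sum_range_succ, h2, mul_zero, add_zero]
      have h3 : ∑ j ∈ Finset.range n, LOAux.AA n p T j * LOAux.hh n p j
          ≤ ∑ j ∈ Finset.range n,
              LOAux.AA n p T j * (∑ k ∈ Finset.range n, LOAux.cc p k) := by
        apply Finset.sum_le_sum
        intro j hj
        exact mul_le_mul_of_nonneg_left
          (LOAux.hh_le hp0 hp1 (Finset.mem_range.mp hj))
          (LOAux.AA_nonneg hp0 hp1 T j)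
      have h4 : ∑ j ∈ Finset.range n,
            LOAux.AA n p T j * (∑ k ∈ Finset.range n, LOAux.cc p k)
          = (∑ k ∈ Finset.range n, LOAux.cc p k) * (1 - LOAux.AA n p T n) := by
        rw [← Finset.sum_mul, hlastmass T]
        ring
      have h5 : (0:ℝ) ≤ ∑ k ∈ Finset.range n, LOAux.cc p k :=
        Finset.sum_nonneg fun k _ => (LOAux.cc_pos hp0 hp1 k).le
      calc LOAux.Phi n p T
          ≤ (∑ k ∈ Finset.range n, LOAux.cc p k) * (1 - LOAux.AA n p T n) := by
            rw [h1]; rw [← h4] at *; exact h3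
        _ ≤ (∑ k ∈ Finset.range n, LOAux.cc p k) * (1 - ε) ^ T :=
            mul_le_mul_of_nonneg_left (hdecay T) h5
    have hPhi_tendsto : Filter.Tendsto (LOAux.Phi n p) Filter.atTop (nhds 0) := by
      apply squeeze_zero hPhi_nonneg hPhi_le
      have hgeo : Filter.Tendsto (fun T : ℕ => (1 - ε) ^ T) Filter.atTop (nhds 0) :=
        tendsto_pow_atTop_nhds_zero_of_lt_one (by linarith) (by linarith)
      have := hgeo.const_mul (∑ k ∈ Finset.range n, LOAux.cc p k)
      simpa using this
    have hhasSum : HasSum (fun t => 1 - LOAux.AA n p t n) (LOAux.Phi n p 0) := by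
      rw [hasSum_iff_tendsto_nat_of_nonneg hg0]
      have heq : (fun T => ∑ t ∈ Finset.range T, (1 - LOAux.AA n p t n))
          = fun T => LOAux.Phi n p 0 - LOAux.Phi n p T := funext htel
      rw [heq]
      have := Filter.Tendsto.sub
        (tendsto_const_nhds (x := LOAux.Phi n p 0) (f := Filter.atTop)) hPhi_tendsto
      simpa using this
    -- absorbing state
    have habs : ∀ t : ℕ,
        μ ({ω | Y t ω = one} \ {ω | Y (t + 1) ω = one}) = 0 := by
      intro t
      have h1 := hYstep t one one
      have hso : stepProb n p (fun x => (leadingOnes n x : ℝ)) one one = 1 :=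
        LOAux.stepProb_one_one hp0 hp1
      rw [hso, ENNReal.ofReal_one, one_mul] at h1
      have h3 := measure_inter_add_diff (μ := μ) ({ω | Y t ω = one}) (hmY (t + 1) one)
      have h2 : {ω | Y t ω = one} ∩ {ω | Y (t + 1) ω = one}
          = {ω | Y (t + 1) ω = one ∧ Y t ω = one} := by
        ext ω
        simp only [Set.mem_inter_iff, Set.mem_setOf_eq]
        tauto
      rw [h2, h1] at h3
      have hfin : μ {ω | Y t ω = one} ≠ ⊤ := measure_ne_top μ _
      have h4 : μ {ω | Y t ω = one}
            + μ ({ω | Y t ω = one} \ {ω | Y (t + 1) ω = one})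
          = μ {ω | Y t ω = one} + 0 := by rw [add_zero]; exact h3
      exact (ENNReal.add_right_inj hfin).mp h4
    have hmE : ∀ t : ℕ, MeasurableSet {ω | ∀ r ≤ t, Y r ω ≠ one} := by
      intro t
      have hset : {ω | ∀ r ≤ t, Y r ω ≠ one}
          = ⋂ (r : ℕ) (_ : r ≤ t), {ω | Y r ω = one}ᶜ := by
        ext ω
        simp only [Set.mem_setOf_eq, Set.mem_iInter, Set.mem_compl_iff]
      rw [hset]
      exact MeasurableSet.iInter fun r =>
        MeasurableSet.iInter fun _ => (hmY r one).compl
    have hevents : ∀ t : ℕ,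
        μ {ω | ∀ r ≤ t, Y r ω ≠ one} = μ {ω | Y t ω ≠ one} := by
      intro t
      induction t with
      | zero =>
        congr 1
        ext ω
        simp only [Set.mem_setOf_eq, Nat.le_zero, forall_eq]
      | succ t ih =>
        have hset : {ω | ∀ r ≤ t + 1, Y r ω ≠ one}
            = {ω | Y (t + 1) ω ≠ one} ∩ {ω | ∀ r ≤ t, Y r ω ≠ one} := by
          ext ω
          simp only [Set.mem_setOf_eq, Set.mem_inter_iff]
          constructor
          · intro h; exact ⟨h (t + 1) le_rfl, fun r hr => h r (by omega)⟩
          · rintro ⟨h1, h2⟩ r hr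
            by_cases hrt : r = t + 1
            · subst hrt; exact h1
            · exact h2 r (by omega)
        rw [hset]
        have hmD : MeasurableSet {ω | Y (t + 1) ω ≠ one} := (hmY (t + 1) one).compl
        have hmEt : MeasurableSet {ω | ∀ r ≤ t, Y r ω ≠ one} := hmE t
        have hmE' : MeasurableSet {ω | Y t ω ≠ one} := (hmY t one).compl
        have hsub : {ω | ∀ r ≤ t, Y r ω ≠ one} ⊆ {ω | Y t ω ≠ one} :=
          fun ω h => h t le_rfl
        have hdiff0 : μ ({ω | Y t ω ≠ one} \ {ω | ∀ r ≤ t, Y r ω ≠ one}) = 0 := by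
          rw [measure_diff hsub hmEt.nullMeasurableSet (measure_ne_top μ _), ← ih,
            tsub_self]
        have h1 : μ ({ω | Y (t + 1) ω ≠ one} ∩ {ω | Y t ω ≠ one})
            = μ {ω | Y (t + 1) ω ≠ one} := by
          have h3 := measure_inter_add_diff (μ := μ)
            ({ω | Y (t + 1) ω ≠ one}) hmE'
          have h4 : {ω | Y (t + 1) ω ≠ one} \ {ω | Y t ω ≠ one}
              = {ω | Y t ω = one} \ {ω | Y (t + 1) ω = one} := by
            ext ω
            simp only [Set.mem_diff, Set.mem_setOf_eq, not_not]
            tauto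
          rw [h4, habs t, add_zero] at h3
          exact h3
        have h2le : μ ({ω | Y (t + 1) ω ≠ one} ∩ {ω | ∀ r ≤ t, Y r ω ≠ one})
            ≤ μ ({ω | Y (t + 1) ω ≠ one} ∩ {ω | Y t ω ≠ one}) :=
          measure_mono (Set.inter_subset_inter_right _ hsub)
        have h2ge : μ ({ω | Y (t + 1) ω ≠ one} ∩ {ω | Y t ω ≠ one})
            ≤ μ ({ω | Y (t + 1) ω ≠ one} ∩ {ω | ∀ r ≤ t, Y r ω ≠ one}) := by
          have hsub2 : {ω | Y (t + 1) ω ≠ one} ∩ {ω | Y t ω ≠ one}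
              ⊆ ({ω | Y (t + 1) ω ≠ one} ∩ {ω | ∀ r ≤ t, Y r ω ≠ one})
                ∪ ({ω | Y t ω ≠ one} \ {ω | ∀ r ≤ t, Y r ω ≠ one}) := by
            rintro ω ⟨hω1, hω2⟩
            by_cases h : ω ∈ {ω | ∀ r ≤ t, Y r ω ≠ one}
            · exact Or.inl ⟨hω1, h⟩
            · exact Or.inr ⟨hω2, h⟩
          calc μ ({ω | Y (t + 1) ω ≠ one} ∩ {ω | Y t ω ≠ one})
              ≤ μ (({ω | Y (t + 1) ω ≠ one} ∩ {ω | ∀ r ≤ t, Y r ω ≠ one})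
                  ∪ ({ω | Y t ω ≠ one} \ {ω | ∀ r ≤ t, Y r ω ≠ one})) :=
                measure_mono hsub2
            _ ≤ μ ({ω | Y (t + 1) ω ≠ one} ∩ {ω | ∀ r ≤ t, Y r ω ≠ one})
                + μ ({ω | Y t ω ≠ one} \ {ω | ∀ r ≤ t, Y r ω ≠ one}) :=
                measure_union_le _ _
            _ = μ ({ω | Y (t + 1) ω ≠ one} ∩ {ω | ∀ r ≤ t, Y r ω ≠ one}) := by
                rw [hdiff0, add_zero]
        exact le_antisymm (le_trans h2le (le_of_eq h1))
          (le_trans (le_of_eq h1.symm) h2ge)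
    -- the tail probabilities
    have htail : ∀ t : ℕ,
        μ {ω | ∀ r ≤ t, Y r ω ≠ one} = ENNReal.ofReal (1 - LOAux.AA n p t n) := by
      intro t
      rw [hevents t]
      have hc : {ω | Y t ω ≠ one} = {ω | Y t ω = one}ᶜ := rfl
      rw [hc, measure_compl (hmY t one) (measure_ne_top μ _), measure_univ,
        hm t one, hlo_one]
      have huu : LOAux.uu n n = 1 := by rw [LOAux.uu, if_neg (lt_irrefl n)]
      rw [huu, mul_one]
      rw [show ENNReal.ofReal (1 - LOAux.AA n p t n)
          = 1 - ENNReal.ofReal (LOAux.AA n p t n) from by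
        rw [ENNReal.ofReal_sub _ (LOAux.AA_nonneg hp0 hp1 t n), ENNReal.ofReal_one]]
    calc ∑' t : ℕ, μ {ω | ∀ r ≤ t, Y r ω ≠ fun _ => true}
        = ∑' t : ℕ, ENNReal.ofReal (1 - LOAux.AA n p t n) := tsum_congr htail
      _ = ENNReal.ofReal (∑' t : ℕ, (1 - LOAux.AA n p t n)) :=
          (ENNReal.ofReal_tsum_of_nonneg hg0 hhasSum.summable).symm
      _ = ENNReal.ofReal (LOAux.Phi n p 0) := by rw [hhasSum.tsum_eq]
      _ = ENNReal.ofReal ((1 / 2) * ∑ i ∈ Finset.range n, 1 / ((1 - p) ^ i * p)) := by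
          have hcc : ∀ i ∈ Finset.range n,
              LOAux.cc p i = 1 / ((1 - p) ^ i * p) := fun i _ => by
            rw [LOAux.cc, one_div]
          rw [LOAux.Phi_zero hp0 hp1, Finset.sum_congr rfl hcc]
end

section
/- Consider the (1+1) EA with mutation rate p ∈ (0,1) maximizing LeadingOnes : {0,1}^n → ℝ, started with a uniformly random search point. For every i ∈ [0..n−1], the probability that at some time the current search point x of the algorithm satisfies LeadingOnes(x) = i is exactly 1/2. -/
open MeasureTheory Finset
open scoped ENNReal

namespace EAAux



lemma card_filter_val_lt (n k : ℕ) (hk : k ≤ n) :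
    ((univ : Finset (Fin n)).filter (fun m : Fin n => (m : ℕ) < k)).card = k := by
  have : ((univ : Finset (Fin n)).filter (fun m : Fin n => (m : ℕ) < k))
      = (univ : Finset (Fin k)).map ⟨Fin.castLE hk, Fin.castLE_injective hk⟩ := by
    ext m
    simp only [mem_filter, mem_univ, true_and, mem_map, Function.Embedding.coeFn_mk]
    constructor
    · intro hm; exact ⟨⟨m, hm⟩, rfl⟩
    · rintro ⟨a, rfl⟩; exact a.isLt
  rw [this, card_map, card_univ, Fintype.card_fin]

lemma leadingOnes_le (x : Fin n → Bool) : leadingOnes n x ≤ n := by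
  classical
  calc (Finset.univ.filter fun i : Fin n => ∀ j ≤ i, x j = true).card
      ≤ (univ : Finset (Fin n)).card := card_filter_le _ _
    _ = n := by simp

lemma le_leadingOnes_iff {k : ℕ} (hk : k ≤ n) (x : Fin n → Bool) :
    k ≤ leadingOnes n x ↔ ∀ j : Fin n, (j : ℕ) < k → x j = true := by
  classical
  constructor
  · intro h j hj
    by_contra hxj
    have hsub : (Finset.univ.filter fun i : Fin n => ∀ j ≤ i, x j = true)
        ⊆ (univ : Finset (Fin n)).filter (fun m : Fin n => (m : ℕ) < (j : ℕ)) := by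
      intro m hm
      simp only [mem_filter, mem_univ, true_and] at hm ⊢
      by_contra hmj
      push_neg at hmj
      exact hxj (hm j (by exact Fin.le_def.mpr hmj))
    have := card_le_card hsub
    rw [card_filter_val_lt n j (le_of_lt j.isLt)] at this
    have : leadingOnes n x ≤ (j : ℕ) := this
    omega
  · intro h
    have hsub : ((univ : Finset (Fin n)).filter (fun m : Fin n => (m : ℕ) < k))
        ⊆ (Finset.univ.filter fun i : Fin n => ∀ j ≤ i, x j = true) := by
      intro m hm
      simp only [mem_filter, mem_univ, true_and] at hm ⊢
      intro j hj
      exact h j (lt_of_le_of_lt (Fin.le_def.mp hj) hm)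
    have := card_le_card hsub
    rwa [card_filter_val_lt n k hk] at this

lemma leadingOnes_eq_iff {i : ℕ} (hi : i < n) (x : Fin n → Bool) :
    leadingOnes n x = i ↔ (∀ j : Fin n, (j : ℕ) < i → x j = true) ∧ x ⟨i, hi⟩ = false := by
  constructor
  · intro h
    have h1 : ∀ j : Fin n, (j : ℕ) < i → x j = true :=
      (le_leadingOnes_iff (le_of_lt hi) x).mp h.ge
    refine ⟨h1, ?_⟩
    by_contra hx
    have hx' : x ⟨i, hi⟩ = true := by
      cases hxv : x ⟨i, hi⟩ 
      · exact absurd hxv hx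
      · rfl
    have : i + 1 ≤ leadingOnes n x := by
      rw [le_leadingOnes_iff hi x]
      intro j hj
      rcases lt_or_eq_of_le (Nat.lt_succ_iff.mp hj) with h' | h'
      · exact h1 j h'
      · have : j = ⟨i, hi⟩ := Fin.ext h'
        rw [this]; exact hx'
    omega
  · rintro ⟨h1, h2⟩
    have hge : i ≤ leadingOnes n x := (le_leadingOnes_iff (le_of_lt hi) x).mpr h1
    have hlt : ¬ (i + 1 ≤ leadingOnes n x) := by
      intro h
      rcases le_or_gt (i+1) n with hn | hn
      · have := (le_leadingOnes_iff hn x).mp h ⟨i, hi⟩ (by simp)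
        rw [h2] at this; exact Bool.false_ne_true this
      · have := leadingOnes_le x; omega
    omega

lemma leadingOnes_eq_n_iff (x : Fin n → Bool) :
    leadingOnes n x = n ↔ ∀ j, x j = true := by
  constructor
  · intro h j
    exact (le_leadingOnes_iff le_rfl x).mp h.ge j j.isLt
  · intro h
    have := (le_leadingOnes_iff le_rfl x).mpr (fun j _ => h j)
    have := leadingOnes_le x
    omega


variable {n : ℕ} {p : ℝ}

def flip (k : Fin n) (x : Fin n → Bool) : Fin n → Bool :=
  Function.update x k (!x k)

lemma flip_apply_self (k : Fin n) (x : Fin n → Bool) : flip k x k = !x k := by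
  simp [flip]

lemma flip_apply_ne (k : Fin n) (x : Fin n → Bool) {j : Fin n} (h : j ≠ k) :
    flip k x j = x j := by
  simp [flip, Function.update_of_ne h]

lemma flip_flip (k : Fin n) (x : Fin n → Bool) : flip k (flip k x) = x := by
  funext j
  by_cases h : j = k
  · subst h; simp [flip]
  · rw [flip_apply_ne k _ h, flip_apply_ne k _ h]

lemma flip_injective (k : Fin n) : Function.Injective (flip k) := by
  intro a b h
  have := congrArg (flip k) h
  rwa [flip_flip, flip_flip] at this

lemma mutProb_eq_prod (hp0 : 0 < p) (hp1 : p < 1) (x y : Fin n → Bool) :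
    mutProb n p x y = ∏ j : Fin n, (if x j = y j then 1 - p else p) := by
  classical
  rw [Finset.prod_ite, Finset.prod_const, Finset.prod_const]
  have hd : hammingDist x y = (univ.filter fun j : Fin n => ¬ x j = y j).card := rfl
  have hc : (univ.filter fun j : Fin n => x j = y j).card
      = n - hammingDist x y := by
    have := Finset.card_filter_add_card_filter_not
      (s := (univ : Finset (Fin n))) (p := fun j : Fin n => x j = y j)
    simp only [card_univ, Fintype.card_fin] at this
    omega
  rw [hc, ← hd, mutProb]
  ring

lemma mutProb_nonneg (hp0 : 0 < p) (hp1 : p < 1) (x y : Fin n → Bool) :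
    0 ≤ mutProb n p x y :=
  mul_nonneg (pow_nonneg hp0.le _) (pow_nonneg (by linarith) _)

lemma mutProb_flip (hp0 : 0 < p) (hp1 : p < 1) (k : Fin n) (x y : Fin n → Bool) :
    mutProb n p (flip k x) y = mutProb n p x (flip k y) := by
  rw [mutProb_eq_prod hp0 hp1, mutProb_eq_prod hp0 hp1]
  apply Finset.prod_congr rfl
  intro j _
  by_cases h : j = k
  · subst h
    simp only [flip_apply_self]
    cases x j <;> cases y j <;> simp
  · rw [flip_apply_ne k _ h, flip_apply_ne k _ h]

lemma sum_mutProb (hp0 : 0 < p) (hp1 : p < 1) (x : Fin n → Bool) :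
    ∑ y : Fin n → Bool, mutProb n p x y = 1 := by
  classical
  have : ∀ y, mutProb n p x y = ∏ j : Fin n, (if x j = y j then 1 - p else p) :=
    mutProb_eq_prod hp0 hp1 x
  simp only [this]
  have := Finset.prod_univ_sum (fun _ : Fin n => (univ : Finset Bool))
    (fun j b => if x j = b then 1 - p else p)
  rw [Fintype.piFinset_univ] at this
  rw [← this]
  have : ∀ j : Fin n, (∑ b : Bool, (if x j = b then 1 - p else p)) = 1 := by
    intro j
    cases hx : x j <;> simp [Fintype.sum_bool]
  rw [Finset.prod_congr rfl (fun j _ => this j), Finset.prod_const_one]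

lemma mutProb_ge (hp0 : 0 < p) (hp1 : p < 1) (x y : Fin n → Bool) :
    (min p (1 - p)) ^ n ≤ mutProb n p x y := by
  have h0 : 0 < min p (1 - p) := lt_min hp0 (by linarith)
  have hd : hammingDist x y ≤ n := by
    have := hammingDist_le_card_fintype (x := x) (y := y)
    simpa using this
  calc (min p (1-p)) ^ n = (min p (1-p)) ^ (hammingDist x y) * (min p (1-p)) ^ (n - hammingDist x y) := by
        rw [← pow_add]; congr 1; omega
    _ ≤ mutProb n p x y := by
        apply mul_le_mul
        · exact pow_le_pow_left₀ h0.le (min_le_left _ _) _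
        · exact pow_le_pow_left₀ h0.le (min_le_right _ _) _
        · exact pow_nonneg h0.le _
        · exact pow_nonneg hp0.le _


variable {n : ℕ} {p : ℝ}

/-- the fitness function -/
noncomputable def F (n : ℕ) : (Fin n → Bool) → ℝ := fun x => (leadingOnes n x : ℝ)

/-- selection -/
noncomputable def sel (x y : Fin n → Bool) : Fin n → Bool :=
  if F n x ≤ F n y then y else x

lemma F_le_iff (x y : Fin n → Bool) : F n x ≤ F n y ↔ leadingOnes n x ≤ leadingOnes n y :=
  Nat.cast_le

lemma stepProb_def (x z : Fin n → Bool) :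
    stepProb n p (F n) x z
      = ∑ y : Fin n → Bool, if sel x y = z then mutProb n p x y else 0 := rfl

variable {i : ℕ}

lemma lo_flip (hi : i < n) {x : Fin n → Bool} (hx : leadingOnes n x < i) :
    leadingOnes n (flip ⟨i, hi⟩ x) = leadingOnes n x := by
  set L := leadingOnes n x with hL
  have hLn : L < n := lt_trans hx hi
  have hch := (leadingOnes_eq_iff hLn x).mp rfl
  rw [leadingOnes_eq_iff hLn]
  constructor
  · intro j hj
    rw [flip_apply_ne _ _ (by intro h; rw [h] at hj; simp at hj; omega)]
    exact hch.1 j hj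
  · rw [flip_apply_ne _ _ (by intro h; have := congrArg Fin.val h; simp at this; omega)]
    exact hch.2

lemma lo_flip_eq_iff (hi : i < n) (y : Fin n → Bool) :
    leadingOnes n y = i ↔ i + 1 ≤ leadingOnes n (flip ⟨i, hi⟩ y) := by
  rw [leadingOnes_eq_iff hi, le_leadingOnes_iff hi]
  constructor
  · rintro ⟨h1, h2⟩ j hj
    rcases Nat.lt_succ_iff_lt_or_eq.mp hj with h | h
    · rw [flip_apply_ne _ _ (by intro hc; rw [hc] at h; simp at h)]
      exact h1 j h
    · have : j = ⟨i, hi⟩ := Fin.ext h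
      rw [this, flip_apply_self, h2]; rfl
  · intro h
    constructor
    · intro j hj
      have := h j (by omega)
      rwa [flip_apply_ne _ _ (by intro hc; rw [hc] at hj; simp at hj)] at this
    · have := h ⟨i, hi⟩ (by simp)
      rw [flip_apply_self] at this
      cases hy : y ⟨i, hi⟩
      · rfl
      · rw [hy] at this; simp at this

lemma flip_bij_eq_ge (hi : i < n) :
    ∀ y : Fin n → Bool, leadingOnes n y = i ↔ i + 1 ≤ leadingOnes n (flip ⟨i, hi⟩ y) :=
  lo_flip_eq_iff hi

lemma stepProb_eq_zero (x z : Fin n → Bool)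
    (h : leadingOnes n z < leadingOnes n x) : stepProb n p (F n) x z = 0 := by
  rw [stepProb_def]
  apply Finset.sum_eq_zero
  intro y _
  rw [if_neg]
  intro hc
  unfold sel at hc
  by_cases hxy : F n x ≤ F n y
  · rw [if_pos hxy] at hc
    subst hc
    rw [F_le_iff] at hxy
    omega
  · rw [if_neg hxy] at hc
    subst hc
    omega

lemma sum_stepProb_filter (P : (Fin n → Bool) → Prop) [DecidablePred P] (x : Fin n → Bool) :
    ∑ z ∈ univ.filter P, stepProb n p (F n) x z
      = ∑ y : Fin n → Bool, if P (sel x y) then mutProb n p x y else 0 := by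
  simp only [stepProb_def]
  rw [Finset.sum_comm]
  apply Finset.sum_congr rfl
  intro y _
  rw [Finset.sum_ite_eq (univ.filter P) (sel x y) (fun _ => mutProb n p x y)]
  simp [Finset.mem_filter]

lemma sum_stepProb (hp0 : 0 < p) (hp1 : p < 1) (x : Fin n → Bool) :
    ∑ z : Fin n → Bool, stepProb n p (F n) x z = 1 := by
  have := sum_stepProb_filter (p := p) (fun _ : Fin n → Bool => True) x
  simpa [sum_mutProb hp0 hp1 x] using this

lemma stepProb_nonneg (hp0 : 0 < p) (hp1 : p < 1) (x z : Fin n → Bool) :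
    0 ≤ stepProb n p (F n) x z := by
  rw [stepProb_def]
  apply Finset.sum_nonneg
  intro y _
  split
  · exact mutProb_nonneg hp0 hp1 x y
  · exact le_refl 0

lemma stepProb_ones (hp0 : 0 < p) (hp1 : p < 1) (x : Fin n → Bool) :
    (min p (1 - p)) ^ n ≤ stepProb n p (F n) x (fun _ => true) := by
  rw [stepProb_def]
  have hmem : (fun _ : Fin n => true) ∈ (univ : Finset (Fin n → Bool)) := mem_univ _
  have hsel : sel x (fun _ : Fin n => true) = (fun _ : Fin n => true) := by
    unfold sel
    rw [if_pos]
    rw [F_le_iff, (leadingOnes_eq_n_iff (fun _ : Fin n => true)).mpr (fun _ => rfl)]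
    exact leadingOnes_le x
  have hnn : ∀ y ∈ (univ : Finset (Fin n → Bool)),
      0 ≤ (if sel x y = (fun _ : Fin n => true) then mutProb n p x y else 0) := by
    intro y _
    split
    · exact mutProb_nonneg hp0 hp1 x y
    · exact le_refl 0
  have h1 := Finset.single_le_sum hnn (mem_univ (fun _ : Fin n => true))
  rw [if_pos hsel] at h1
  exact le_trans (mutProb_ge hp0 hp1 x _) h1

def flipE (k : Fin n) : (Fin n → Bool) ≃ (Fin n → Bool) :=
  ⟨flip k, flip k, flip_flip k, flip_flip k⟩

lemma lo_sel_eq_iff {x : Fin n → Bool} (hx : leadingOnes n x < i) (y : Fin n → Bool) :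
    (leadingOnes n (sel x y) = i) ↔ (leadingOnes n y = i) := by
  unfold sel
  by_cases h : F n x ≤ F n y
  · rw [if_pos h]
  · rw [if_neg h]
    rw [F_le_iff] at h
    constructor
    · intro hc; omega
    · intro hc; omega

lemma lo_sel_ge_iff {x : Fin n → Bool} (hx : leadingOnes n x < i) (y : Fin n → Bool) :
    (i ≤ leadingOnes n (sel x y)) ↔ (i ≤ leadingOnes n y) := by
  unfold sel
  by_cases h : F n x ≤ F n y
  · rw [if_pos h]
  · rw [if_neg h]
    rw [F_le_iff] at h
    constructor
    · intro hc; omega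
    · intro hc; omega

lemma sum_stepProb_eq_i [DecidablePred (fun z : Fin n → Bool => leadingOnes n z = i)]
    {x : Fin n → Bool} (hx : leadingOnes n x < i) :
    ∑ z ∈ univ.filter (fun z : Fin n → Bool => leadingOnes n z = i), stepProb n p (F n) x z
      = ∑ y ∈ univ.filter (fun y : Fin n → Bool => leadingOnes n y = i), mutProb n p x y := by
  classical
  rw [sum_stepProb_filter, Finset.sum_filter]
  apply Finset.sum_congr rfl
  intro y _
  rw [if_congr (lo_sel_eq_iff hx y) rfl rfl]

lemma sum_stepProb_ge_i [DecidablePred (fun z : Fin n → Bool => i ≤ leadingOnes n z)]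
    {x : Fin n → Bool} (hx : leadingOnes n x < i) :
    ∑ z ∈ univ.filter (fun z : Fin n → Bool => i ≤ leadingOnes n z), stepProb n p (F n) x z
      = ∑ y ∈ univ.filter (fun y : Fin n → Bool => i ≤ leadingOnes n y), mutProb n p x y := by
  classical
  rw [sum_stepProb_filter, Finset.sum_filter]
  apply Finset.sum_congr rfl
  intro y _
  rw [if_congr (lo_sel_ge_iff hx y) rfl rfl]

lemma mut_sum_flip (hp0 : 0 < p) (hp1 : p < 1) (hi : i < n) (x : Fin n → Bool) :
    ∑ y ∈ univ.filter (fun y : Fin n → Bool => i + 1 ≤ leadingOnes n y), mutProb n p x y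
      = ∑ y ∈ univ.filter (fun y : Fin n → Bool => leadingOnes n y = i),
          mutProb n p (flip ⟨i, hi⟩ x) y := by
  classical
  rw [Finset.sum_filter, Finset.sum_filter]
  apply Fintype.sum_equiv (flipE ⟨i, hi⟩)
  intro y
  rw [show ⇑(flipE ⟨i, hi⟩) = flip ⟨i, hi⟩ from rfl]
  have hcond : (leadingOnes n (flip ⟨i, hi⟩ y) = i) ↔ (i + 1 ≤ leadingOnes n y) := by
    rw [lo_flip_eq_iff hi, flip_flip]
  have hval : mutProb n p (flip ⟨i, hi⟩ x) (flip ⟨i, hi⟩ y) = mutProb n p x y := by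
    rw [mutProb_flip hp0 hp1, flip_flip]
  rw [if_congr hcond hval rfl]

lemma pairing (hp0 : 0 < p) (hp1 : p < 1) (hi : i < n) (x : Fin n → Bool) :
    ∑ y ∈ univ.filter (fun y : Fin n → Bool => i ≤ leadingOnes n y), mutProb n p x y
      = (∑ y ∈ univ.filter (fun y : Fin n → Bool => leadingOnes n y = i), mutProb n p x y)
        + ∑ y ∈ univ.filter (fun y : Fin n → Bool => leadingOnes n y = i),
            mutProb n p (flip ⟨i, hi⟩ x) y := by
  classical
  have hsplit : (univ.filter (fun y : Fin n → Bool => i ≤ leadingOnes n y))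
      = (univ.filter (fun y : Fin n → Bool => leadingOnes n y = i))
        ∪ (univ.filter (fun y : Fin n → Bool => i + 1 ≤ leadingOnes n y)) := by
    ext y
    simp only [mem_filter, mem_univ, true_and, mem_union]
    omega
  have hdisj : Disjoint (univ.filter (fun y : Fin n → Bool => leadingOnes n y = i))
      (univ.filter (fun y : Fin n → Bool => i + 1 ≤ leadingOnes n y)) := by
    rw [Finset.disjoint_filter]
    intro y _ h1
    omega
  rw [hsplit, Finset.sum_union hdisj, mut_sum_flip hp0 hp1 hi x]

lemma sel_flip {x y z : Fin n → Bool} (hi : i < n) (hx : leadingOnes n x < i)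
    (hz : leadingOnes n z < i) (h : sel x y = z) :
    sel (flip ⟨i, hi⟩ x) (flip ⟨i, hi⟩ y) = flip ⟨i, hi⟩ z := by
  unfold sel at h ⊢
  by_cases hxy : F n x ≤ F n y
  · rw [if_pos hxy] at h
    subst h
    rw [if_pos]
    rw [F_le_iff, lo_flip hi hx, lo_flip hi hz]
    exact (F_le_iff x y).mp hxy
  · rw [if_neg hxy] at h
    subst h
    rw [if_neg]
    rw [F_le_iff] at hxy
    rw [F_le_iff, lo_flip hi hx, lo_flip hi (by omega : leadingOnes n y < i)]
    omega

lemma sel_flip_iff {x y z : Fin n → Bool} (hi : i < n) (hx : leadingOnes n x < i)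
    (hz : leadingOnes n z < i) :
    sel (flip ⟨i, hi⟩ x) (flip ⟨i, hi⟩ y) = flip ⟨i, hi⟩ z ↔ sel x y = z := by
  constructor
  · intro h
    have hx' : leadingOnes n (flip ⟨i, hi⟩ x) < i := by rw [lo_flip hi hx]; exact hx
    have hz' : leadingOnes n (flip ⟨i, hi⟩ z) < i := by rw [lo_flip hi hz]; exact hz
    have := sel_flip hi hx' hz' h
    rwa [flip_flip, flip_flip, flip_flip] at this
  · exact sel_flip hi hx hz

lemma stepProb_flip (hp0 : 0 < p) (hp1 : p < 1) {x z : Fin n → Bool} (hi : i < n)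
    (hx : leadingOnes n x < i) (hz : leadingOnes n z < i) :
    stepProb n p (F n) (flip ⟨i, hi⟩ x) (flip ⟨i, hi⟩ z) = stepProb n p (F n) x z := by
  rw [stepProb_def, stepProb_def]
  apply Fintype.sum_equiv (flipE ⟨i, hi⟩)
  intro y
  rw [show ⇑(flipE ⟨i, hi⟩) = flip ⟨i, hi⟩ from rfl]
  have hcond : (sel (flip ⟨i, hi⟩ x) y = flip ⟨i, hi⟩ z) ↔ (sel x (flip ⟨i, hi⟩ y) = z) := by
    have := sel_flip_iff (y := flip ⟨i, hi⟩ y) hi hx hz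
    rwa [flip_flip] at this
  rw [if_congr hcond (mutProb_flip hp0 hp1 ⟨i, hi⟩ x y) rfl]

lemma lo_eq_n_iff_ones (z : Fin n → Bool) :
    leadingOnes n z = n ↔ z = (fun _ => true) := by
  rw [leadingOnes_eq_n_iff]
  constructor
  · intro h; funext j; exact h j
  · intro h; rw [h]; intro j; rfl



lemma lo_flip_lt_iff {i : ℕ} (hi : i < n) (z : Fin n → Bool) :
    leadingOnes n (flip ⟨i, hi⟩ z) < i ↔ leadingOnes n z < i := by
  constructor
  · intro h
    have := lo_flip hi h
    rw [flip_flip] at this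
    omega
  · intro h; rw [lo_flip hi h]; exact h

lemma sum_flip_ge {M : Type*} [AddCommMonoid M] {i : ℕ} (hi : i < n)
    (g : (Fin n → Bool) → M) :
    ∑ y ∈ univ.filter (fun y : Fin n → Bool => i + 1 ≤ leadingOnes n y), g y
      = ∑ y ∈ univ.filter (fun y : Fin n → Bool => leadingOnes n y = i),
          g (flip ⟨i, hi⟩ y) := by
  classical
  rw [Finset.sum_filter, Finset.sum_filter]
  apply Fintype.sum_equiv (flipE ⟨i, hi⟩)
  intro y
  rw [show ⇑(flipE ⟨i, hi⟩) = flip ⟨i, hi⟩ from rfl]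
  have hcond : (leadingOnes n (flip ⟨i, hi⟩ y) = i) ↔ (i + 1 ≤ leadingOnes n y) := by
    rw [lo_flip_eq_iff hi, flip_flip]
  rw [if_congr hcond (by rw [flip_flip]) rfl]

lemma lo_ones : leadingOnes n (fun _ => true) = n :=
  (leadingOnes_eq_n_iff _).mpr (fun _ => rfl)

lemma lo_lt_n_of_ne_ones {z : Fin n → Bool} (hz : z ≠ (fun _ => true)) :
    leadingOnes n z < n :=
  lt_of_le_of_ne (leadingOnes_le z) (fun h => hz ((lo_eq_n_iff_ones z).mp h))

section Meas
variable {Ω : Type*} [MeasurableSpace Ω] (μ : Measure Ω)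
variable {n : ℕ} {p : ℝ} (Y : ℕ → Ω → Fin n → Bool)

lemma measure_pred (hm : ∀ t, Measurable (Y t)) (t : ℕ)
    (P : (Fin n → Bool) → Prop) [DecidablePred P] :
    μ {ω | P (Y t ω)} = ∑ x ∈ univ.filter P, μ {ω | Y t ω = x} := by
  have hset : {ω | P (Y t ω)} = ⋃ x ∈ univ.filter P, {ω | Y t ω = x} := by
    ext ω
    simp only [Set.mem_setOf_eq, Set.mem_iUnion, mem_filter, mem_univ, true_and]
    constructor
    · intro h; exact ⟨Y t ω, h, rfl⟩
    · rintro ⟨x, hx, h⟩; rw [h]; exact hx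
  rw [hset, measure_biUnion_finset]
  · intro a _ b _ hab
    simp only [Function.onFun]
    apply Set.disjoint_left.mpr
    intro ω ha hb
    simp only [Set.mem_setOf_eq] at ha hb
    exact hab (ha.symm.trans hb)
  · intro x _
    exact (hm t) (measurableSet_singleton x)

lemma measure_pred_pair (hm : ∀ t, Measurable (Y t)) {f : (Fin n → Bool) → ℝ}
    (hnn : ∀ x z, 0 ≤ stepProb n p f x z)
    (hstep : ∀ (t : ℕ) (x z : Fin n → Bool),
      μ {ω | Y (t + 1) ω = z ∧ Y t ω = x}
        = ENNReal.ofReal (stepProb n p f x z) * μ {ω | Y t ω = x})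
    (t : ℕ) (P Q : (Fin n → Bool) → Prop) [DecidablePred P] [DecidablePred Q] :
    μ {ω | P (Y t ω) ∧ Q (Y (t + 1) ω)}
      = ∑ x ∈ univ.filter P,
          ENNReal.ofReal (∑ z ∈ univ.filter Q, stepProb n p f x z)
            * μ {ω | Y t ω = x} := by
  classical
  have hset : {ω | P (Y t ω) ∧ Q (Y (t + 1) ω)}
      = ⋃ q ∈ (univ.filter P) ×ˢ (univ.filter Q),
          {ω | Y (t + 1) ω = q.2 ∧ Y t ω = q.1} := by
    ext ω
    simp only [Set.mem_setOf_eq, Set.mem_iUnion, Finset.mem_product, mem_filter,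
      mem_univ, true_and]
    constructor
    · rintro ⟨h1, h2⟩; exact ⟨(Y t ω, Y (t + 1) ω), ⟨h1, h2⟩, rfl, rfl⟩
    · rintro ⟨⟨x, z⟩, ⟨hx, hz⟩, h1, h2⟩
      rw [h2, h1]; exact ⟨hx, hz⟩
  rw [hset, measure_biUnion_finset]
  · rw [Finset.sum_product]
    apply Finset.sum_congr rfl
    intro x _
    have : ∀ z ∈ univ.filter Q, μ {ω | Y (t + 1) ω = z ∧ Y t ω = x}
        = ENNReal.ofReal (stepProb n p f x z) * μ {ω | Y t ω = x} :=
      fun z _ => hstep t x z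
    rw [Finset.sum_congr rfl this, ← Finset.sum_mul,
      ← ENNReal.ofReal_sum_of_nonneg (fun z _ => hnn x z)]
  · intro a _ b _ hab
    simp only [Function.onFun]
    apply Set.disjoint_left.mpr
    intro ω ha hb
    simp only [Set.mem_setOf_eq] at ha hb
    exact hab (Prod.ext (ha.2.symm.trans hb.2) (ha.1.symm.trans hb.1))
  · intro q _
    exact ((hm (t + 1)) (measurableSet_singleton q.2)).inter
      ((hm t) (measurableSet_singleton q.1))

lemma measure_evol (hm : ∀ t, Measurable (Y t)) {f : (Fin n → Bool) → ℝ}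
    (hnn : ∀ x z, 0 ≤ stepProb n p f x z)
    (hstep : ∀ (t : ℕ) (x z : Fin n → Bool),
      μ {ω | Y (t + 1) ω = z ∧ Y t ω = x}
        = ENNReal.ofReal (stepProb n p f x z) * μ {ω | Y t ω = x})
    (t : ℕ) (x : Fin n → Bool) :
    μ {ω | Y (t + 1) ω = x}
      = ∑ z : Fin n → Bool,
          ENNReal.ofReal (stepProb n p f z x) * μ {ω | Y t ω = z} := by
  classical
  have h := measure_pred_pair μ Y hm hnn hstep t (fun _ => True) (fun z => z = x)
  have hset : {ω | (fun _ : Fin n → Bool => True) (Y t ω) ∧ (fun z => z = x) (Y (t + 1) ω)}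
      = {ω | Y (t + 1) ω = x} := by
    ext ω; simp
  rw [hset] at h
  rw [h]
  have hfq : (univ.filter fun z : Fin n → Bool => z = x) = {x} := by
    ext z; simp
  apply Finset.sum_congr
  · ext z; simp
  · intro z _
    rw [hfq, Finset.sum_singleton]

end Meas

section Decomp
variable {Ω : Type*} [MeasurableSpace Ω] (μ : Measure Ω)
variable {n : ℕ} (Y : ℕ → Ω → Fin n → Bool)

lemma decomp (hm : ∀ t, Measurable (Y t))
    (N : Set Ω) (hNm : MeasurableSet N) (hN : μ N = 0)
    (hmono : ∀ ω, ω ∉ N → ∀ t, leadingOnes n (Y t ω) ≤ leadingOnes n (Y (t + 1) ω))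
    (i : ℕ) (P : ℕ → Prop) [DecidablePred P]
    (hP2 : ∀ k l, ¬ P k → P l → k ≤ l → k < i)
    (hP3 : ∀ k l, P k → k ≤ l → i ≤ l) :
    μ {ω | ∃ t, P (leadingOnes n (Y t ω))}
      = μ {ω | P (leadingOnes n (Y 0 ω))}
        + ∑' t : ℕ, μ {ω | leadingOnes n (Y t ω) < i
            ∧ P (leadingOnes n (Y (t + 1) ω))} := by
  classical
  have hchain : ∀ ω, ω ∉ N → ∀ s t, s ≤ t →
      leadingOnes n (Y s ω) ≤ leadingOnes n (Y t ω) := by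
    intro ω hω s t hst
    induction t, hst using Nat.le_induction with
    | base => exact le_rfl
    | succ t hst ih => exact le_trans ih (hmono ω hω t)
  set F : ℕ → Set Ω := fun k =>
    Nat.casesOn k ({ω | P (leadingOnes n (Y 0 ω))} ∩ Nᶜ)
      (fun t => {ω | leadingOnes n (Y t ω) < i
          ∧ P (leadingOnes n (Y (t + 1) ω))} ∩ Nᶜ) with hF
  have hSmeas : ∀ (t : ℕ) (S : Set (Fin n → Bool)), MeasurableSet ((Y t) ⁻¹' S) :=
    fun t S => (hm t) MeasurableSet.of_discrete
  have hFmeas : ∀ k, MeasurableSet (F k) := by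
    intro k
    cases k with
    | zero =>
      exact (hSmeas 0 {x | P (leadingOnes n x)}).inter hNm.compl
    | succ t =>
      exact (((hSmeas t {x | leadingOnes n x < i}).inter
        (hSmeas (t + 1) {x | P (leadingOnes n x)}))).inter hNm.compl
  have key : ∀ k l, k < l → Disjoint (F k) (F l) := by
    intro k l hlt
    apply Set.disjoint_left.mpr
    intro ω hk hl
    obtain ⟨l', rfl⟩ : ∃ l', l = l' + 1 := ⟨l - 1, by omega⟩
    have hl' : ω ∈ {ω | leadingOnes n (Y l' ω) < i
        ∧ P (leadingOnes n (Y (l' + 1) ω))} ∩ Nᶜ := hl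
    have hωN : ω ∉ N := hl'.2
    have hlow : leadingOnes n (Y l' ω) < i := hl'.1.1
    cases k with
    | zero =>
      have hk' : ω ∈ {ω | P (leadingOnes n (Y 0 ω))} ∩ Nᶜ := hk
      have := hP3 _ _ hk'.1 (hchain ω hωN 0 l' (by omega))
      omega
    | succ k' =>
      have hk' : ω ∈ {ω | leadingOnes n (Y k' ω) < i
          ∧ P (leadingOnes n (Y (k' + 1) ω))} ∩ Nᶜ := hk
      have := hP3 _ _ hk'.1.2 (hchain ω hωN (k' + 1) l' (by omega))
      omega
  have hFdisj : Pairwise (Function.onFun Disjoint F) := by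
    intro k l hkl
    rcases lt_or_gt_of_ne hkl with h | h
    · exact key k l h
    · exact (key l k h).symm
  have hFunion : (⋃ k, F k) = {ω | ∃ t, P (leadingOnes n (Y t ω))} ∩ Nᶜ := by
    ext ω
    simp only [Set.mem_iUnion, Set.mem_inter_iff, Set.mem_setOf_eq]
    constructor
    · rintro ⟨k, hωk⟩
      cases k with
      | zero =>
        have h' : ω ∈ {ω | P (leadingOnes n (Y 0 ω))} ∩ Nᶜ := hωk
        exact ⟨⟨0, h'.1⟩, h'.2⟩
      | succ t =>
        have h' : ω ∈ {ω | leadingOnes n (Y t ω) < i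
            ∧ P (leadingOnes n (Y (t + 1) ω))} ∩ Nᶜ := hωk
        exact ⟨⟨t + 1, h'.1.2⟩, h'.2⟩
    · rintro ⟨⟨t, ht⟩, hωN⟩
      have hex : ∃ t, P (leadingOnes n (Y t ω)) := ⟨t, ht⟩
      set t0 := Nat.find hex with ht0
      have hPt0 : P (leadingOnes n (Y t0 ω)) := Nat.find_spec hex
      cases ht0v : t0 with
      | zero =>
        refine ⟨0, ?_, hωN⟩
        rw [ht0v] at hPt0; exact hPt0
      | succ s =>
        refine ⟨s + 1, ⟨?_, ?_⟩, hωN⟩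
        · have hnot : ¬ P (leadingOnes n (Y s ω)) := Nat.find_min hex (by omega)
          have hle : leadingOnes n (Y s ω) ≤ leadingOnes n (Y (s + 1) ω) :=
            hmono ω hωN s
          rw [ht0v] at hPt0
          exact hP2 _ _ hnot hPt0 hle
        · rw [ht0v] at hPt0; exact hPt0
  have hNc : μ (Nᶜᶜ) = 0 := by rwa [compl_compl]
  calc μ {ω | ∃ t, P (leadingOnes n (Y t ω))}
      = μ ({ω | ∃ t, P (leadingOnes n (Y t ω))} ∩ Nᶜ) :=
        (measure_inter_conull hNc).symm
    _ = μ (⋃ k, F k) := by rw [hFunion]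
    _ = ∑' k, μ (F k) := measure_iUnion hFdisj hFmeas
    _ = μ (F 0) + ∑' t, μ (F (t + 1)) := tsum_eq_zero_add' ENNReal.summable
    _ = μ {ω | P (leadingOnes n (Y 0 ω))}
        + ∑' t : ℕ, μ {ω | leadingOnes n (Y t ω) < i
            ∧ P (leadingOnes n (Y (t + 1) ω))} := by
        rw [show μ (F 0) = μ {ω | P (leadingOnes n (Y 0 ω))} from
          measure_inter_conull hNc]
        congr 1
        apply tsum_congr
        intro t
        exact measure_inter_conull hNc

end Decomp

section Null
variable {Ω : Type*} [MeasurableSpace Ω] (μ : Measure Ω)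
variable {n : ℕ} {p : ℝ} (Y : ℕ → Ω → Fin n → Bool)

lemma nmon_aux (hm : ∀ t, Measurable (Y t)) {f : (Fin n → Bool) → ℝ}
    (hzero : ∀ x z : Fin n → Bool,
      leadingOnes n z < leadingOnes n x → stepProb n p f x z = 0)
    (hstep : ∀ (t : ℕ) (x z : Fin n → Bool),
      μ {ω | Y (t + 1) ω = z ∧ Y t ω = x}
        = ENNReal.ofReal (stepProb n p f x z) * μ {ω | Y t ω = x}) :
    MeasurableSet {ω | ∃ t, leadingOnes n (Y (t + 1) ω) < leadingOnes n (Y t ω)}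
      ∧ μ {ω | ∃ t, leadingOnes n (Y (t + 1) ω) < leadingOnes n (Y t ω)} = 0 := by
  classical
  have hset : ∀ t : ℕ, {ω | leadingOnes n (Y (t + 1) ω) < leadingOnes n (Y t ω)}
      = ⋃ q ∈ (univ ×ˢ univ).filter
          (fun q : (Fin n → Bool) × (Fin n → Bool) => leadingOnes n q.2 < leadingOnes n q.1),
          {ω | Y (t + 1) ω = q.2 ∧ Y t ω = q.1} := by
    intro t
    ext ω
    simp only [Set.mem_setOf_eq, Set.mem_iUnion, mem_filter, Finset.mem_product,
      mem_univ, true_and, and_true]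
    constructor
    · intro h; exact ⟨(Y t ω, Y (t + 1) ω), h, rfl, rfl⟩
    · rintro ⟨⟨x, z⟩, hlt, h1, h2⟩; rw [h1, h2]; exact hlt
  have hmeas : ∀ t : ℕ,
      MeasurableSet {ω | leadingOnes n (Y (t + 1) ω) < leadingOnes n (Y t ω)} := by
    intro t
    rw [hset t]
    apply Finset.measurableSet_biUnion
    intro q _
    exact ((hm (t + 1)) (measurableSet_singleton q.2)).inter
      ((hm t) (measurableSet_singleton q.1))
  have hnull : ∀ t : ℕ,
      μ {ω | leadingOnes n (Y (t + 1) ω) < leadingOnes n (Y t ω)} = 0 := by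
    intro t
    rw [hset t]
    refine le_antisymm (le_trans (measure_biUnion_finset_le _ _)
      (le_of_eq (Finset.sum_eq_zero ?_))) zero_le
    intro q hq
    simp only [mem_filter, Finset.mem_product, mem_univ, true_and, and_true] at hq
    rw [hstep t q.1 q.2, hzero q.1 q.2 hq]
    simp
  have huni : {ω | ∃ t, leadingOnes n (Y (t + 1) ω) < leadingOnes n (Y t ω)}
      = ⋃ t : ℕ, {ω | leadingOnes n (Y (t + 1) ω) < leadingOnes n (Y t ω)} := by
    ext ω; simp
  constructor
  · rw [huni]; exact MeasurableSet.iUnion hmeas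
  · rw [huni]; exact measure_iUnion_null hnull

lemma nall_null [IsProbabilityMeasure μ] (hm : ∀ t, Measurable (Y t))
    {f : (Fin n → Bool) → ℝ} {c : ℝ} (hc : 0 < c) (hc1 : c ≤ 1)
    (hnn : ∀ x z : Fin n → Bool, 0 ≤ stepProb n p f x z)
    (hsum : ∀ x : Fin n → Bool, ∑ z : Fin n → Bool, stepProb n p f x z = 1)
    (hones : ∀ x : Fin n → Bool, c ≤ stepProb n p f x (fun _ => true))
    (hzero1 : ∀ z : Fin n → Bool, z ≠ (fun _ => true) →
      stepProb n p f (fun _ => true) z = 0)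
    (hstep : ∀ (t : ℕ) (x z : Fin n → Bool),
      μ {ω | Y (t + 1) ω = z ∧ Y t ω = x}
        = ENNReal.ofReal (stepProb n p f x z) * μ {ω | Y t ω = x}) :
    μ {ω | ∀ t, Y t ω ≠ (fun _ => true)} = 0 := by
  classical
  set ones : Fin n → Bool := fun _ => true with hones_def
  set q : ℝ≥0∞ := ENNReal.ofReal (1 - c) with hq
  have hq1 : q < 1 := by
    rw [hq]
    exact lt_of_lt_of_le (ENNReal.ofReal_lt_one.mpr (by linarith)) le_rfl
  have hbt : ∀ t, μ {ω | Y t ω ≠ ones} ≤ q ^ t := by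
    intro t
    induction t with
    | zero => rw [pow_zero]; exact prob_le_one
    | succ t ih =>
      have hsub : {ω | Y (t + 1) ω ≠ ones}
          ⊆ {ω | Y t ω = ones ∧ Y (t + 1) ω ≠ ones}
            ∪ {ω | Y t ω ≠ ones ∧ Y (t + 1) ω ≠ ones} := by
        intro ω hω
        by_cases h : Y t ω = ones
        · exact Or.inl ⟨h, hω⟩
        · exact Or.inr ⟨h, hω⟩
      have h1 : μ {ω | Y t ω = ones ∧ Y (t + 1) ω ≠ ones} = 0 := by
        rw [measure_pred_pair μ Y hm hnn hstep t (fun x => x = ones) (fun z => z ≠ ones)]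
        apply Finset.sum_eq_zero
        intro x hx
        simp only [mem_filter, mem_univ, true_and] at hx
        subst hx
        rw [Finset.sum_eq_zero]
        · simp
        intro z hz
        simp only [mem_filter, mem_univ, true_and] at hz
        exact hzero1 z hz
      have h2 : μ {ω | Y t ω ≠ ones ∧ Y (t + 1) ω ≠ ones} ≤ q * q ^ t := by
        rw [measure_pred_pair μ Y hm hnn hstep t (fun x => x ≠ ones) (fun z => z ≠ ones)]
        have hinner : ∀ x : Fin n → Bool,
            ∑ z ∈ univ.filter (fun z : Fin n → Bool => z ≠ ones), stepProb n p f x z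
              ≤ 1 - c := by
          intro x
          have he : (univ.filter (fun z : Fin n → Bool => z ≠ ones))
              = univ.erase ones := Finset.filter_ne' univ ones
          rw [he, Finset.sum_erase_eq_sub (mem_univ ones), hsum x]
          have := hones x
          linarith
        calc ∑ x ∈ univ.filter (fun x : Fin n → Bool => x ≠ ones),
              ENNReal.ofReal (∑ z ∈ univ.filter (fun z : Fin n → Bool => z ≠ ones),
                stepProb n p f x z) * μ {ω | Y t ω = x}
            ≤ ∑ x ∈ univ.filter (fun x : Fin n → Bool => x ≠ ones),
              q * μ {ω | Y t ω = x} := by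
              apply Finset.sum_le_sum
              intro x _
              exact mul_le_mul_left (ENNReal.ofReal_le_ofReal (hinner x)) _
          _ = q * ∑ x ∈ univ.filter (fun x : Fin n → Bool => x ≠ ones),
              μ {ω | Y t ω = x} := by rw [Finset.mul_sum]
          _ = q * μ {ω | Y t ω ≠ ones} := by
              rw [← measure_pred μ Y hm t (fun x => x ≠ ones)]
          _ ≤ q * q ^ t := mul_le_mul_right ih _
      calc μ {ω | Y (t + 1) ω ≠ ones}
          ≤ μ ({ω | Y t ω = ones ∧ Y (t + 1) ω ≠ ones}
            ∪ {ω | Y t ω ≠ ones ∧ Y (t + 1) ω ≠ ones}) := measure_mono hsub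
        _ ≤ μ {ω | Y t ω = ones ∧ Y (t + 1) ω ≠ ones}
            + μ {ω | Y t ω ≠ ones ∧ Y (t + 1) ω ≠ ones} := measure_union_le _ _
        _ ≤ 0 + q * q ^ t := add_le_add h1.le h2
        _ = q ^ (t + 1) := by rw [zero_add, pow_succ]; ring
  have htend := ENNReal.tendsto_pow_atTop_nhds_zero_of_lt_one hq1
  have hle : μ {ω | ∀ t, Y t ω ≠ ones} ≤ 0 := by
    apply ge_of_tendsto' htend
    intro t
    exact le_trans (measure_mono (fun ω hω => hω t)) (hbt t)
  exact le_antisymm hle zero_le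

end Null

end EAAux

/-- For the (1+1) EA with mutation rate `p ∈ (0,1)` maximizing
`LeadingOnes`, started with a uniformly random search point, for every `i ∈ [0..n-1]`
the probability that at some time the current search point has `LeadingOnes`-value
exactly `i` is exactly `1/2`. -/
theorem leadingOnes_visit_probability
    {Ω : Type*} [MeasurableSpace Ω] (μ : Measure Ω) [IsProbabilityMeasure μ]
    (n : ℕ) (p : ℝ) (hp0 : 0 < p) (hp1 : p < 1)
    (Y : ℕ → Ω → Fin n → Bool)
    (hrun : IsEARun μ n p (fun x => (leadingOnes n x : ℝ)) Y)
    -- uniformly random initialization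
    (hinit : ∀ x : Fin n → Bool, μ {ω | Y 0 ω = x} = ((2 : ℝ≥0∞) ^ n)⁻¹)
    (i : ℕ) (hi : i < n) :
    μ {ω | ∃ t : ℕ, leadingOnes n (Y t ω) = i} = 1 / 2 := by
  classical
  obtain ⟨hm, hstep0⟩ := hrun
  have hstep : ∀ (t : ℕ) (x z : Fin n → Bool),
      μ {ω | Y (t + 1) ω = z ∧ Y t ω = x}
        = ENNReal.ofReal (stepProb n p (EAAux.F n) x z) * μ {ω | Y t ω = x} := hstep0
  have hnn : ∀ x z : Fin n → Bool, 0 ≤ stepProb n p (EAAux.F n) x z :=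
    fun x z => EAAux.stepProb_nonneg hp0 hp1 x z
  have hzero : ∀ x z : Fin n → Bool, leadingOnes n z < leadingOnes n x →
      stepProb n p (EAAux.F n) x z = 0 := fun x z h => EAAux.stepProb_eq_zero x z h
  obtain ⟨hNm, hN⟩ := EAAux.nmon_aux μ Y hm hzero hstep
  have hmono : ∀ ω, ω ∉ {ω | ∃ t, leadingOnes n (Y (t + 1) ω) < leadingOnes n (Y t ω)} →
      ∀ t, leadingOnes n (Y t ω) ≤ leadingOnes n (Y (t + 1) ω) := by
    intro ω hω t
    by_contra h
    exact hω ⟨t, by omega⟩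
  have hcpos : (0:ℝ) < min p (1 - p) ^ n := pow_pos (lt_min hp0 (by linarith)) n
  have hcle : min p (1 - p) ^ n ≤ 1 :=
    pow_le_one₀ (le_min hp0.le (by linarith)) (le_trans (min_le_left _ _) hp1.le)
  have hzero1 : ∀ z : Fin n → Bool, z ≠ (fun _ => true) →
      stepProb n p (EAAux.F n) (fun _ => true) z = 0 := by
    intro z hz
    apply hzero
    rw [EAAux.lo_ones]
    exact EAAux.lo_lt_n_of_ne_ones hz
  have hNall : μ {ω | ∀ t, Y t ω ≠ (fun _ => true)} = 0 :=
    EAAux.nall_null μ Y hm hcpos hcle hnn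
      (fun x => EAAux.sum_stepProb hp0 hp1 x)
      (fun x => EAAux.stepProb_ones hp0 hp1 x) hzero1 hstep
  -- symmetry invariant
  have hsym : ∀ (t : ℕ) (x : Fin n → Bool), leadingOnes n x < i →
      μ {ω | Y t ω = EAAux.flip ⟨i, hi⟩ x} = μ {ω | Y t ω = x} := by
    intro t
    induction t with
    | zero => intro x hx; rw [hinit, hinit]
    | succ t ih =>
      intro x hx
      have hxf : leadingOnes n (EAAux.flip ⟨i, hi⟩ x) < i := by
        rw [EAAux.lo_flip hi hx]; exact hx
      have hres : ∀ x' : Fin n → Bool, leadingOnes n x' < i →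
          μ {ω | Y (t + 1) ω = x'}
            = ∑ z ∈ univ.filter (fun z : Fin n → Bool => leadingOnes n z < i),
                ENNReal.ofReal (stepProb n p (EAAux.F n) z x') * μ {ω | Y t ω = z} := by
        intro x' hx'
        rw [EAAux.measure_evol μ Y hm hnn hstep t x']
        symm
        apply Finset.sum_subset (filter_subset _ _)
        intro z _ hz
        simp only [mem_filter, mem_univ, true_and, not_lt] at hz
        rw [hzero z x' (by omega)]
        simp
      rw [hres x hx, hres _ hxf, Finset.sum_filter, Finset.sum_filter]
      apply Fintype.sum_equiv (EAAux.flipE ⟨i, hi⟩)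
      intro z
      rw [show ⇑(EAAux.flipE ⟨i, hi⟩) = EAAux.flip ⟨i, hi⟩ from rfl]
      by_cases hz : leadingOnes n z < i
      · rw [if_pos hz, if_pos (by rw [EAAux.lo_flip_lt_iff hi]; exact hz)]
        have hstepflip : stepProb n p (EAAux.F n) (EAAux.flip ⟨i, hi⟩ z) x
            = stepProb n p (EAAux.F n) z (EAAux.flip ⟨i, hi⟩ x) := by
          have := EAAux.stepProb_flip hp0 hp1 (x := z) (z := EAAux.flip ⟨i, hi⟩ x) hi hz hxf
          rwa [EAAux.flip_flip] at this
        rw [hstepflip, ih z hz]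
      · rw [if_neg hz, if_neg (by rw [EAAux.lo_flip_lt_iff hi]; exact hz)]
  -- measures of the one-step entering events
  have hBt : ∀ t : ℕ,
      μ {ω | leadingOnes n (Y t ω) < i ∧ leadingOnes n (Y (t + 1) ω) = i}
        = ∑ x ∈ univ.filter (fun x : Fin n → Bool => leadingOnes n x < i),
            ENNReal.ofReal (∑ y ∈ univ.filter
                (fun y : Fin n → Bool => leadingOnes n y = i), mutProb n p x y)
              * μ {ω | Y t ω = x} := by
    intro t
    rw [EAAux.measure_pred_pair μ Y hm hnn hstep t
      (fun x => leadingOnes n x < i) (fun z => leadingOnes n z = i)]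
    apply Finset.sum_congr rfl
    intro x hx
    simp only [mem_filter, mem_univ, true_and] at hx
    rw [EAAux.sum_stepProb_eq_i hx]
  have hCt : ∀ t : ℕ,
      μ {ω | leadingOnes n (Y t ω) < i ∧ i ≤ leadingOnes n (Y (t + 1) ω)}
        = μ {ω | leadingOnes n (Y t ω) < i ∧ leadingOnes n (Y (t + 1) ω) = i}
          + μ {ω | leadingOnes n (Y t ω) < i ∧ leadingOnes n (Y (t + 1) ω) = i} := by
    intro t
    rw [EAAux.measure_pred_pair μ Y hm hnn hstep t
      (fun x => leadingOnes n x < i) (fun z => i ≤ leadingOnes n z), hBt t]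
    have hterm : ∀ x ∈ univ.filter (fun x : Fin n → Bool => leadingOnes n x < i),
        ENNReal.ofReal (∑ z ∈ univ.filter
            (fun z : Fin n → Bool => i ≤ leadingOnes n z), stepProb n p (EAAux.F n) x z)
          * μ {ω | Y t ω = x}
        = ENNReal.ofReal (∑ y ∈ univ.filter
              (fun y : Fin n → Bool => leadingOnes n y = i), mutProb n p x y)
            * μ {ω | Y t ω = x}
          + ENNReal.ofReal (∑ y ∈ univ.filter
              (fun y : Fin n → Bool => leadingOnes n y = i),
                mutProb n p (EAAux.flip ⟨i, hi⟩ x) y)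
            * μ {ω | Y t ω = x} := by
      intro x hx
      simp only [mem_filter, mem_univ, true_and] at hx
      rw [EAAux.sum_stepProb_ge_i hx, EAAux.pairing hp0 hp1 hi x,
        ENNReal.ofReal_add
          (Finset.sum_nonneg (fun y _ => EAAux.mutProb_nonneg hp0 hp1 x y))
          (Finset.sum_nonneg (fun y _ => EAAux.mutProb_nonneg hp0 hp1 _ y)),
        add_mul]
    rw [Finset.sum_congr rfl hterm, Finset.sum_add_distrib]
    congr 1
    rw [Finset.sum_filter, Finset.sum_filter]
    apply Fintype.sum_equiv (EAAux.flipE ⟨i, hi⟩)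
    intro x
    rw [show ⇑(EAAux.flipE ⟨i, hi⟩) = EAAux.flip ⟨i, hi⟩ from rfl]
    by_cases hx : leadingOnes n x < i
    · rw [if_pos hx, if_pos (by rw [EAAux.lo_flip_lt_iff hi]; exact hx), hsym t x hx]
    · rw [if_neg hx, if_neg (by rw [EAAux.lo_flip_lt_iff hi]; exact hx)]
  -- the two decompositions
  have hEdec : μ {ω | ∃ t : ℕ, leadingOnes n (Y t ω) = i}
      = μ {ω | leadingOnes n (Y 0 ω) = i}
        + ∑' t : ℕ, μ {ω | leadingOnes n (Y t ω) < i
            ∧ leadingOnes n (Y (t + 1) ω) = i} :=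
    EAAux.decomp μ Y hm _ hNm hN hmono i (fun l => l = i)
      (by omega) (by omega)
  have hGdec : μ {ω | ∃ t : ℕ, i ≤ leadingOnes n (Y t ω)}
      = μ {ω | i ≤ leadingOnes n (Y 0 ω)}
        + ∑' t : ℕ, μ {ω | leadingOnes n (Y t ω) < i
            ∧ i ≤ leadingOnes n (Y (t + 1) ω)} :=
    EAAux.decomp μ Y hm _ hNm hN hmono i (fun l => i ≤ l)
      (by omega) (by omega)
  -- the ≥ i event is almost sure
  have hG1 : μ {ω | ∃ t : ℕ, i ≤ leadingOnes n (Y t ω)} = 1 := by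
    refine le_antisymm prob_le_one ?_
    calc (1:ℝ≥0∞) = μ Set.univ := measure_univ.symm
      _ ≤ μ ({ω | ∀ t, Y t ω ≠ (fun _ => true)}
            ∪ {ω | ∃ t : ℕ, i ≤ leadingOnes n (Y t ω)}) := by
          apply measure_mono
          intro ω _
          by_cases h : ∃ t, Y t ω = (fun _ : Fin n => true)
          · obtain ⟨t, ht⟩ := h
            right
            exact ⟨t, by rw [ht, EAAux.lo_ones]; omega⟩
          · left; push_neg at h; exact h
      _ ≤ μ {ω | ∀ t, Y t ω ≠ (fun _ => true)}
            + μ {ω | ∃ t : ℕ, i ≤ leadingOnes n (Y t ω)} := measure_union_le _ _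
      _ = μ {ω | ∃ t : ℕ, i ≤ leadingOnes n (Y t ω)} := by rw [hNall, zero_add]
  -- initial distribution symmetry
  have hG0 : μ {ω | i ≤ leadingOnes n (Y 0 ω)}
      = μ {ω | leadingOnes n (Y 0 ω) = i} + μ {ω | leadingOnes n (Y 0 ω) = i} := by
    rw [EAAux.measure_pred μ Y hm 0 (fun x => i ≤ leadingOnes n x),
        EAAux.measure_pred μ Y hm 0 (fun x => leadingOnes n x = i)]
    have hsplit : (univ.filter (fun y : Fin n → Bool => i ≤ leadingOnes n y))
        = (univ.filter (fun y : Fin n → Bool => leadingOnes n y = i))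
          ∪ (univ.filter (fun y : Fin n → Bool => i + 1 ≤ leadingOnes n y)) := by
      ext y
      simp only [mem_filter, mem_univ, true_and, mem_union]
      omega
    have hdisj : Disjoint (univ.filter (fun y : Fin n → Bool => leadingOnes n y = i))
        (univ.filter (fun y : Fin n → Bool => i + 1 ≤ leadingOnes n y)) := by
      rw [Finset.disjoint_filter]
      intro y _ h1
      omega
    rw [hsplit, Finset.sum_union hdisj]
    congr 1
    rw [EAAux.sum_flip_ge hi (fun y => μ {ω | Y 0 ω = y})]
    apply Finset.sum_congr rfl
    intro y _
    rw [hinit, hinit]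
  -- combine
  have hEcomb : μ {ω | ∃ t : ℕ, leadingOnes n (Y t ω) = i}
      + μ {ω | ∃ t : ℕ, leadingOnes n (Y t ω) = i} = 1 := by
    rw [hEdec, ← hG1, hGdec, hG0]
    rw [show (∑' t : ℕ, μ {ω | leadingOnes n (Y t ω) < i
          ∧ i ≤ leadingOnes n (Y (t + 1) ω)})
        = (∑' t : ℕ, (μ {ω | leadingOnes n (Y t ω) < i
              ∧ leadingOnes n (Y (t + 1) ω) = i}
            + μ {ω | leadingOnes n (Y t ω) < i
              ∧ leadingOnes n (Y (t + 1) ω) = i}))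
      from tsum_congr hCt, ENNReal.tsum_add]
    ring
  have h2 : 2 * μ {ω | ∃ t : ℕ, leadingOnes n (Y t ω) = i} = 1 := by
    rw [two_mul]; exact hEcomb
  calc μ {ω | ∃ t : ℕ, leadingOnes n (Y t ω) = i}
      = (2⁻¹ * 2) * μ {ω | ∃ t : ℕ, leadingOnes n (Y t ω) = i} := by
        rw [ENNReal.inv_mul_cancel (by norm_num) (by norm_num), one_mul]
    _ = 2⁻¹ * (2 * μ {ω | ∃ t : ℕ, leadingOnes n (Y t ω) = i}) := by ring
    _ = 2⁻¹ * 1 := by rw [h2]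
    _ = 1 / 2 := by rw [mul_one, one_div]
end

section
/- Let n ≥ 1 and k, ℓ ∈ [0..n] with k ≤ ℓ. Then p_{k,≥ℓ} ≤ Pr[Bin(n−k, 1/n) ≥ ℓ−k], where Bin(m,q) denotes a binomially distributed random variable with parameters m and q. -/
open MeasureTheory Finset
open scoped ENNReal

/-- `levelProb n k l` is `p_{k,l}`: the probability that standard bit mutation with
rate `1/n` applied to an `n`-bit string with exactly `k` ones yields a string with
exactly `l` ones (witnessed by the string whose first `k` bits are one). -/
noncomputable def levelProb (n k l : ℕ) : ℝ :=
  ∑ y ∈ Finset.univ.filter (fun y : Fin n → Bool => onesCount n y = l),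
    mutProb n (1 / n) (fun i => decide ((i : ℕ) < k)) y

/-- `levelProbGe n k l` is `p_{k,≥l} = ∑_{j=l}^n p_{k,j}`. -/
noncomputable def levelProbGe (n k l : ℕ) : ℝ :=
  ∑ j ∈ Finset.Icc l n, levelProb n k j

/-- `Pr[Bin(m,q) ≥ r]` for a binomially distributed random variable with parameters
`m` and `q`. -/
noncomputable def binomTail (m : ℕ) (q : ℝ) (r : ℕ) : ℝ :=
  ∑ j ∈ Finset.Icc r m, (m.choose j : ℝ) * q ^ j * (1 - q) ^ (m - j)

lemma count_card {ι : Type*} [Fintype ι] [DecidableEq ι] (b : Bool) (j : ℕ) :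
    (univ.filter fun y : ι → Bool => (univ.filter fun i => y i = b).card = j).card
      = (Fintype.card ι).choose j := by
  rw [show (Fintype.card ι).choose j = (Finset.powersetCard j (univ : Finset ι)).card by
    rw [Finset.card_powersetCard, Finset.card_univ]]
  refine Finset.card_bij' (fun y _ => univ.filter fun i => y i = b)
    (fun s _ => fun i => if i ∈ s then b else !b) ?_ ?_ ?_ ?_
  · intro y hy
    simp only [Finset.mem_filter] at hy
    simp [Finset.mem_powersetCard_univ, hy.2]
  · intro s hs
    simp only [Finset.mem_powersetCard_univ] at hs
    have h2 : (univ.filter fun i => (if i ∈ s then b else !b) = b) = s := by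
      ext i; by_cases h : i ∈ s <;> simp [h]
    simp only [Finset.mem_filter, Finset.mem_univ, true_and, h2, hs]
  · intro y hy
    funext i
    by_cases h : y i = b
    · simp [h]
    · simp only [Finset.mem_filter, Finset.mem_univ, true_and, h, if_neg]
      cases hb : y i <;> cases b <;> simp_all
  · intro s hs
    ext i; by_cases h : i ∈ s <;> simp [h]

lemma sum_count {ι : Type*} [Fintype ι] [DecidableEq ι] (b : Bool) (F : ℕ → ℝ) :
    ∑ y : ι → Bool, F ((univ.filter fun i => y i = b).card)
      = ∑ j ∈ Finset.range (Fintype.card ι + 1), ((Fintype.card ι).choose j : ℝ) * F j := by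
  have h := Finset.sum_fiberwise_eq_sum_filter (univ : Finset (ι → Bool))
    (Finset.range (Fintype.card ι + 1)) (fun y => (univ.filter fun i => y i = b).card)
    (fun y => F ((univ.filter fun i => y i = b).card))
  rw [Finset.filter_true_of_mem (fun y _ => by
    simp only [Finset.mem_range, Nat.lt_succ_iff]
    exact le_trans (Finset.card_filter_le _ _) (le_of_eq Finset.card_univ))] at h
  rw [← h]
  refine Finset.sum_congr rfl fun j _ => ?_
  rw [Finset.sum_congr rfl (fun y hy => by rw [(Finset.mem_filter.mp hy).2]),
    Finset.sum_const, count_card, nsmul_eq_mul]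

lemma one_sum {ι : Type*} [Fintype ι] [DecidableEq ι] (b : Bool) (p : ℝ) :
    ∑ y : ι → Bool, p ^ ((univ.filter fun i => y i = b).card)
      * (1 - p) ^ (Fintype.card ι - (univ.filter fun i => y i = b).card) = 1 := by
  rw [sum_count b (fun j => p ^ j * (1 - p) ^ (Fintype.card ι - j))]
  have h2 : ∑ j ∈ Finset.range (Fintype.card ι + 1),
      ((Fintype.card ι).choose j : ℝ) * (p ^ j * (1 - p) ^ (Fintype.card ι - j))
      = (p + (1 - p)) ^ (Fintype.card ι) := by
    rw [add_pow]
    exact Finset.sum_congr rfl fun j _ => by ring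
  rw [h2]
  norm_num

lemma card_filter_split {n : ℕ} (k : ℕ) (P : Fin n → Prop) [DecidablePred P] :
    (univ.filter P).card
      = (univ.filter fun i => P i ∧ (i:ℕ) < k).card
        + (univ.filter fun i => P i ∧ ¬(i:ℕ) < k).card := by
  rw [← Finset.filter_filter, ← Finset.filter_filter]
  exact (Finset.card_filter_add_card_filter_not
    (s := univ.filter P) fun i => (i:ℕ) < k).symm

lemma hamming_split {n k : ℕ} (y : Fin n → Bool) :
    hammingDist (fun i : Fin n => decide ((i:ℕ) < k)) y
      = (univ.filter fun i : Fin n => y i = false ∧ (i:ℕ) < k).card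
        + (univ.filter fun i : Fin n => y i = true ∧ ¬(i:ℕ) < k).card := by
  have h : hammingDist (fun i : Fin n => decide ((i:ℕ) < k)) y
      = (univ.filter fun i : Fin n => decide ((i:ℕ) < k) ≠ y i).card := by
    simp [hammingDist]
  rw [h, card_filter_split k]
  congr 1 <;>
  · congr 1
    ext i
    by_cases hik : (i:ℕ) < k <;> cases hy : y i <;> simp [hik, hy]

lemma hL_card {n k : ℕ} (hkn : k ≤ n) :
    Fintype.card {i : Fin n // (i:ℕ) < k} = k := by
  rw [Fintype.card_congr
    (⟨fun i => (⟨i.1.1, i.2⟩ : Fin k),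
      fun j => ⟨⟨j.1, lt_of_lt_of_le j.2 hkn⟩, j.2⟩,
      fun i => Subtype.ext (Fin.ext rfl), fun j => rfl⟩ :
      {i : Fin n // (i:ℕ) < k} ≃ Fin k), Fintype.card_fin]

lemma hH_card {n k : ℕ} (hkn : k ≤ n) :
    Fintype.card {i : Fin n // ¬(i:ℕ) < k} = n - k := by
  rw [Fintype.card_subtype_compl, Fintype.card_fin, hL_card hkn]

lemma dL_equiv {n k : ℕ} (a : {i : Fin n // (i:ℕ) < k} → Bool)
    (b : {i : Fin n // ¬(i:ℕ) < k} → Bool) :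
    (univ.filter fun i : Fin n =>
        ((Equiv.piEquivPiSubtypeProd (fun i : Fin n => (i:ℕ) < k)
          (fun _ => Bool)).symm (a, b)) i = false ∧ (i:ℕ) < k).card
      = (univ.filter fun i : {i : Fin n // (i:ℕ) < k} => a i = false).card := by
  refine Finset.card_bij' (fun i hi => ⟨i, (Finset.mem_filter.mp hi).2.2⟩)
    (fun i _ => i.1) ?_ ?_ ?_ ?_
  · intro i hi
    have h := (Finset.mem_filter.mp hi).2
    have h1 := h.1
    rw [Equiv.piEquivPiSubtypeProd_symm_apply, dif_pos h.2] at h1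
    simp only [Finset.mem_filter, Finset.mem_univ, true_and]
    exact h1
  · intro i hi
    simp only [Finset.mem_filter, Finset.mem_univ, true_and] at hi ⊢
    refine ⟨?_, i.2⟩
    rw [Equiv.piEquivPiSubtypeProd_symm_apply, dif_pos i.2]
    exact hi
  · intro i _; rfl
  · intro i _; rfl

lemma dH_equiv {n k : ℕ} (a : {i : Fin n // (i:ℕ) < k} → Bool)
    (b : {i : Fin n // ¬(i:ℕ) < k} → Bool) :
    (univ.filter fun i : Fin n =>
        ((Equiv.piEquivPiSubtypeProd (fun i : Fin n => (i:ℕ) < k)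
          (fun _ => Bool)).symm (a, b)) i = true ∧ ¬(i:ℕ) < k).card
      = (univ.filter fun i : {i : Fin n // ¬(i:ℕ) < k} => b i = true).card := by
  refine Finset.card_bij' (fun i hi => ⟨i, (Finset.mem_filter.mp hi).2.2⟩)
    (fun i _ => i.1) ?_ ?_ ?_ ?_
  · intro i hi
    have h := (Finset.mem_filter.mp hi).2
    have h1 := h.1
    rw [Equiv.piEquivPiSubtypeProd_symm_apply, dif_neg h.2] at h1
    simp only [Finset.mem_filter, Finset.mem_univ, true_and]
    exact h1
  · intro i hi
    simp only [Finset.mem_filter, Finset.mem_univ, true_and] at hi ⊢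
    refine ⟨?_, i.2⟩
    rw [Equiv.piEquivPiSubtypeProd_symm_apply, dif_neg i.2]
    exact hi
  · intro i _; rfl
  · intro i _; rfl

lemma ea_inner_sum {n k : ℕ} (hkn : k ≤ n) (p : ℝ) (j : ℕ) :
    ∑ y ∈ univ.filter (fun y : Fin n → Bool =>
        (univ.filter fun i : Fin n => y i = true ∧ ¬(i:ℕ) < k).card = j),
      mutProb n p (fun i => decide ((i:ℕ) < k)) y
      = ((n-k).choose j : ℝ) * (p ^ j * (1-p) ^ (n - k - j)) := by
  have hdLle : ∀ y : Fin n → Bool,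
      (univ.filter fun i : Fin n => y i = false ∧ (i:ℕ) < k).card ≤ k := by
    intro y
    calc (univ.filter fun i : Fin n => y i = false ∧ (i:ℕ) < k).card
        ≤ (univ.filter fun i : Fin n => (i:ℕ) < k).card := by
          apply Finset.card_le_card
          intro i hi
          simp only [Finset.mem_filter] at *
          exact ⟨hi.1, hi.2.2⟩
      _ = k := by rw [← Fintype.card_subtype, hL_card hkn]
  have hdHle : ∀ y : Fin n → Bool,
      (univ.filter fun i : Fin n => y i = true ∧ ¬(i:ℕ) < k).card ≤ n - k := by
    intro y
    calc (univ.filter fun i : Fin n => y i = true ∧ ¬(i:ℕ) < k).card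
        ≤ (univ.filter fun i : Fin n => ¬(i:ℕ) < k).card := by
          apply Finset.card_le_card
          intro i hi
          simp only [Finset.mem_filter] at *
          exact ⟨hi.1, hi.2.2⟩
      _ = n - k := by rw [← Fintype.card_subtype, hH_card hkn]
  have hmut : ∀ y : Fin n → Bool, mutProb n p (fun i => decide ((i:ℕ) < k)) y
      = (p ^ ((univ.filter fun i : Fin n => y i = false ∧ (i:ℕ) < k).card)
          * (1-p) ^ (k - (univ.filter fun i : Fin n => y i = false ∧ (i:ℕ) < k).card))
        * (p ^ ((univ.filter fun i : Fin n => y i = true ∧ ¬(i:ℕ) < k).card)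
          * (1-p) ^ (n - k - (univ.filter fun i : Fin n => y i = true ∧ ¬(i:ℕ) < k).card)) := by
    intro y
    have h1 := hdLle y
    have h2 := hdHle y
    unfold mutProb
    rw [hamming_split y, pow_add p, show
      n - ((univ.filter fun i : Fin n => y i = false ∧ (i:ℕ) < k).card
        + (univ.filter fun i : Fin n => y i = true ∧ ¬(i:ℕ) < k).card)
      = (k - (univ.filter fun i : Fin n => y i = false ∧ (i:ℕ) < k).card)
        + (n - k - (univ.filter fun i : Fin n => y i = true ∧ ¬(i:ℕ) < k).card) by omega,
      pow_add]
    ring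
  rw [Finset.sum_filter]
  simp only [hmut]
  rw [← Equiv.sum_comp (Equiv.piEquivPiSubtypeProd (fun i : Fin n => (i:ℕ) < k)
    (fun _ => Bool)).symm]
  rw [Fintype.sum_prod_type]
  simp only [dL_equiv, dH_equiv]
  have hone := one_sum (ι := {i : Fin n // (i:ℕ) < k}) false p
  rw [hL_card hkn] at hone
  have hcount := count_card (ι := {i : Fin n // ¬(i:ℕ) < k}) true j
  rw [hH_card hkn] at hcount
  have step : ∀ a : {i : Fin n // (i:ℕ) < k} → Bool,
      (∑ b : {i : Fin n // ¬(i:ℕ) < k} → Bool,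
        if (univ.filter fun i => b i = true).card = j then
          (p ^ ((univ.filter fun i => a i = false).card)
            * (1-p) ^ (k - (univ.filter fun i => a i = false).card))
          * (p ^ ((univ.filter fun i => b i = true).card)
            * (1-p) ^ (n - k - (univ.filter fun i => b i = true).card)) else 0)
      = (p ^ ((univ.filter fun i => a i = false).card)
          * (1-p) ^ (k - (univ.filter fun i => a i = false).card))
        * ∑ b : {i : Fin n // ¬(i:ℕ) < k} → Bool,
            (if (univ.filter fun i => b i = true).card = j then
              p ^ j * (1-p) ^ (n - k - j) else 0) := by
    intro a
    rw [Finset.mul_sum]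
    refine Finset.sum_congr rfl fun b _ => ?_
    split_ifs with h
    · rw [h]
    · rw [mul_zero]
  rw [Finset.sum_congr rfl fun a _ => step a, ← Finset.sum_mul, hone, one_mul,
    ← Finset.sum_filter, Finset.sum_const, hcount, nsmul_eq_mul]

/-- For `n ≥ 1` and `k ≤ ℓ ≤ n`, the probability `p_{k,≥ℓ}` to mutate
a string with `k` ones into a string with at least `ℓ` ones is at most
`Pr[Bin(n-k, 1/n) ≥ ℓ-k]`. -/
theorem levelProbGe_le_binomTail
    (n k l : ℕ) (hn : 1 ≤ n) (hl : l ≤ n) (hkl : k ≤ l) :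
    levelProbGe n k l ≤ binomTail (n - k) (1 / n) (l - k) := by
  have hkn : k ≤ n := hkl.trans hl
  have hn0 : (0:ℝ) < n := by exact_mod_cast hn
  have hp0 : (0:ℝ) ≤ 1/(n:ℝ) := by positivity
  have hp1 : (1:ℝ)/(n:ℝ) ≤ 1 := by
    rw [div_le_one hn0]; exact_mod_cast hn
  have hdHle : ∀ y : Fin n → Bool,
      (univ.filter fun i : Fin n => y i = true ∧ ¬(i:ℕ) < k).card ≤ n - k := by
    intro y
    calc (univ.filter fun i : Fin n => y i = true ∧ ¬(i:ℕ) < k).card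
        ≤ (univ.filter fun i : Fin n => ¬(i:ℕ) < k).card := by
          apply Finset.card_le_card
          intro i hi
          simp only [Finset.mem_filter] at *
          exact ⟨hi.1, hi.2.2⟩
      _ = n - k := by rw [← Fintype.card_subtype, hH_card hkn]
  have honesle : ∀ y : Fin n → Bool,
      onesCount n y ≤ k + (univ.filter fun i : Fin n => y i = true ∧ ¬(i:ℕ) < k).card := by
    intro y
    unfold onesCount
    rw [card_filter_split k (fun i => y i = true)]
    have h1 : (univ.filter fun i : Fin n => y i = true ∧ (i:ℕ) < k).card ≤ k := by
      calc (univ.filter fun i : Fin n => y i = true ∧ (i:ℕ) < k).card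
          ≤ (univ.filter fun i : Fin n => (i:ℕ) < k).card := by
            apply Finset.card_le_card
            intro i hi
            simp only [Finset.mem_filter] at *
            exact ⟨hi.1, hi.2.2⟩
        _ = k := by rw [← Fintype.card_subtype, hL_card hkn]
    omega
  unfold levelProbGe levelProb
  rw [Finset.sum_fiberwise_eq_sum_filter univ (Finset.Icc l n)
    (fun y : Fin n → Bool => onesCount n y)
    (fun y => mutProb n (1/n) (fun i => decide ((i:ℕ) < k)) y)]
  have hnonneg : ∀ y ∈ univ.filter (fun y : Fin n → Bool =>
      (univ.filter fun i : Fin n => y i = true ∧ ¬(i:ℕ) < k).card ∈ Finset.Icc (l-k) (n-k)),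
      y ∉ univ.filter (fun y : Fin n → Bool => onesCount n y ∈ Finset.Icc l n) →
      0 ≤ mutProb n (1/n) (fun i => decide ((i:ℕ) < k)) y := by
    intro y _ _
    unfold mutProb
    exact mul_nonneg (pow_nonneg hp0 _) (pow_nonneg (by linarith) _)
  refine le_trans (Finset.sum_le_sum_of_subset_of_nonneg ?_ hnonneg) (le_of_eq ?_)
  · intro y hy
    simp only [Finset.mem_filter, Finset.mem_Icc, Finset.mem_univ, true_and] at *
    have h1 := honesle y
    have h2 := hdHle y
    omega
  · rw [← Finset.sum_fiberwise_eq_sum_filter univ (Finset.Icc (l-k) (n-k))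
      (fun y : Fin n → Bool => (univ.filter fun i : Fin n => y i = true ∧ ¬(i:ℕ) < k).card)
      (fun y => mutProb n (1/n) (fun i => decide ((i:ℕ) < k)) y)]
    unfold binomTail
    refine Finset.sum_congr rfl fun j _ => ?_
    rw [ea_inner_sum hkn]
    ring
end

section
/- Let n ≥ 2 and i ∈ [0..n]. Consider a run of the (1+1) EA with mutation rate 1/n maximizing OneMax : {0,1}^n → ℝ, started with a (possibly random) search point x with OneMax(x) < i. Then the probability q_i that during the run the current search point never has OneMax-value exactly i satisfies q_i ≤ (n−i) / (n (1−1/n)^{i−1}). -/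
open MeasureTheory Finset
open scoped ENNReal

lemma hamming_eq_filter {n : ℕ} (x z : Fin n → Bool) :
    hammingDist x z = (univ.filter fun l => x l ≠ z l).card := by
  simp [hammingDist, Fintype.card_subtype]

lemma sum_reindex {n : ℕ} (x : Fin n → Bool) (F : ℕ → ℕ → ℝ) :
    ∑ z : Fin n → Bool, F (onesCount n z) (hammingDist x z)
      = ∑ A ∈ (univ.filter fun l => x l = true).powerset,
          ∑ B ∈ (univ.filter fun l => x l = true)ᶜ.powerset,
            F ((onesCount n x - A.card) + B.card) (A.card + B.card) := by
  classical
  set T := (univ.filter fun l : Fin n => x l = true) with hT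
  rw [← Finset.sum_product']
  refine Finset.sum_bij' (i := fun z _ => (T.filter fun l => z l = false, Tᶜ.filter fun l => z l = true))
    (j := fun P _ => fun l => if l ∈ P.1 then false else if l ∈ P.2 then true else x l)
    ?_ ?_ ?_ ?_ ?_
  · intro z _
    simp [Finset.mem_product, Finset.mem_powerset, Finset.filter_subset]
  · intro P _; exact Finset.mem_univ _
  · intro z _
    funext l
    cases hxl : x l <;> cases hzl : z l <;>
      simp [Finset.mem_filter, Finset.mem_compl, hT, hxl, hzl]
  · rintro ⟨A, B⟩ hP
    rw [Finset.mem_product, Finset.mem_powerset, Finset.mem_powerset] at hP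
    obtain ⟨hA, hB⟩ := hP
    have prod_ext : ∀ (C D : Finset (Fin n) × Finset (Fin n)), C.1 = D.1 → C.2 = D.2 → C = D := by
      rintro ⟨_, _⟩ ⟨_, _⟩ h1 h2; simp_all
    refine prod_ext _ _ ?_ ?_
    · ext l
      have hxA : l ∈ A → x l = true := fun h => by simpa [hT] using hA h
      have hxB : l ∈ B → x l = false := fun h => by simpa [hT] using hB h
      have hTl : l ∈ T ↔ x l = true := by simp [hT]
      by_cases hlA : l ∈ A <;> by_cases hlB : l ∈ B <;>
        simp_all [Finset.mem_filter, Finset.mem_compl, hTl]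
    · ext l
      have hxA : l ∈ A → x l = true := fun h => by simpa [hT] using hA h
      have hxB : l ∈ B → x l = false := fun h => by simpa [hT] using hB h
      have hTl : l ∈ T ↔ x l = true := by simp [hT]
      by_cases hlA : l ∈ A <;> by_cases hlB : l ∈ B <;>
        simp_all [Finset.mem_filter, Finset.mem_compl, hTl]
  · intro z _
    set A := T.filter fun l => z l = false with hA
    set B := Tᶜ.filter fun l => z l = true with hB
    have hTcard : T.card = onesCount n x := rfl
    have honesz : onesCount n z = (onesCount n x - A.card) + B.card := by
      have h1 : (T.filter fun l => z l = true).card + A.card = T.card := by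
        have h0 := Finset.card_filter_add_card_filter_not (s := T)
          (p := fun l => z l = true)
        have hfc : T.filter (fun a => ¬ z a = true) = A := by
          rw [hA]; apply Finset.filter_congr; intro l _; simp
        rw [hfc] at h0; exact h0
      have h2 : onesCount n z = (T.filter fun l => z l = true).card + B.card := by
        have hsplit : (univ.filter fun l : Fin n => z l = true)
            = (T.filter fun l => z l = true) ∪ (Tᶜ.filter fun l => z l = true) := by
          rw [← Finset.filter_union, Finset.union_compl]
        rw [onesCount, hsplit, Finset.card_union_of_disjoint
          (Finset.disjoint_filter_filter disjoint_compl_right)]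
      omega
    have hham : hammingDist x z = A.card + B.card := by
      rw [hamming_eq_filter]
      have hsp : (univ.filter fun l => x l ≠ z l) = A ∪ B := by
        ext l
        rw [hA, hB, Finset.mem_union]
        cases hxl : x l <;> cases hzl : z l <;>
          simp [Finset.mem_filter, Finset.mem_compl, hT, hxl, hzl]
      rw [hsp, Finset.card_union_of_disjoint
        (Finset.disjoint_filter_filter disjoint_compl_right)]
    rw [honesz, hham]

lemma sum_powerset_card {α : Type*} [DecidableEq α] (s : Finset α) (g : ℕ → ℝ) :
    ∑ B ∈ s.powerset, g B.card = ∑ b ∈ range (s.card + 1), (s.card.choose b : ℝ) * g b := by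
  rw [Finset.sum_powerset]
  refine Finset.sum_congr rfl fun b _ => ?_
  rw [Finset.sum_congr rfl (g := fun B => g b) (fun B hB => by
    rw [(Finset.mem_powersetCard.mp hB).2]), Finset.sum_const, Finset.card_powersetCard,
    nsmul_eq_mul]

lemma choose_ratio (N s u : ℕ) (hs : 1 ≤ s) (hN : N ≤ s + u) :
    ∀ m : ℕ, (m + 1) * N.choose (s + m) ≤ u.choose m * N.choose s := by
  intro m
  induction m with
  | zero => simp
  | succ m ih =>
    have hK : 0 < (s + m + 1) * (m + 1) := by positivity
    refine Nat.le_of_mul_le_mul_left ?_ hK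
    have e1 : N.choose (s + m + 1) * (s + m + 1) = N.choose (s + m) * (N - (s + m)) :=
      Nat.choose_succ_right_eq N (s + m)
    have e2 : u.choose (m + 1) * (m + 1) = u.choose m * (u - m) :=
      Nat.choose_succ_right_eq u m
    calc (s + m + 1) * (m + 1) * ((m + 1 + 1) * N.choose (s + (m + 1)))
        = (m + 2) * (m + 1) * (N.choose (s + m + 1) * (s + m + 1)) := by ring_nf
      _ = (m + 2) * (N - (s + m)) * ((m + 1) * N.choose (s + m)) := by rw [e1]; ring
      _ ≤ (m + 2) * (N - (s + m)) * (u.choose m * N.choose s) := Nat.mul_le_mul_left _ ih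
      _ ≤ ((s + m + 1) * (u - m)) * (u.choose m * N.choose s) :=
          Nat.mul_le_mul_right _ (Nat.mul_le_mul (by omega) (by omega))
      _ = (s + m + 1) * ((u.choose m * (u - m)) * N.choose s) := by ring
      _ = (s + m + 1) * ((u.choose (m + 1) * (m + 1)) * N.choose s) := by rw [e2]
      _ = (s + m + 1) * (m + 1) * (u.choose (m + 1) * N.choose s) := by ring

-- nat power bound:  n^(u+2) ≤ (n(n-1) + n(u+1) + u(u+1)) (n-1)^u  for u ≤ n-1

lemma nat_pow_bound (n : ℕ) (hn : 2 ≤ n) :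
    ∀ u : ℕ, u ≤ n - 1 →
      n ^ (u + 2) ≤ (n * (n - 1) + n * (u + 1) + u * (u + 1)) * (n - 1) ^ u := by
  intro u
  induction u with
  | zero =>
    intro _
    zify [show (1:ℕ) ≤ n by omega]
    exact le_of_eq (by ring)
  | succ u ih =>
    intro hu
    have hu' : u ≤ n - 1 := by omega
    have hu2 : u + 2 ≤ n := by omega
    have step : n * (n * (n - 1) + n * (u + 1) + u * (u + 1))
        ≤ (n * (n - 1) + n * (u + 2) + (u + 1) * (u + 2)) * (n - 1) := by
      -- (n-1)*A_{u+1} = n*A_u + (u+1)*(n-u-2)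
      have hid : (n * (n - 1) + n * (u + 2) + (u + 1) * (u + 2)) * (n - 1)
          = n * (n * (n - 1) + n * (u + 1) + u * (u + 1)) + (u + 1) * (n - (u + 2)) := by
        zify [hn, hu2, show (1:ℕ) ≤ n by omega]
        ring
      omega
    calc n ^ (u + 1 + 2) = n * n ^ (u + 2) := by ring
      _ ≤ n * ((n * (n - 1) + n * (u + 1) + u * (u + 1)) * (n - 1) ^ u) :=
          Nat.mul_le_mul_left _ (ih hu')
      _ = (n * (n * (n - 1) + n * (u + 1) + u * (u + 1))) * (n - 1) ^ u := by ring
      _ ≤ ((n * (n - 1) + n * (u + 2) + (u + 1) * (u + 2)) * (n - 1)) * (n - 1) ^ u :=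
          Nat.mul_le_mul_right _ step
      _ = (n * (n - 1) + n * (u + 1 + 1) + (u + 1) * (u + 1 + 1)) * (n - 1) ^ (u + 1) := by
          ring

lemma analytic (n u : ℕ) (hn : 2 ≤ n) (hu : u ≤ n - 1) :
    ∑ m ∈ Icc 1 n, ((u.choose m : ℝ) * (1 / ((n:ℝ) - 1)) ^ m / (m + 1)) ≤ (u : ℝ) / n := by
  have hn1 : (1:ℝ) ≤ (n:ℝ) - 1 := by
    have : (2:ℝ) ≤ n := by exact_mod_cast hn
    linarith
  set r : ℝ := 1 / ((n:ℝ) - 1) with hrdef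
  have hr : 0 < r := by positivity
  have hnR : (0:ℝ) < n := by positivity
  -- restrict to Icc 1 u
  have hsub : Finset.Icc 1 u ⊆ Finset.Icc 1 n := by
    apply Finset.Icc_subset_Icc_right; omega
  rw [← Finset.sum_subset hsub (fun m _ hm => by
    have : u < m := by
      simp only [Finset.mem_Icc] at *
      omega
    rw [Nat.choose_eq_zero_of_lt this]
    simp)]
  -- multiply by (u+1)*r
  have hmulpos : (0:ℝ) < ((u:ℝ) + 1) * r := by positivity
  rw [← mul_le_mul_iff_right₀ hmulpos]
  -- identity for LHS
  have hLHS : ((u:ℝ) + 1) * r * ∑ m ∈ Icc 1 u, ((u.choose m : ℝ) * r ^ m / (m + 1))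
      = (1 + r) ^ (u + 1) - 1 - ((u:ℝ) + 1) * r := by
    rw [Finset.mul_sum]
    have hterm : ∀ m ∈ Icc 1 u, ((u:ℝ) + 1) * r * ((u.choose m : ℝ) * r ^ m / (m + 1))
        = ((u+1).choose (m+1) : ℝ) * r ^ (m + 1) := by
      intro m _
      have hc : (u + 1) * u.choose m = (u+1).choose (m+1) * (m+1) := by
        exact_mod_cast Nat.add_one_mul_choose_eq u m
      have hc' : ((u:ℝ) + 1) * (u.choose m : ℝ) = ((u+1).choose (m+1) : ℝ) * ((m:ℝ)+1) := by
        exact_mod_cast hc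
      have hm1 : ((m:ℝ) + 1) ≠ 0 := by positivity
      have hdiv : ((u:ℝ) + 1) * (u.choose m : ℝ) / ((m:ℝ) + 1) = ((u+1).choose (m+1) : ℝ) := by
        rw [div_eq_iff hm1]
        exact_mod_cast hc
      calc ((u:ℝ) + 1) * r * ((u.choose m : ℝ) * r ^ m / ((m:ℝ) + 1))
          = (((u:ℝ) + 1) * (u.choose m : ℝ) / ((m:ℝ) + 1)) * (r * r ^ m) := by ring
        _ = ((u+1).choose (m+1) : ℝ) * r ^ (m + 1) := by rw [hdiv, ← pow_succ']
    rw [Finset.sum_congr rfl hterm]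
    have hbin : (r + 1) ^ (u + 1)
        = ∑ l ∈ range (u + 2), r ^ l * 1 ^ (u + 1 - l) * ((u+1).choose l : ℝ) :=
      add_pow r 1 (u+1)
    have hpeel : ∑ l ∈ range (u + 2), r ^ l * 1 ^ (u + 1 - l) * ((u+1).choose l : ℝ)
        = (∑ i ∈ range u, r ^ (i+2) * 1 ^ (u + 1 - (i+2)) * ((u+1).choose (i+2) : ℝ))
          + r ^ 1 * 1 ^ (u + 1 - 1) * ((u+1).choose 1 : ℝ)
          + r ^ 0 * 1 ^ (u + 1 - 0) * ((u+1).choose 0 : ℝ) := by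
      rw [Finset.sum_range_succ' _ (u+1), Finset.sum_range_succ' _ u]
    have hIcc : ∑ m ∈ Icc 1 u, ((u+1).choose (m+1) : ℝ) * r ^ (m + 1)
        = ∑ i ∈ range u, ((u+1).choose (i+2) : ℝ) * r ^ (i + 2) := by
      rw [← Finset.Ico_add_one_right_eq_Icc, Finset.sum_Ico_eq_sum_range]
      simp only [Nat.add_sub_cancel, Nat.succ_sub_one]
      refine Finset.sum_congr rfl fun i _ => by rw [Nat.add_comm 1 i]
    rw [hIcc]
    have := hbin.trans hpeel
    simp only [one_pow, mul_one, pow_zero, pow_one, Nat.choose_zero_right, Nat.choose_one_right,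
      Nat.cast_one, Nat.cast_add] at this
    have hr1 : (r + 1) = (1 + r) := by ring
    rw [hr1] at this
    have : ∑ i ∈ range u, r ^ (i+2) * ((u+1).choose (i+2) : ℝ)
        = (1 + r) ^ (u + 1) - r * ((u:ℝ) + 1) - 1 := by linarith
    rw [Finset.sum_congr rfl (fun i _ => (mul_comm (((u+1).choose (i+2) : ℝ)) (r ^ (i+2))))]
    rw [this]; ring
  rw [hLHS]
  -- bound (1+r)^(u+1)
  have hA : ((n:ℝ) ^ (u + 2)) ≤ ((n:ℝ) * ((n:ℝ) - 1) + n * (u + 1) + u * (u + 1)) * ((n:ℝ) - 1) ^ u := by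
    have := nat_pow_bound n hn u hu
    have h1n : 1 ≤ n := by omega
    have hcast : ((n * (n - 1) + n * (u + 1) + u * (u + 1)) * (n - 1) ^ u : ℕ) = 
        (((n:ℝ) * ((n:ℝ) - 1) + n * (u + 1) + u * (u + 1)) * ((n:ℝ) - 1) ^ u : ℝ) := by
      push_cast [Nat.cast_sub h1n]
      ring
    calc ((n:ℝ) ^ (u + 2)) = ((n ^ (u+2) : ℕ) : ℝ) := by push_cast; ring
      _ ≤ (((n * (n - 1) + n * (u + 1) + u * (u + 1)) * (n - 1) ^ u : ℕ) : ℝ) := by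
          exact_mod_cast this
      _ = _ := hcast
  have hpow : (1 + r) ^ (u + 1) ≤ 1 + ((u:ℝ) + 1) * r + (u:ℝ) * ((u:ℝ)+1) / ((n:ℝ) * ((n:ℝ)-1)) := by
    have h1r : 1 + r = (n:ℝ) / ((n:ℝ) - 1) := by
      rw [hrdef]; field_simp; ring
    rw [h1r, div_pow]
    rw [div_le_iff₀ (by positivity)]
    have hrhs : (1 + ((u:ℝ) + 1) * r + (u:ℝ) * ((u:ℝ)+1) / ((n:ℝ) * ((n:ℝ)-1))) * ((n:ℝ)-1) ^ (u+1)
        = (((n:ℝ) * ((n:ℝ) - 1) + n * (u + 1) + u * (u + 1)) * ((n:ℝ) - 1) ^ u) / (n:ℝ) := by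
      rw [hrdef]
      field_simp
      ring
    rw [hrhs, le_div_iff₀ hnR]
    calc (n:ℝ) ^ (u+1) * (n:ℝ) = (n:ℝ) ^ (u+2) := by ring
      _ ≤ _ := hA
  have hfin : ((u:ℝ) + 1) * r * ((u:ℝ) / n) = (u:ℝ) * ((u:ℝ)+1) / ((n:ℝ) * ((n:ℝ)-1)) := by
    rw [hrdef]; field_simp
  rw [hfin]
  linarith

lemma fiber (n N u s a : ℕ) (hn : 2 ≤ n) (hs : 1 ≤ s) (hNu : N ≤ s + u) (haN : a + N ≤ n)
    (hun : u ≤ n - 1) :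
    ∑ b ∈ range (N + 1),
        (if s < b then (N.choose b : ℝ) * ((1/(n:ℝ)) ^ (a + b) * (1 - 1/(n:ℝ)) ^ (n - (a + b))) else 0)
      ≤ ((u:ℝ) / n) * ((N.choose s : ℝ) * ((1/(n:ℝ)) ^ (a + s) * (1 - 1/(n:ℝ)) ^ (n - (a + s)))) := by
  have hnR : (2:ℝ) ≤ (n:ℝ) := by exact_mod_cast hn
  set p : ℝ := 1/(n:ℝ) with hp
  set q : ℝ := 1 - 1/(n:ℝ) with hq
  set r : ℝ := 1 / ((n:ℝ) - 1) with hr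
  have hn1 : (0:ℝ) < (n:ℝ) - 1 := by linarith
  have hnn : (0:ℝ) < (n:ℝ) := by linarith
  have hq0 : 0 < q := by
    rw [hq, sub_pos, div_lt_one hnn]; linarith
  have hp0 : 0 ≤ p := by positivity
  have hr0 : 0 ≤ r := le_of_lt (by rw [hr]; exact div_pos one_pos hn1)
  have hpr : p = r * q := by
    have h1 : ((n:ℝ) - 1) ≠ 0 := ne_of_gt hn1
    have h2 : ((n:ℝ)) ≠ 0 := ne_of_gt hnn
    rw [hp, hq, hr]
    field_simp
  -- reindex to m
  have step1 : ∑ b ∈ range (N + 1),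
        (if s < b then (N.choose b : ℝ) * (p ^ (a + b) * q ^ (n - (a + b))) else 0)
      = ∑ m ∈ Icc 1 n,
        (if s + m ≤ N then (N.choose (s + m) : ℝ) * (p ^ (a + (s + m)) * q ^ (n - (a + (s + m)))) else 0) := by
    rw [← Finset.sum_filter, ← Finset.sum_filter]
    refine Finset.sum_bij' (i := fun b _ => b - s) (j := fun m _ => s + m) ?_ ?_ ?_ ?_ ?_
    · intro b hb
      simp only [Finset.mem_filter, Finset.mem_range] at hb
      simp only [Finset.mem_filter, Finset.mem_Icc]
      omega
    · intro m hm
      simp only [Finset.mem_filter, Finset.mem_Icc] at hm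
      simp only [Finset.mem_filter, Finset.mem_range]
      omega
    · intro b hb
      simp only [Finset.mem_filter, Finset.mem_range] at hb
      show s + (b - s) = b
      omega
    · intro m hm
      show (s + m) - s = m
      omega
    · intro b hb
      simp only [Finset.mem_filter, Finset.mem_range] at hb
      have hbs : s + (b - s) = b := by omega
      rw [hbs]
  rw [step1]
  -- bound per m
  have step2 : ∑ m ∈ Icc 1 n,
        (if s + m ≤ N then (N.choose (s + m) : ℝ) * (p ^ (a + (s + m)) * q ^ (n - (a + (s + m)))) else 0)
      ≤ ∑ m ∈ Icc 1 n, ((u.choose m : ℝ) * r ^ m / (m + 1))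
          * ((N.choose s : ℝ) * (p ^ (a + s) * q ^ (n - (a + s)))) := by
    refine Finset.sum_le_sum fun m hm => ?_
    by_cases hsm : s + m ≤ N
    · rw [if_pos hsm]
      have hasm : a + (s + m) ≤ n := by omega
      have hqsplit : q ^ (n - (a + s)) = q ^ (n - (a + (s + m))) * q ^ m := by
        rw [← pow_add]
        congr 1
        omega
      have hpsplit : p ^ (a + (s + m)) = p ^ (a + s) * (r ^ m * q ^ m) := by
        have h1 : p ^ (a + (s + m)) = p ^ (a + s) * p ^ m := by
          rw [← pow_add]; congr 1; omega
        have h2 : p ^ m = r ^ m * q ^ m := by rw [hpr, mul_pow]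
        rw [h1, h2]
      have hchoose : ((m:ℝ) + 1) * (N.choose (s + m) : ℝ) ≤ (u.choose m : ℝ) * (N.choose s : ℝ) := by
        exact_mod_cast choose_ratio N s u hs hNu m
      have hchoose' : (N.choose (s + m) : ℝ) ≤ (u.choose m : ℝ) * (N.choose s : ℝ) / ((m:ℝ) + 1) := by
        rw [le_div_iff₀ (by positivity)]
        calc (N.choose (s+m) : ℝ) * ((m:ℝ)+1) = ((m:ℝ)+1) * (N.choose (s+m):ℝ) := by ring
          _ ≤ _ := hchoose
      calc (N.choose (s + m) : ℝ) * (p ^ (a + (s + m)) * q ^ (n - (a + (s + m))))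
          = (N.choose (s + m) : ℝ) * (r ^ m * (p ^ (a + s) * (q ^ (n - (a + (s + m))) * q ^ m))) := by
            rw [hpsplit]; ring
        _ = (N.choose (s + m) : ℝ) * (r ^ m * (p ^ (a + s) * q ^ (n - (a + s)))) := by
            rw [hqsplit]
        _ ≤ ((u.choose m : ℝ) * (N.choose s : ℝ) / ((m:ℝ) + 1)) * (r ^ m * (p ^ (a + s) * q ^ (n - (a + s)))) := by
            apply mul_le_mul_of_nonneg_right hchoose'
            positivity
        _ = ((u.choose m : ℝ) * r ^ m / (m + 1)) * ((N.choose s : ℝ) * (p ^ (a + s) * q ^ (n - (a + s)))) := by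
            ring
    · rw [if_neg hsm]
      positivity
  refine step2.trans ?_
  rw [← Finset.sum_mul]
  apply mul_le_mul_of_nonneg_right (analytic n u hn hun)
  positivity

lemma key (n i : ℕ) (hn : 2 ≤ n) (hi : i ≤ n) (x : Fin n → Bool) (hx : onesCount n x < i) :
    ∑ z ∈ univ.filter (fun z : Fin n → Bool => i < onesCount n z), mutProb n (1/(n:ℝ)) x z
      ≤ (((n:ℝ) - i) / ((n:ℝ) * (1 - 1/(n:ℝ)) ^ (i - 1))) *
        ∑ z ∈ univ.filter (fun z : Fin n → Bool => onesCount n z = i), mutProb n (1/(n:ℝ)) x z := by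
  classical
  have hnR : (2:ℝ) ≤ (n:ℝ) := by exact_mod_cast hn
  have hnn : (0:ℝ) < n := by linarith
  have hq0 : (0:ℝ) < 1 - 1/(n:ℝ) := by
    rw [sub_pos, div_lt_one hnn]; linarith
  have hq1 : (1:ℝ) - 1/(n:ℝ) ≤ 1 := by
    have : (0:ℝ) ≤ 1/(n:ℝ) := by positivity
    linarith
  set j := onesCount n x with hj
  set T := (univ.filter fun l : Fin n => x l = true) with hT
  have hTc : T.card = j := rfl
  have hTcc : Tᶜ.card = n - j := by
    rw [Finset.card_compl, hTc, Fintype.card_fin]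
  set N := n - j with hN
  set u := n - i with hu
  set p : ℝ := 1/(n:ℝ) with hp
  set q : ℝ := 1 - 1/(n:ℝ) with hq
  set c : ℝ := ((n:ℝ) - i) / ((n:ℝ) * q ^ (i - 1)) with hc
  have hcu : (u:ℝ) / n ≤ c := by
    have hue : (u:ℝ) = (n:ℝ) - i := by
      rw [hu]; push_cast [Nat.cast_sub hi]; ring
    have hqe : q ^ (i-1) ≤ 1 := pow_le_one₀ (le_of_lt hq0) hq1
    have hden : (0:ℝ) < (n:ℝ) * q ^ (i-1) := mul_pos hnn (pow_pos hq0 _)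
    rw [hc, ← hue, div_le_div_iff₀ hnn hden]
    have h1 : (n:ℝ) * q ^ (i-1) ≤ (n:ℝ) * 1 := by
      apply mul_le_mul_of_nonneg_left hqe (le_of_lt hnn)
    have h2 : (0:ℝ) ≤ (u:ℝ) := by positivity
    nlinarith
  have hc0 : 0 ≤ c := by
    have : (0:ℝ) ≤ (u:ℝ)/n := by positivity
    linarith
  -- rewrite both sides via reindexing
  rw [Finset.sum_filter, Finset.sum_filter]
  have hL : (∑ z : Fin n → Bool, if i < onesCount n z then mutProb n p x z else 0)
      = ∑ A ∈ T.powerset, ∑ b ∈ range (N + 1),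
          ((N.choose b : ℝ) * (if i < (j - A.card) + b then p ^ (A.card + b) * q ^ (n - (A.card + b)) else 0)) := by
    calc (∑ z : Fin n → Bool, if i < onesCount n z then mutProb n p x z else 0)
        = ∑ A ∈ T.powerset, ∑ B ∈ Tᶜ.powerset,
            (if i < (j - A.card) + B.card then p ^ (A.card + B.card) * q ^ (n - (A.card + B.card)) else 0) :=
          sum_reindex x (fun v d => if i < v then p ^ d * q ^ (n - d) else 0)
      _ = _ := by
          refine Finset.sum_congr rfl fun A _ => ?_
          rw [sum_powerset_card Tᶜ (fun b => if i < (j - A.card) + b then p ^ (A.card + b) * q ^ (n - (A.card + b)) else 0), hTcc]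
  have hR : (∑ z : Fin n → Bool, if onesCount n z = i then mutProb n p x z else 0)
      = ∑ A ∈ T.powerset, ∑ b ∈ range (N + 1),
          ((N.choose b : ℝ) * (if (j - A.card) + b = i then p ^ (A.card + b) * q ^ (n - (A.card + b)) else 0)) := by
    calc (∑ z : Fin n → Bool, if onesCount n z = i then mutProb n p x z else 0)
        = ∑ A ∈ T.powerset, ∑ B ∈ Tᶜ.powerset,
            (if (j - A.card) + B.card = i then p ^ (A.card + B.card) * q ^ (n - (A.card + B.card)) else 0) :=
          sum_reindex x (fun v d => if v = i then p ^ d * q ^ (n - d) else 0)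
      _ = _ := by
          refine Finset.sum_congr rfl fun A _ => ?_
          rw [sum_powerset_card Tᶜ (fun b => if (j - A.card) + b = i then p ^ (A.card + b) * q ^ (n - (A.card + b)) else 0), hTcc]
  rw [hL, hR, Finset.mul_sum]
  refine Finset.sum_le_sum fun A hA => ?_
  have haj : A.card ≤ j := by
    rw [← hTc]; exact Finset.card_le_card (Finset.mem_powerset.mp hA)
  set a := A.card with ha
  set s := (i - j) + a with hs
  -- inner left sum
  have hguardL : ∀ b : ℕ, (if i < (j - a) + b then p ^ (a + b) * q ^ (n - (a + b)) else 0)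
      = (if s < b then p ^ (a + b) * q ^ (n - (a + b)) else 0) := by
    intro b
    exact if_congr (by omega) rfl rfl
  have hguardR : ∀ b : ℕ, (if (j - a) + b = i then p ^ (a + b) * q ^ (n - (a + b)) else 0)
      = (if b = s then p ^ (a + b) * q ^ (n - (a + b)) else 0) := by
    intro b
    exact if_congr (by omega) rfl rfl
  have hinnerR : ∑ b ∈ range (N + 1),
      ((N.choose b : ℝ) * (if (j - a) + b = i then p ^ (a + b) * q ^ (n - (a + b)) else 0))
      = (N.choose s : ℝ) * (p ^ (a + s) * q ^ (n - (a + s))) := by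
    rw [Finset.sum_congr rfl fun b _ => by rw [hguardR b, mul_ite, mul_zero]]
    rw [Finset.sum_ite_eq' (range (N + 1)) s (fun b => (N.choose b : ℝ) * (p ^ (a + b) * q ^ (n - (a + b))))]
    by_cases hsr : s ∈ range (N + 1)
    · rw [if_pos hsr]
    · rw [if_neg hsr]
      have : N.choose s = 0 := by
        apply Nat.choose_eq_zero_of_lt
        simp only [Finset.mem_range] at hsr
        omega
      rw [this]
      simp
  rw [hinnerR]
  calc ∑ b ∈ range (N + 1),
        ((N.choose b : ℝ) * (if i < (j - a) + b then p ^ (a + b) * q ^ (n - (a + b)) else 0))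
      = ∑ b ∈ range (N + 1),
        (if s < b then (N.choose b : ℝ) * (p ^ (a + b) * q ^ (n - (a + b))) else 0) := by
        refine Finset.sum_congr rfl fun b _ => ?_
        rw [hguardL b, mul_ite, mul_zero]
    _ ≤ ((u:ℝ) / n) * ((N.choose s : ℝ) * (p ^ (a + s) * q ^ (n - (a + s)))) := by
        apply fiber n N u s a hn (by omega) (by omega) (by omega) (by omega)
    _ ≤ c * ((N.choose s : ℝ) * (p ^ (a + s) * q ^ (n - (a + s)))) := by
        apply mul_le_mul_of_nonneg_right hcu
        positivity

lemma mutProb_nonneg {n : ℕ} (p : ℝ) (hp0 : 0 ≤ p) (hp1 : p ≤ 1) (x y : Fin n → Bool) :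
    0 ≤ mutProb n p x y := by
  unfold mutProb
  have : (0:ℝ) ≤ 1 - p := by linarith
  positivity

lemma stepProb_nonneg {n : ℕ} (p : ℝ) (hp0 : 0 ≤ p) (hp1 : p ≤ 1) (f : (Fin n → Bool) → ℝ) (x z : Fin n → Bool) :
    0 ≤ stepProb n p f x z := by
  unfold stepProb
  apply Finset.sum_nonneg
  intro y _
  by_cases h : (if f x ≤ f y then y else x) = z
  · rw [if_pos h]; exact mutProb_nonneg p hp0 hp1 x y
  · rw [if_neg h]

lemma stepProb_eq_mut {n : ℕ} (p : ℝ) (x z : Fin n → Bool)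
    (hlt : onesCount n x < onesCount n z) :
    stepProb n p (fun w => (onesCount n w : ℝ)) x z = mutProb n p x z := by
  unfold stepProb
  have hxz : x ≠ z := by
    intro h; rw [h] at hlt; omega
  have : ∀ y : Fin n → Bool,
      (if (if (onesCount n x : ℝ) ≤ (onesCount n y : ℝ) then y else x) = z then mutProb n p x y else 0)
      = (if y = z then mutProb n p x y else 0) := by
    intro y
    by_cases hyz : y = z
    · subst hyz
      have hle : ((onesCount n x : ℝ)) ≤ (onesCount n y : ℝ) := by
        exact_mod_cast le_of_lt hlt
      rw [if_pos hle]
    · rw [if_neg hyz]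
      by_cases hle : (onesCount n x : ℝ) ≤ (onesCount n y : ℝ)
      · rw [if_pos hle, if_neg hyz]
      · rw [if_neg hle, if_neg hxz]
  rw [Finset.sum_congr rfl fun y _ => this y]
  rw [Finset.sum_ite_eq' univ z (fun y => mutProb n p x y), if_pos (Finset.mem_univ z)]

lemma stepProb_eq_zero {n : ℕ} (p : ℝ) (x z : Fin n → Bool)
    (hlt : onesCount n z < onesCount n x) :
    stepProb n p (fun w => (onesCount n w : ℝ)) x z = 0 := by
  unfold stepProb
  apply Finset.sum_eq_zero
  intro y _
  rw [if_neg]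
  intro h
  by_cases hle : (onesCount n x : ℝ) ≤ (onesCount n y : ℝ)
  · rw [if_pos hle] at h
    subst h
    have : (onesCount n x : ℝ) ≤ (onesCount n y : ℝ) := hle
    rw [Nat.cast_le] at this
    omega
  · rw [if_neg hle] at h
    subst h
    omega

-- existence of a one-step improvement target

lemma exists_reach {n : ℕ} (i : ℕ) (hi : i ≤ n) (x : Fin n → Bool) (hx : onesCount n x < i) :
    ∃ z : Fin n → Bool, onesCount n z = i ∧ hammingDist x z = i - onesCount n x := by
  classical
  set T := (univ.filter fun l : Fin n => x l = true) with hT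
  have hTc : T.card = onesCount n x := rfl
  have hTcc : Tᶜ.card = n - onesCount n x := by
    rw [Finset.card_compl, hTc, Fintype.card_fin]
  obtain ⟨B, hBsub, hBcard⟩ := Finset.exists_subset_card_eq
    (show i - onesCount n x ≤ Tᶜ.card by rw [hTcc]; omega)
  have hxB : ∀ l ∈ B, x l = false := by
    intro l hl
    have := hBsub hl
    rw [Finset.mem_compl, hT, Finset.mem_filter] at this
    simpa using fun hc => this ⟨Finset.mem_univ l, hc⟩
  refine ⟨fun l => if l ∈ B then true else x l, ?_, ?_⟩
  · have hdisj : Disjoint T B := by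
      rw [Finset.disjoint_left]
      intro l hlT hlB
      have h1 := hxB l hlB
      rw [hT, Finset.mem_filter] at hlT
      rw [hlT.2] at h1
      exact absurd h1 (by simp)
    have hones : (univ.filter fun l : Fin n => (if l ∈ B then true else x l) = true) = T ∪ B := by
      ext l
      by_cases hlB : l ∈ B <;>
        simp [Finset.mem_filter, Finset.mem_union, hlB, hT]
    rw [onesCount, hones, Finset.card_union_of_disjoint hdisj, hTc, hBcard]
    omega
  · rw [hamming_eq_filter]
    have : (univ.filter fun l => x l ≠ (if l ∈ B then true else x l)) = B := by
      ext l
      by_cases hlB : l ∈ B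
      · simp [Finset.mem_filter, hlB, hxB l hlB]
      · simp [Finset.mem_filter, hlB]
    rw [this, hBcard]

/-- For `n ≥ 2` and `i ∈ [0..n]`, a run of the (1+1) EA with mutation
rate `1/n` maximizing `OneMax`, started with a (possibly random) search point of
`OneMax`-value less than `i`, never has a current search point of `OneMax`-value
exactly `i` with probability at most `(n-i)/(n·(1-1/n)^{i-1})`. -/
theorem oneMax_skip_level_probability
    {Ω : Type*} [MeasurableSpace Ω] (μ : Measure Ω) [IsProbabilityMeasure μ]
    (n : ℕ) (hn : 2 ≤ n) (i : ℕ) (hi : i ≤ n)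
    (Y : ℕ → Ω → Fin n → Bool)
    (hrun : IsEARun μ n (1 / n) (fun x => (onesCount n x : ℝ)) Y)
    -- the (possibly random) initial search point has OneMax-value below `i` a.s.
    (hinit : μ {ω | onesCount n (Y 0 ω) < i} = 1) :
    μ {ω | ∀ t : ℕ, onesCount n (Y t ω) ≠ i}
      ≤ ENNReal.ofReal (((n : ℝ) - i) / (n * (1 - 1 / n) ^ (i - 1))) := by
  classical
  rcases Nat.eq_zero_or_pos i with hi0 | hipos
  · exfalso
    subst hi0
    have hempty : ({ω | onesCount n (Y 0 ω) < 0} : Set Ω) = ∅ := by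
      ext ω; simp
    rw [hempty, measure_empty] at hinit
    exact zero_ne_one hinit
  obtain ⟨hY, hstep⟩ := hrun
  have hnR : (2:ℝ) ≤ (n:ℝ) := by exact_mod_cast hn
  have hnn : (0:ℝ) < n := by linarith
  set p : ℝ := 1/(n:ℝ) with hp
  have hp0 : 0 ≤ p := by positivity
  have hp1 : p ≤ 1 := by rw [hp, div_le_one hnn]; linarith
  have hq0 : (0:ℝ) < 1 - p := by rw [hp, sub_pos, div_lt_one hnn]; linarith
  have hq1 : (1:ℝ) - p ≤ 1 := by linarith
  set c : ℝ := ((n:ℝ) - i) / ((n:ℝ) * (1 - p) ^ (i - 1)) with hc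
  have hc0 : 0 ≤ c := by
    apply div_nonneg
    · have : (i:ℝ) ≤ (n:ℝ) := by exact_mod_cast hi
      linarith
    · positivity
  set f : (Fin n → Bool) → ℝ := fun w => (onesCount n w : ℝ) with hf
  -- finsets of values
  set Lt : Finset (Fin n → Bool) := univ.filter (fun z => onesCount n z < i) with hLt
  set Eqi : Finset (Fin n → Bool) := univ.filter (fun z => onesCount n z = i) with hEqi
  set Gt : Finset (Fin n → Bool) := univ.filter (fun z => i < onesCount n z) with hGt
  set Ge : Finset (Fin n → Bool) := univ.filter (fun z => i ≤ onesCount n z) with hGe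
  -- measurability
  have hmeasx : ∀ t (x : Fin n → Bool), MeasurableSet {ω | Y t ω = x} := by
    intro t x
    exact hY t (MeasurableSet.of_discrete (s := {x}))
  have hmeasS : ∀ t (S : Set (Fin n → Bool)), MeasurableSet {ω | Y t ω ∈ S} := by
    intro t S
    exact hY t MeasurableSet.of_discrete
  have hmeas2 : ∀ t s (A C : Finset (Fin n → Bool)),
      MeasurableSet {ω | Y t ω ∈ A ∧ Y s ω ∈ C} := by
    intro t s A C
    exact (hmeasS t A).inter (hmeasS s C)
  have hmeas2' : ∀ t s (A : Finset (Fin n → Bool)) (x : Fin n → Bool),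
      MeasurableSet {ω | Y t ω ∈ A ∧ Y s ω = x} := by
    intro t s A x
    exact (hmeasS t A).inter (hmeasx s x)
  -- splitting lemmas
  have msplit1 : ∀ (t : ℕ) (x : Fin n → Bool) (A : Finset (Fin n → Bool)),
      μ {ω | Y (t+1) ω ∈ A ∧ Y t ω = x}
        = ∑ z ∈ A, ENNReal.ofReal (stepProb n p f x z) * μ {ω | Y t ω = x} := by
    intro t x A
    have hset : {ω | Y (t+1) ω ∈ A ∧ Y t ω = x}
        = ⋃ z ∈ A, {ω | Y (t+1) ω = z ∧ Y t ω = x} := by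
      ext ω
      simp only [Set.mem_setOf_eq, Set.mem_iUnion]
      constructor
      · rintro ⟨h1, h2⟩; exact ⟨Y (t+1) ω, h1, rfl, h2⟩
      · rintro ⟨z, hz, h1, h2⟩; rw [h1]; exact ⟨hz, h2⟩
    rw [hset, measure_biUnion_finset]
    · exact Finset.sum_congr rfl fun z _ => hstep t x z
    · intro z1 _ z2 _ hne
      rw [Function.onFun]
      rw [Set.disjoint_left]
      rintro ω ⟨e1, -⟩ ⟨e2, -⟩
      exact hne (e1.symm.trans e2)
    · intro z _
      exact (hmeasx (t+1) z).inter (hmeasx t x)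
  have msplit2 : ∀ (t : ℕ) (A C : Finset (Fin n → Bool)),
      μ {ω | Y (t+1) ω ∈ A ∧ Y t ω ∈ C}
        = ∑ x ∈ C, μ {ω | Y (t+1) ω ∈ A ∧ Y t ω = x} := by
    intro t A C
    have hset : {ω | Y (t+1) ω ∈ A ∧ Y t ω ∈ C}
        = ⋃ x ∈ C, {ω | Y (t+1) ω ∈ A ∧ Y t ω = x} := by
      ext ω
      simp only [Set.mem_setOf_eq, Set.mem_iUnion]
      constructor
      · rintro ⟨h1, h2⟩; exact ⟨Y t ω, h2, h1, rfl⟩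
      · rintro ⟨x, hx, h1, h2⟩; rw [← h2] at hx; exact ⟨h1, hx⟩
    rw [hset, measure_biUnion_finset]
    · intro x1 _ x2 _ hne
      rw [Function.onFun, Set.disjoint_left]
      rintro ω ⟨-, e1⟩ ⟨-, e2⟩
      exact hne (e1.symm.trans e2)
    · intro x _
      exact hmeas2' (t+1) t A x
  have mYin : ∀ (t : ℕ) (C : Finset (Fin n → Bool)),
      μ {ω | Y t ω ∈ C} = ∑ x ∈ C, μ {ω | Y t ω = x} := by
    intro t C
    have hset : {ω | Y t ω ∈ C} = ⋃ x ∈ C, {ω | Y t ω = x} := by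
      ext ω
      simp only [Set.mem_setOf_eq, Set.mem_iUnion]
      constructor
      · intro h; exact ⟨Y t ω, h, rfl⟩
      · rintro ⟨x, hx, h⟩; rw [h]; exact hx
    rw [hset, measure_biUnion_finset]
    · intro x1 _ x2 _ hne
      rw [Function.onFun, Set.disjoint_left]
      rintro ω e1 e2
      exact hne (e1.symm.trans e2)
    · intro x _
      exact hmeasx t x
  -- monotonicity
  have hmono0 : ∀ t : ℕ, μ {ω | onesCount n (Y (t+1) ω) < onesCount n (Y t ω)} = 0 := by
    intro t
    have hset : {ω | onesCount n (Y (t+1) ω) < onesCount n (Y t ω)}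
        = ⋃ x : Fin n → Bool,
            {ω | Y (t+1) ω ∈ (univ.filter fun z => onesCount n z < onesCount n x) ∧ Y t ω = x} := by
      ext ω
      simp only [Set.mem_setOf_eq, Set.mem_iUnion, Finset.mem_filter, Finset.mem_univ, true_and]
      constructor
      · intro h; exact ⟨Y t ω, h, rfl⟩
      · rintro ⟨x, h1, h2⟩; rw [h2]; exact h1
    rw [hset]
    apply measure_iUnion_null
    intro x
    rw [msplit1]
    apply Finset.sum_eq_zero
    intro z hz
    rw [Finset.mem_filter] at hz
    rw [stepProb_eq_zero p x z hz.2, ENNReal.ofReal_zero, zero_mul]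
  set G : Set Ω := {ω | ∀ t : ℕ, onesCount n (Y t ω) ≤ onesCount n (Y (t+1) ω)} with hG
  have hGc : μ Gᶜ = 0 := by
    have hset : Gᶜ = ⋃ t : ℕ, {ω | onesCount n (Y (t+1) ω) < onesCount n (Y t ω)} := by
      ext ω
      simp only [hG, Set.mem_compl_iff, Set.mem_setOf_eq, Set.mem_iUnion, not_forall, not_le]
    rw [hset]
    exact measure_iUnion_null hmono0
  have hGmeas : MeasurableSet G := by
    have : G = ⋂ t : ℕ, {ω | (Y t ω, Y (t+1) ω) ∈
        {P : (Fin n → Bool) × (Fin n → Bool) | onesCount n P.1 ≤ onesCount n P.2}} := by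
      ext ω; simp [hG]
    rw [this]
    apply MeasurableSet.iInter
    intro t
    exact ((hY t).prodMk (hY (t+1))) MeasurableSet.of_discrete
  have hGmono : ∀ ω ∈ G, ∀ s t : ℕ, s ≤ t → onesCount n (Y s ω) ≤ onesCount n (Y t ω) := by
    intro ω hω s t hst
    exact monotone_nat_of_le_succ (fun k => hω k) hst
  -- delta decay
  set δ : ℝ := p ^ n * (1 - p) ^ n with hδ
  have hδ0 : 0 < δ := by
    rw [hδ]; apply mul_pos (pow_pos (by rw [hp]; positivity) n) (pow_pos hq0 n)
  have hδ1 : δ ≤ 1 := by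
    rw [hδ]
    calc p ^ n * (1-p) ^ n ≤ 1 * 1 := by
          apply mul_le_mul (pow_le_one₀ hp0 hp1) (pow_le_one₀ (le_of_lt hq0) hq1)
            (pow_nonneg (le_of_lt hq0) n) zero_le_one
      _ = 1 := by ring
  have hdelta : ∀ x : Fin n → Bool, onesCount n x < i →
      δ ≤ ∑ z ∈ Ge, stepProb n p f x z := by
    intro x hx
    obtain ⟨z₀, hz1, hz2⟩ := exists_reach i hi x hx
    have hz0mem : z₀ ∈ Ge := by
      rw [hGe, Finset.mem_filter]
      exact ⟨Finset.mem_univ _, le_of_eq hz1.symm⟩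
    have hstep0 : stepProb n p f x z₀ = mutProb n p x z₀ := by
      rw [hf]; exact stepProb_eq_mut p x z₀ (by omega)
    have hmut : δ ≤ mutProb n p x z₀ := by
      unfold mutProb
      rw [hz2, hδ]
      have hd1 : p ^ n ≤ p ^ (i - onesCount n x) :=
        pow_le_pow_of_le_one hp0 hp1 (by omega)
      have hd2 : (1-p) ^ n ≤ (1-p) ^ (n - (i - onesCount n x)) :=
        pow_le_pow_of_le_one (le_of_lt hq0) hq1 (by omega)
      exact mul_le_mul hd1 hd2 (pow_nonneg (le_of_lt hq0) n) (pow_nonneg hp0 _)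
    calc δ ≤ mutProb n p x z₀ := hmut
      _ = stepProb n p f x z₀ := hstep0.symm
      _ ≤ ∑ z ∈ Ge, stepProb n p f x z := by
          apply Finset.single_le_sum (fun z _ => stepProb_nonneg p hp0 hp1 f x z) hz0mem
  -- one-step contraction
  have hb : ∀ t : ℕ, μ {ω | Y (t+1) ω ∈ Lt} ≤ ENNReal.ofReal (1 - δ) * μ {ω | Y t ω ∈ Lt} := by
    intro t
    have hcover : {ω | Y (t+1) ω ∈ Lt}
        ⊆ {ω | Y (t+1) ω ∈ Lt ∧ Y t ω ∈ Lt} ∪ {ω | Y (t+1) ω ∈ Lt ∧ Y t ω ∈ Ge} := by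
      intro ω hω
      by_cases hx : Y t ω ∈ Lt
      · exact Or.inl ⟨hω, hx⟩
      · refine Or.inr ⟨hω, ?_⟩
        rw [hGe, Finset.mem_filter]
        rw [hLt, Finset.mem_filter] at hx
        push_neg at hx
        exact ⟨Finset.mem_univ _, hx (Finset.mem_univ _)⟩
    have hzero : μ {ω | Y (t+1) ω ∈ Lt ∧ Y t ω ∈ Ge} = 0 := by
      rw [msplit2]
      apply Finset.sum_eq_zero
      intro x hx
      rw [msplit1]
      apply Finset.sum_eq_zero
      intro z hz
      rw [hGe, Finset.mem_filter] at hx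
      rw [hLt, Finset.mem_filter] at hz
      rw [stepProb_eq_zero p x z (by omega), ENNReal.ofReal_zero, zero_mul]
    have hperx : ∀ x ∈ Lt, μ {ω | Y (t+1) ω ∈ Lt ∧ Y t ω = x}
        ≤ ENNReal.ofReal (1 - δ) * μ {ω | Y t ω = x} := by
      intro x hx
      rw [hLt, Finset.mem_filter] at hx
      have hpart : μ {ω | Y (t+1) ω ∈ Lt ∧ Y t ω = x} + μ {ω | Y (t+1) ω ∈ Ge ∧ Y t ω = x}
          = μ {ω | Y t ω = x} := by
        rw [← measure_union]
        · congr 1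
          ext ω
          simp only [Set.mem_union, Set.mem_setOf_eq, hLt, hGe, Finset.mem_filter,
            Finset.mem_univ, true_and]
          constructor
          · rintro (⟨-, h⟩ | ⟨-, h⟩) <;> exact h
          · intro h
            by_cases hlt : onesCount n (Y (t+1) ω) < i
            · exact Or.inl ⟨hlt, h⟩
            · exact Or.inr ⟨by omega, h⟩
        · rw [Set.disjoint_left]
          rintro ω ⟨h1, -⟩ ⟨h2, -⟩
          rw [hLt, Finset.mem_filter] at h1
          rw [hGe, Finset.mem_filter] at h2
          omega
        · exact hmeas2' (t+1) t Ge x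
      have hge : ENNReal.ofReal δ * μ {ω | Y t ω = x} ≤ μ {ω | Y (t+1) ω ∈ Ge ∧ Y t ω = x} := by
        rw [msplit1, ← Finset.sum_mul]
        apply mul_le_mul_of_nonneg_right _ zero_le
        · calc ENNReal.ofReal δ ≤ ENNReal.ofReal (∑ z ∈ Ge, stepProb n p f x z) :=
                ENNReal.ofReal_le_ofReal (hdelta x hx.2)
            _ = ∑ z ∈ Ge, ENNReal.ofReal (stepProb n p f x z) :=
                ENNReal.ofReal_sum_of_nonneg (fun z _ => stepProb_nonneg p hp0 hp1 f x z)
      have hsub : μ {ω | Y (t+1) ω ∈ Lt ∧ Y t ω = x}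
          ≤ μ {ω | Y t ω = x} - ENNReal.ofReal δ * μ {ω | Y t ω = x} := by
        apply ENNReal.le_sub_of_add_le_right (by exact ENNReal.mul_ne_top ENNReal.ofReal_ne_top (measure_ne_top μ _))
        calc μ {ω | Y (t+1) ω ∈ Lt ∧ Y t ω = x} + ENNReal.ofReal δ * μ {ω | Y t ω = x}
            ≤ μ {ω | Y (t+1) ω ∈ Lt ∧ Y t ω = x} + μ {ω | Y (t+1) ω ∈ Ge ∧ Y t ω = x} :=
              add_le_add le_rfl hge
          _ = μ {ω | Y t ω = x} := hpart
      refine hsub.trans (le_of_eq ?_)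
      rw [ENNReal.ofReal_sub 1 (le_of_lt hδ0), ENNReal.ofReal_one]
      rw [ENNReal.sub_mul (fun _ _ => measure_ne_top μ _), one_mul]
    calc μ {ω | Y (t+1) ω ∈ Lt}
        ≤ μ ({ω | Y (t+1) ω ∈ Lt ∧ Y t ω ∈ Lt} ∪ {ω | Y (t+1) ω ∈ Lt ∧ Y t ω ∈ Ge}) :=
          measure_mono hcover
      _ ≤ μ {ω | Y (t+1) ω ∈ Lt ∧ Y t ω ∈ Lt} + μ {ω | Y (t+1) ω ∈ Lt ∧ Y t ω ∈ Ge} :=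
          measure_union_le _ _
      _ = μ {ω | Y (t+1) ω ∈ Lt ∧ Y t ω ∈ Lt} := by rw [hzero, add_zero]
      _ = ∑ x ∈ Lt, μ {ω | Y (t+1) ω ∈ Lt ∧ Y t ω = x} := msplit2 t Lt Lt
      _ ≤ ∑ x ∈ Lt, ENNReal.ofReal (1 - δ) * μ {ω | Y t ω = x} :=
          Finset.sum_le_sum hperx
      _ = ENNReal.ofReal (1 - δ) * ∑ x ∈ Lt, μ {ω | Y t ω = x} := by
          rw [Finset.mul_sum]
      _ = ENNReal.ofReal (1 - δ) * μ {ω | Y t ω ∈ Lt} := by rw [mYin]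
  -- geometric decay
  have hbt : ∀ t : ℕ, μ {ω | Y t ω ∈ Lt} ≤ ENNReal.ofReal ((1 - δ) ^ t) := by
    intro t
    induction t with
    | zero =>
      rw [pow_zero, ENNReal.ofReal_one]
      exact prob_le_one
    | succ t ih =>
      calc μ {ω | Y (t+1) ω ∈ Lt} ≤ ENNReal.ofReal (1 - δ) * μ {ω | Y t ω ∈ Lt} := hb t
        _ ≤ ENNReal.ofReal (1 - δ) * ENNReal.ofReal ((1 - δ) ^ t) :=
            mul_le_mul_right ih _
        _ = ENNReal.ofReal ((1 - δ) ^ (t+1)) := by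
            rw [← ENNReal.ofReal_mul (by linarith), pow_succ]
            ring_nf
  have hAinf : μ (⋂ t : ℕ, {ω | Y t ω ∈ Lt}) = 0 := by
    have hle : ∀ t : ℕ, μ (⋂ s : ℕ, {ω | Y s ω ∈ Lt}) ≤ ENNReal.ofReal ((1 - δ) ^ t) := by
      intro t
      exact (measure_mono (Set.iInter_subset _ t)).trans (hbt t)
    have htend : Filter.Tendsto (fun t : ℕ => ENNReal.ofReal ((1 - δ) ^ t))
        Filter.atTop (nhds 0) := by
      have h1 : Filter.Tendsto (fun t : ℕ => (1 - δ) ^ t) Filter.atTop (nhds 0) :=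
        tendsto_pow_atTop_nhds_zero_of_lt_one (by linarith) (by linarith)
      have h2 := (ENNReal.continuous_ofReal.tendsto 0).comp h1
      simpa [Function.comp_def] using h2
    exact le_antisymm (ge_of_tendsto' htend hle) zero_le
  -- jump bound
  have hkeystep : ∀ x : Fin n → Bool, onesCount n x < i →
      ∑ z ∈ Gt, stepProb n p f x z ≤ c * ∑ z ∈ Eqi, stepProb n p f x z := by
    intro x hx
    have h1 : ∑ z ∈ Gt, stepProb n p f x z = ∑ z ∈ Gt, mutProb n p x z := by
      apply Finset.sum_congr rfl
      intro z hz
      rw [hGt, Finset.mem_filter] at hz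
      rw [hf]; exact stepProb_eq_mut p x z (by omega)
    have h2 : ∑ z ∈ Eqi, stepProb n p f x z = ∑ z ∈ Eqi, mutProb n p x z := by
      apply Finset.sum_congr rfl
      intro z hz
      rw [hEqi, Finset.mem_filter] at hz
      rw [hf]; exact stepProb_eq_mut p x z (by omega)
    rw [h1, h2, hGt, hEqi, hc, hp]
    exact key n i hn hi x hx
  have hJ : ∀ t : ℕ, μ {ω | Y (t+1) ω ∈ Gt ∧ Y t ω ∈ Lt}
      ≤ ENNReal.ofReal c * μ {ω | Y (t+1) ω ∈ Eqi ∧ Y t ω ∈ Lt} := by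
    intro t
    rw [msplit2, msplit2, Finset.mul_sum]
    apply Finset.sum_le_sum
    intro x hx
    rw [hLt, Finset.mem_filter] at hx
    rw [msplit1, msplit1, ← Finset.sum_mul, ← Finset.sum_mul, ← mul_assoc]
    apply mul_le_mul_of_nonneg_right _ zero_le
    calc ∑ z ∈ Gt, ENNReal.ofReal (stepProb n p f x z)
        = ENNReal.ofReal (∑ z ∈ Gt, stepProb n p f x z) :=
          (ENNReal.ofReal_sum_of_nonneg (fun z _ => stepProb_nonneg p hp0 hp1 f x z)).symm
      _ ≤ ENNReal.ofReal (c * ∑ z ∈ Eqi, stepProb n p f x z) :=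
          ENNReal.ofReal_le_ofReal (hkeystep x hx.2)
      _ = ENNReal.ofReal c * ENNReal.ofReal (∑ z ∈ Eqi, stepProb n p f x z) :=
          ENNReal.ofReal_mul hc0
      _ = ENNReal.ofReal c * ∑ z ∈ Eqi, ENNReal.ofReal (stepProb n p f x z) := by
          rw [ENNReal.ofReal_sum_of_nonneg (fun z _ => stepProb_nonneg p hp0 hp1 f x z)]
  -- the H events are a.e. pairwise disjoint
  have hHsum : ∑' t : ℕ, μ {ω | Y (t+1) ω ∈ Eqi ∧ Y t ω ∈ Lt} ≤ 1 := by
    have heq : ∀ t : ℕ, μ {ω | Y (t+1) ω ∈ Eqi ∧ Y t ω ∈ Lt}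
        = μ ({ω | Y (t+1) ω ∈ Eqi ∧ Y t ω ∈ Lt} ∩ G) := by
      intro t
      exact (measure_inter_conull hGc).symm
    have hdisj : Pairwise (Function.onFun Disjoint
        (fun t => {ω | Y (t+1) ω ∈ Eqi ∧ Y t ω ∈ Lt} ∩ G)) := by
      have haux : ∀ t s : ℕ, t < s →
          Disjoint ({ω | Y (t+1) ω ∈ Eqi ∧ Y t ω ∈ Lt} ∩ G)
            ({ω | Y (s+1) ω ∈ Eqi ∧ Y s ω ∈ Lt} ∩ G) := by
        intro t s hts
        rw [Set.disjoint_left]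
        rintro ω ⟨⟨h1, -⟩, hg⟩ ⟨⟨-, h2⟩, -⟩
        rw [hEqi, Finset.mem_filter] at h1
        rw [hLt, Finset.mem_filter] at h2
        have := hGmono ω hg (t+1) s (by omega)
        omega
      intro t s hne
      rcases lt_or_gt_of_ne hne with h | h
      · exact haux t s h
      · exact (haux s t h).symm
    calc ∑' t : ℕ, μ {ω | Y (t+1) ω ∈ Eqi ∧ Y t ω ∈ Lt}
        = ∑' t : ℕ, μ ({ω | Y (t+1) ω ∈ Eqi ∧ Y t ω ∈ Lt} ∩ G) := by
          exact tsum_congr heq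
      _ = μ (⋃ t : ℕ, ({ω | Y (t+1) ω ∈ Eqi ∧ Y t ω ∈ Lt} ∩ G)) := by
          rw [measure_iUnion hdisj (fun t => (hmeas2 (t+1) t Eqi Lt).inter hGmeas)]
      _ ≤ 1 := prob_le_one
  -- final decomposition
  have hsubset : {ω | ∀ t : ℕ, onesCount n (Y t ω) ≠ i}
      ⊆ ((⋂ t : ℕ, {ω | Y t ω ∈ Lt}) ∪ (⋃ t : ℕ, {ω | Y (t+1) ω ∈ Gt ∧ Y t ω ∈ Lt}))
        ∪ {ω | onesCount n (Y 0 ω) < i}ᶜ := by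
    intro ω hω
    simp only [Set.mem_setOf_eq] at hω
    by_cases h0 : onesCount n (Y 0 ω) < i
    swap
    · exact Or.inr h0
    by_cases hall : ∀ t : ℕ, onesCount n (Y t ω) < i
    · refine Or.inl (Or.inl ?_)
      simp only [Set.mem_iInter, Set.mem_setOf_eq, hLt, Finset.mem_filter]
      exact fun t => ⟨Finset.mem_univ _, hall t⟩
    · refine Or.inl (Or.inr ?_)
      push_neg at hall
      have hex : ∃ t : ℕ, i ≤ onesCount n (Y t ω) := by
        obtain ⟨t, ht⟩ := hall
        exact ⟨t, ht⟩
      set t0 := Nat.find hex with ht0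
      have hspec : i ≤ onesCount n (Y t0 ω) := Nat.find_spec hex
      have ht0pos : t0 ≠ 0 := by
        intro hcon
        rw [hcon] at hspec
        omega
      obtain ⟨t1, ht1⟩ : ∃ t1, t0 = t1 + 1 := ⟨t0 - 1, by omega⟩
      have hbefore : onesCount n (Y t1 ω) < i := by
        have := Nat.find_min hex (show t1 < t0 by omega)
        omega
      have hafter : i < onesCount n (Y (t1+1) ω) := by
        rw [ht1] at hspec
        have := hω (t1+1)
        omega
      simp only [Set.mem_iUnion, Set.mem_setOf_eq]
      refine ⟨t1, ?_, ?_⟩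
      · rw [hGt, Finset.mem_filter]; exact ⟨Finset.mem_univ _, hafter⟩
      · rw [hLt, Finset.mem_filter]; exact ⟨Finset.mem_univ _, hbefore⟩
  have hcompl0 : μ ({ω | onesCount n (Y 0 ω) < i}ᶜ) = 0 := by
    have hms : MeasurableSet {ω | onesCount n (Y 0 ω) < i} := by
      exact hmeasS 0 {z | onesCount n z < i}
    rw [measure_compl hms (measure_ne_top μ _), hinit, measure_univ, tsub_self]
  calc μ {ω | ∀ t : ℕ, onesCount n (Y t ω) ≠ i}
      ≤ μ (((⋂ t : ℕ, {ω | Y t ω ∈ Lt}) ∪ (⋃ t : ℕ, {ω | Y (t+1) ω ∈ Gt ∧ Y t ω ∈ Lt}))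
          ∪ {ω | onesCount n (Y 0 ω) < i}ᶜ) := measure_mono hsubset
    _ ≤ μ ((⋂ t : ℕ, {ω | Y t ω ∈ Lt}) ∪ (⋃ t : ℕ, {ω | Y (t+1) ω ∈ Gt ∧ Y t ω ∈ Lt}))
          + μ ({ω | onesCount n (Y 0 ω) < i}ᶜ) := measure_union_le _ _
    _ ≤ (μ (⋂ t : ℕ, {ω | Y t ω ∈ Lt}) + μ (⋃ t : ℕ, {ω | Y (t+1) ω ∈ Gt ∧ Y t ω ∈ Lt})) + 0 := by
        rw [hcompl0]
        exact add_le_add (measure_union_le _ _) le_rfl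
    _ = μ (⋃ t : ℕ, {ω | Y (t+1) ω ∈ Gt ∧ Y t ω ∈ Lt}) := by
        rw [hAinf, zero_add, add_zero]
    _ ≤ ∑' t : ℕ, μ {ω | Y (t+1) ω ∈ Gt ∧ Y t ω ∈ Lt} := measure_iUnion_le _
    _ ≤ ∑' t : ℕ, ENNReal.ofReal c * μ {ω | Y (t+1) ω ∈ Eqi ∧ Y t ω ∈ Lt} :=
        ENNReal.tsum_le_tsum hJ
    _ = ENNReal.ofReal c * ∑' t : ℕ, μ {ω | Y (t+1) ω ∈ Eqi ∧ Y t ω ∈ Lt} :=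
        ENNReal.tsum_mul_left
    _ ≤ ENNReal.ofReal c * 1 := mul_le_mul_right hHsum _
    _ = ENNReal.ofReal c := mul_one _
end
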